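/- arXiv:2403.04474 — 7 statements merged into one kernel-verified Lean document; each statement's English description precedes it below -/
import Mathlib

section
/- Let t ≥ 1 be an integer and let a, b, x_1, …, x_t, y_1, …, y_t be 2t+2 distinct vertices. Let F be the 3-graph with edge set {{x_i,y_i,a} : i ∈ [t]} ∪ {{x_i,y_i,b} : i ∈ [t]}. Then F is (7,5)-free, (9,7)-free and (ℓ+1,ℓ)-free for every ℓ ∈ {2,3,4,5,6}; moreover P_{≤3}(F) = P_1(F) ∪ {{a,b}} and |P_{≤3}(F)| = 5t+1. -/
open Finset Filter

/-- `G` is an `r`-graph: a finite set of edges, each edge a finite set of exactly `r` vertices. -/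
def IsRGraph {V : Type*} (r : ℕ) (G : Finset (Finset V)) : Prop :=
  ∀ e ∈ G, e.card = r

/-- `G` contains an `(s,k)`-configuration: `k` distinct edges spanning at most `s` vertices. -/
def HasConfig {V : Type*} [DecidableEq V] (s k : ℕ) (G : Finset (Finset V)) : Prop :=
  ∃ S ⊆ G, S.card = k ∧ (S.biUnion id).card ≤ s

/-- `G` is `(s,k)`-free. -/
def ConfigFree {V : Type*} [DecidableEq V] (s k : ℕ) (G : Finset (Finset V)) : Prop :=
  ¬ HasConfig s k G

/-- An `r`-graph `F` `i`-claims the pair `{x,y}` if there are `i` distinct edges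
`X_1, …, X_i` of `F` with `|{x,y} ∪ X_1 ∪ … ∪ X_i| ≤ ri - 2i + 2`.
(For `i = 0` this holds trivially, matching the convention that every `r`-graph
`0`-claims every pair.) -/
def Claims {V : Type*} [DecidableEq V] (r i : ℕ) (F : Finset (Finset V)) (x y : V) : Prop :=
  ∃ S ⊆ F, S.card = i ∧ (insert x (insert y (S.biUnion id))).card ≤ r * i - 2 * i + 2

/-- `CSet r F u v` is the set `C_F(uv)` of all `i ≥ 0` such that `F` `i`-claims `{u,v}`. -/
def CSet {V : Type*} [DecidableEq V] (r : ℕ) (F : Finset (Finset V)) (u v : V) : Set ℕ :=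
  {i | Claims r i F u v}

/-- `P_{≤t}(F)`: the set of pairs `{x,y}` of vertices of `F` that are `i`-claimed by `F`
for some `1 ≤ i ≤ t`. -/
def PLE {V : Type*} [DecidableEq V] (r t : ℕ) (F : Finset (Finset V)) : Set (Finset V) :=
  {p | ∃ x y : V, x ≠ y ∧ p = {x, y} ∧ x ∈ F.biUnion id ∧ y ∈ F.biUnion id ∧
    ∃ i, 1 ≤ i ∧ i ≤ t ∧ Claims r i F x y}

/-- `P_1(F)`: the set of pairs of distinct vertices contained together in some edge of `F`. -/
def P1 {V : Type*} [DecidableEq V] (F : Finset (Finset V)) : Set (Finset V) :=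
  {p | ∃ x y : V, x ≠ y ∧ p = {x, y} ∧ ∃ e ∈ F, x ∈ e ∧ y ∈ e}

/- ######### auxiliary material ######### -/

lemma finset_pair_eq_pair_iff {V : Type*} [DecidableEq V] {u v w z : V} :
    ({u, v} : Finset V) = {w, z} ↔ (u = w ∧ v = z) ∨ (u = z ∧ v = w) := by
  rw [← Finset.coe_inj]
  push_cast
  exact Set.pair_eq_pair_iff

lemma claims_one {V : Type*} [DecidableEq V] {F : Finset (Finset V)}
    (h3 : ∀ e ∈ F, e.card = 3) {u v : V} :
    Claims 3 1 F u v ↔ ∃ e ∈ F, u ∈ e ∧ v ∈ e := by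
  constructor
  · rintro ⟨S, hSF, hS1, hle⟩
    obtain ⟨e, rfl⟩ := Finset.card_eq_one.mp hS1
    have heF : e ∈ F := hSF (Finset.mem_singleton_self e)
    have hspan : ({e} : Finset (Finset V)).biUnion id = e := by simp
    rw [hspan] at hle
    have hsub : e ⊆ insert u (insert v e) :=
      (Finset.subset_insert _ _).trans (Finset.subset_insert _ _)
    have heq : e = insert u (insert v e) :=
      Finset.eq_of_subset_of_card_le hsub (by have := h3 e heF; omega)
    refine ⟨e, heF, ?_, ?_⟩
    · rw [heq]; exact Finset.mem_insert_self _ _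
    · rw [heq]; exact Finset.mem_insert_of_mem (Finset.mem_insert_self _ _)
  · rintro ⟨e, heF, hue, hve⟩
    refine ⟨{e}, Finset.singleton_subset_iff.mpr heF, rfl, ?_⟩
    have : insert u (insert v (({e} : Finset (Finset V)).biUnion id)) = e := by
      simp only [Finset.singleton_biUnion, id]
      rw [Finset.insert_eq_self.mpr hve, Finset.insert_eq_self.mpr hue]
    rw [this, h3 e heF]

section Diamonds
variable {V : Type*} [DecidableEq V] {t : ℕ} {a b : V} {x y : Fin t → V}

structure DiaHyp (a b : V) (x y : Fin t → V) : Prop where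
  hab : a ≠ b
  hxinj : Function.Injective x
  hyinj : Function.Injective y
  hxy : ∀ i j, x i ≠ y j
  hxa : ∀ i, x i ≠ a
  hxb : ∀ i, x i ≠ b
  hya : ∀ i, y i ≠ a
  hyb : ∀ i, y i ≠ b

variable (H : DiaHyp a b x y)

def edg (a b : V) (x y : Fin t → V) : Fin t × Bool → Finset V :=
  fun p => if p.2 then {x p.1, y p.1, b} else {x p.1, y p.1, a}

lemma mem_edg {v : V} {p : Fin t × Bool} :
    v ∈ edg a b x y p ↔ v = x p.1 ∨ v = y p.1 ∨ v = (if p.2 then b else a) := by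
  rcases p with ⟨i, _ | _⟩ <;> simp [edg]

/-- the five pairs associated to index `i` -/
def prs (a b : V) (x y : Fin t → V) (i : Fin t) : Finset (Finset V) :=
  {{x i, y i}, {x i, a}, {y i, a}, {x i, b}, {y i, b}}

include H

lemma card_edg (p : Fin t × Bool) : (edg a b x y p).card = 3 := by
  rcases p with ⟨i, _ | _⟩ <;>
    exact Finset.card_eq_three.mpr ⟨_, _, _, H.hxy i i, by first | exact H.hxa i | exact H.hxb i,
      by first | exact H.hya i | exact H.hyb i, rfl⟩

lemma edg_inj : Function.Injective (edg a b x y) := by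
  rintro ⟨i, bi⟩ ⟨j, bj⟩ h
  have hx : x i ∈ edg a b x y (j, bj) := by
    rw [← h, mem_edg]; left; rfl
  rw [mem_edg] at hx
  have hij : i = j := by
    rcases hx with h' | h' | h'
    · exact H.hxinj h'
    · exact absurd h' (H.hxy i j)
    · cases bj <;> simp at h' <;> [exact absurd h' (H.hxa i); exact absurd h' (H.hxb i)]
  subst hij
  have key : ∀ c : Bool, edg a b x y (i, false) ≠ edg a b x y (i, true) := by
    intro _ hEq
    have ha1 : a ∈ edg a b x y (i, false) := by rw [mem_edg]; simp
    rw [hEq, mem_edg] at ha1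
    rcases ha1 with h' | h' | h'
    · exact (H.hxa i) h'.symm
    · exact (H.hya i) h'.symm
    · simp at h'; exact H.hab h'
  cases bi <;> cases bj
  · rfl
  · exact absurd h (key true)
  · exact absurd h.symm (key true)
  · rfl

lemma pair_disj : ∀ i j : Fin t, i ≠ j →
    Disjoint ({x i, y i} : Finset V) ({x j, y j} : Finset V) := by
  intro i j hij
  rw [Finset.disjoint_left]
  intro v hv hv'
  simp only [Finset.mem_insert, Finset.mem_singleton] at hv hv'
  rcases hv with rfl | rfl <;> rcases hv' with h | h
  · exact hij (H.hxinj h)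
  · exact (H.hxy i j) h
  · exact (H.hxy j i) h.symm
  · exact hij (H.hyinj h)

lemma a_not_pair {I : Finset (Fin t)} : a ∉ I.biUnion (fun i => ({x i, y i} : Finset V)) := by
  simp only [Finset.mem_biUnion, Finset.mem_insert, Finset.mem_singleton, not_exists]
  rintro i ⟨_, h | h⟩
  · exact (H.hxa i) h.symm
  · exact (H.hya i) h.symm

lemma b_not_pair {I : Finset (Fin t)} : b ∉ I.biUnion (fun i => ({x i, y i} : Finset V)) := by
  simp only [Finset.mem_biUnion, Finset.mem_insert, Finset.mem_singleton, not_exists]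
  rintro i ⟨_, h | h⟩
  · exact (H.hxb i) h.symm
  · exact (H.hyb i) h.symm

lemma span_ge {S : Finset (Finset V)} (hS : S ⊆ Finset.univ.image (edg a b x y))
    (hne : S.Nonempty) :
    ∃ k : ℕ, S.card ≤ 2 * k ∧ 2 * k + 1 ≤ (S.biUnion id).card ∧
      (k < S.card → 2 * k + 2 ≤ (S.biUnion id).card) := by
  classical
  set T : Finset (Fin t × Bool) := Finset.univ.filter (fun p => edg a b x y p ∈ S) with hT
  have hTS : ∀ p ∈ T, edg a b x y p ∈ S := by
    intro p hp; exact (Finset.mem_filter.mp hp).2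
  have hST : S = T.image (edg a b x y) := by
    ext e
    simp only [Finset.mem_image, hT, Finset.mem_filter, Finset.mem_univ, true_and]
    constructor
    · intro he
      obtain ⟨p, _, hp⟩ := Finset.mem_image.mp (hS he)
      exact ⟨p, by rw [hp]; exact he, hp⟩
    · rintro ⟨p, hp, rfl⟩; exact hp
  have hcard : S.card = T.card := by
    rw [hST, Finset.card_image_of_injective _ (edg_inj H)]
  set I : Finset (Fin t) := T.image Prod.fst with hI
  set P : Finset V := I.biUnion (fun i => ({x i, y i} : Finset V)) with hP
  have hPcard : P.card = 2 * I.card := by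
    rw [hP, Finset.card_biUnion (fun i _ j _ hij => pair_disj H i j hij)]
    rw [Finset.sum_congr rfl (fun i _ => ?_), Finset.sum_const, smul_eq_mul, mul_comm]
    exact Finset.card_insert_of_notMem (by simp [H.hxy i i]) |>.trans (by simp)
  have hPsub : P ⊆ S.biUnion id := by
    intro v hv
    rw [hP, Finset.mem_biUnion] at hv
    obtain ⟨i, hi, hvi⟩ := hv
    rw [hI, Finset.mem_image] at hi
    obtain ⟨p, hp, rfl⟩ := hi
    refine Finset.mem_biUnion.mpr ⟨edg a b x y p, hTS p hp, ?_⟩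
    simp only [Finset.mem_insert, Finset.mem_singleton] at hvi
    rw [id, mem_edg]
    tauto
  refine ⟨I.card, ?_, ?_, ?_⟩
  · rw [hcard]
    calc T.card ≤ (I ×ˢ (Finset.univ : Finset Bool)).card := by
          apply Finset.card_le_card
          intro p hp
          rw [Finset.mem_product]
          exact ⟨Finset.mem_image_of_mem _ hp, Finset.mem_univ _⟩
      _ = 2 * I.card := by rw [Finset.card_product]; simp [mul_comm]
  · obtain ⟨e, he⟩ := hne
    obtain ⟨p, _, rfl⟩ := Finset.mem_image.mp (hS he)
    set c : V := if p.2 then b else a with hc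
    have hcmem : c ∈ S.biUnion id := by
      refine Finset.mem_biUnion.mpr ⟨edg a b x y p, he, ?_⟩
      rw [id, mem_edg]; tauto
    have hcP : c ∉ P := by
      rw [hc]; rcases p with ⟨i, _ | _⟩
      · exact a_not_pair H
      · exact b_not_pair H
    calc 2 * I.card + 1 = (insert c P).card := by
          rw [Finset.card_insert_of_notMem hcP, hPcard]
      _ ≤ (S.biUnion id).card := Finset.card_le_card (Finset.insert_subset hcmem hPsub)
  · intro hlt
    rw [hcard] at hlt
    have : ¬ Set.InjOn Prod.fst (T : Set (Fin t × Bool)) := by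
      intro hinj
      rw [hI, Finset.card_image_of_injOn hinj] at hlt
      exact lt_irrefl _ hlt
    rw [Set.InjOn] at this
    push_neg at this
    obtain ⟨p, hp, q, hq, hfst, hne'⟩ := this
    rw [Finset.mem_coe] at hp hq
    have habS : a ∈ S.biUnion id ∧ b ∈ S.biUnion id := by
      have hsnd : p.2 ≠ q.2 := by
        intro h
        exact hne' (Prod.ext hfst h)
      have hmem : ∀ r ∈ T, (if r.2 then b else a) ∈ S.biUnion id := by
        intro r hr
        refine Finset.mem_biUnion.mpr ⟨edg a b x y r, hTS r hr, ?_⟩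
        rw [id, mem_edg]; tauto
      have h1 := hmem p hp
      have h2 := hmem q hq
      cases hp2 : p.2 <;> cases hq2 : q.2 <;> rw [hp2] at h1 hsnd <;> rw [hq2] at h2 hsnd
      · exact absurd rfl hsnd
      · exact ⟨by simpa using h1, by simpa using h2⟩
      · exact ⟨by simpa using h2, by simpa using h1⟩
      · exact absurd rfl hsnd
    calc 2 * I.card + 2 = (insert a (insert b P)).card := by
          rw [Finset.card_insert_of_notMem, Finset.card_insert_of_notMem (b_not_pair H), hPcard]
          simp only [Finset.mem_insert]
          push_neg
          exact ⟨H.hab, a_not_pair H⟩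
      _ ≤ (S.biUnion id).card := Finset.card_le_card
          (Finset.insert_subset habS.1 (Finset.insert_subset habS.2 hPsub))

lemma claims_two {u v : V}
    (hc : ∃ S ⊆ Finset.univ.image (edg a b x y), S.card = 2 ∧
      (insert u (insert v (S.biUnion id))).card ≤ 4) :
    ∃ i : Fin t, u ∈ ({x i, y i, a, b} : Finset V) ∧ v ∈ ({x i, y i, a, b} : Finset V) := by
  obtain ⟨S, hSF, hS2, hle⟩ := hc
  obtain ⟨e, f, hef, rfl⟩ := Finset.card_eq_two.mp hS2
  have he : e ∈ Finset.univ.image (edg a b x y) := hSF (Finset.mem_insert_self e {f})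
  have hf : f ∈ Finset.univ.image (edg a b x y) :=
    hSF (Finset.mem_insert_of_mem (Finset.mem_singleton_self f))
  obtain ⟨p, -, hp⟩ := Finset.mem_image.mp he
  obtain ⟨q, -, hq⟩ := Finset.mem_image.mp hf
  subst hp; subst hq
  have hspan : ({edg a b x y p, edg a b x y q} : Finset (Finset V)).biUnion id
      = edg a b x y p ∪ edg a b x y q := by simp
  rw [hspan] at hle
  by_cases hij : p.1 = q.1
  · refine ⟨p.1, ?_, ?_⟩ <;>
    · have hsnd : p.2 ≠ q.2 := fun h => hef (congrArg (edg a b x y) (Prod.ext hij h))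
      have hU : edg a b x y p ∪ edg a b x y q = ({x p.1, y p.1, a, b} : Finset V) := by
        ext w
        simp only [Finset.mem_union, mem_edg, ← hij, Finset.mem_insert, Finset.mem_singleton]
        cases hp2 : p.2 <;> cases hq2 : q.2 <;> simp_all <;> tauto
      have hcard4 : ({x p.1, y p.1, a, b} : Finset V).card = 4 := by
        rw [Finset.card_insert_of_notMem, Finset.card_insert_of_notMem,
          Finset.card_insert_of_notMem, Finset.card_singleton]
        · simp [H.hab]
        · simp [H.hya p.1, H.hyb p.1]
        · simp [H.hxy p.1 p.1, H.hxa p.1, H.hxb p.1]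
      rw [hU] at hle
      have heq := Finset.eq_of_subset_of_card_le
        ((Finset.subset_insert _ _).trans (Finset.subset_insert _ _) :
          ({x p.1, y p.1, a, b} : Finset V) ⊆ insert u (insert v _)) (by omega)
      first
      | (rw [heq]; exact Finset.mem_insert_self _ _)
      | (rw [heq]; exact Finset.mem_insert_of_mem (Finset.mem_insert_self _ _))
  · exfalso
    set c : V := if p.2 then b else a with hc'
    have hsub : ({x p.1, y p.1, x q.1, y q.1, c} : Finset V) ⊆
        insert u (insert v (edg a b x y p ∪ edg a b x y q)) := by
      intro w hw
      apply Finset.mem_insert_of_mem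
      apply Finset.mem_insert_of_mem
      simp only [Finset.mem_insert, Finset.mem_singleton] at hw
      rw [Finset.mem_union, mem_edg, mem_edg]
      tauto
    have key : ∀ c : V, (∀ m, x m ≠ c) → (∀ m, y m ≠ c) →
        ({x p.1, y p.1, x q.1, y q.1, c} : Finset V).card = 5 := by
      intro c hxc hyc
      have hqp : q.1 ≠ p.1 := fun h => hij h.symm
      have h1 : x p.1 ∉ ({y p.1, x q.1, y q.1, c} : Finset V) := by
        simp [H.hxy, H.hxinj.eq_iff, hij, hxc]
      have h2 : y p.1 ∉ ({x q.1, y q.1, c} : Finset V) := by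
        simp [(H.hxy q.1 p.1).symm, H.hyinj.eq_iff, hij, hyc]
      have h3 : x q.1 ∉ ({y q.1, c} : Finset V) := by simp [H.hxy, hxc]
      have h4 : y q.1 ∉ ({c} : Finset V) := by simp [hyc]
      rw [Finset.card_insert_of_notMem h1, Finset.card_insert_of_notMem h2,
        Finset.card_insert_of_notMem h3, Finset.card_insert_of_notMem h4,
        Finset.card_singleton]
    have hcard5 : ({x p.1, y p.1, x q.1, y q.1, c} : Finset V).card = 5 := by
      rw [hc']
      cases hp2 : p.2
      · exact key a H.hxa H.hya
      · exact key b H.hxb H.hyb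
    have := Finset.card_le_card hsub
    omega

lemma P1_diamonds :
    P1 (Finset.univ.image (edg a b x y)) =
      ↑(Finset.univ.biUnion fun i => prs a b x y i) := by
  have hyx : ∀ i j, y i ≠ x j := fun i j h => (H.hxy j i) h.symm
  ext p
  simp only [P1, Set.mem_setOf_eq, Finset.coe_biUnion, Finset.coe_univ, Set.mem_iUnion,
    Set.mem_univ, true_and, Finset.mem_coe, prs, Finset.mem_insert, Finset.mem_singleton]
  constructor
  · rintro ⟨u, v, hne, rfl, e, heF, hue, hve⟩
    obtain ⟨q, -, rfl⟩ := Finset.mem_image.mp heF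
    rw [mem_edg] at hue hve
    refine ⟨q.1, ?_⟩
    rcases q with ⟨i, _ | _⟩ <;> simp only at hue hve <;>
      rcases hue with rfl | rfl | rfl <;> rcases hve with rfl | rfl | rfl <;>
      first
        | exact absurd rfl hne
        | simp [finset_pair_eq_pair_iff]
  · rintro ⟨i, -, rfl | rfl | rfl | rfl | rfl⟩
    · exact ⟨x i, y i, H.hxy i i, rfl, edg a b x y (i, false),
        Finset.mem_image_of_mem _ (Finset.mem_univ _), by simp [edg], by simp [edg]⟩
    · exact ⟨x i, a, H.hxa i, rfl, edg a b x y (i, false),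
        Finset.mem_image_of_mem _ (Finset.mem_univ _), by simp [edg], by simp [edg]⟩
    · exact ⟨y i, a, H.hya i, rfl, edg a b x y (i, false),
        Finset.mem_image_of_mem _ (Finset.mem_univ _), by simp [edg], by simp [edg]⟩
    · exact ⟨x i, b, H.hxb i, rfl, edg a b x y (i, true),
        Finset.mem_image_of_mem _ (Finset.mem_univ _), by simp [edg], by simp [edg]⟩
    · exact ⟨y i, b, H.hyb i, rfl, edg a b x y (i, true),
        Finset.mem_image_of_mem _ (Finset.mem_univ _), by simp [edg], by simp [edg]⟩

lemma prs_card (i : Fin t) : (prs a b x y i).card = 5 := by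
  have l : ∀ u w : V, u ≠ w → w ≠ u := fun _ _ h => h.symm
  rw [prs, Finset.card_insert_of_notMem, Finset.card_insert_of_notMem,
    Finset.card_insert_of_notMem, Finset.card_insert_of_notMem, Finset.card_singleton] <;>
    simp [finset_pair_eq_pair_iff, H.hxy i i, H.hxa i, H.hxb i, H.hya i, H.hyb i,
      H.hab, H.hab.symm, l _ _ (H.hxy i i), l _ _ (H.hxa i), l _ _ (H.hxb i),
      l _ _ (H.hya i), l _ _ (H.hyb i)]

lemma prs_disj {i j : Fin t} (hij : i ≠ j) : Disjoint (prs a b x y i) (prs a b x y j) := by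
  have hyx : ∀ m n, y m ≠ x n := fun m n h => (H.hxy n m) h.symm
  rw [Finset.disjoint_left]
  intro p hp hq
  simp only [prs, Finset.mem_insert, Finset.mem_singleton] at hp hq
  rcases hp with rfl | rfl | rfl | rfl | rfl <;>
    rcases hq with h | h | h | h | h <;>
    rw [finset_pair_eq_pair_iff] at h <;>
    rcases h with ⟨h1, h2⟩ | ⟨h1, h2⟩ <;>
    first
      | exact hij (H.hxinj h1)
      | exact hij (H.hyinj h1)
      | exact H.hxy _ _ h1
      | exact H.hxy _ _ h1.symm
      | exact H.hxa _ h1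
      | exact H.hxb _ h1
      | exact H.hya _ h1
      | exact H.hyb _ h1
      | exact H.hxa _ h1.symm
      | exact H.hxb _ h1.symm
      | exact H.hya _ h1.symm
      | exact H.hyb _ h1.symm
      | exact H.hab h1
      | exact H.hab h1.symm
      | exact hij (H.hxinj h2)
      | exact hij (H.hyinj h2)
      | exact H.hxy _ _ h2
      | exact H.hxy _ _ h2.symm
      | exact H.hxa _ h2
      | exact H.hxb _ h2
      | exact H.hya _ h2
      | exact H.hyb _ h2
      | exact H.hxa _ h2.symm
      | exact H.hxb _ h2.symm
      | exact H.hya _ h2.symm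
      | exact H.hyb _ h2.symm
      | exact H.hab h2
      | exact H.hab h2.symm

lemma ab_not_prs : ({a, b} : Finset V) ∉ Finset.univ.biUnion (fun i => prs a b x y i) := by
  simp only [Finset.mem_biUnion, Finset.mem_univ, true_and, not_exists, prs,
    Finset.mem_insert, Finset.mem_singleton]
  intro i
  simp [finset_pair_eq_pair_iff, fun m => (H.hxa m).symm, fun m => (H.hxb m).symm,
    fun m => (H.hya m).symm, fun m => (H.hyb m).symm, H.hab]

end Diamonds

/-- The `3`-uniform lower-bound construction for `k ∈ {5,7}`: the union of `t` diamonds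
`{x_i y_i a, x_i y_i b}` sharing only the pair `{a,b}`. -/
theorem diamonds_construction {V : Type*} [DecidableEq V] (t : ℕ) (ht : 1 ≤ t)
    (a b : V) (x y : Fin t → V) (hab : a ≠ b)
    (hxyinj : Function.Injective (Sum.elim x y))
    (hxa : ∀ i, x i ≠ a) (hxb : ∀ i, x i ≠ b)
    (hya : ∀ i, y i ≠ a) (hyb : ∀ i, y i ≠ b)
    (F : Finset (Finset V))
    (hF : F = (Finset.univ.image fun i : Fin t => ({x i, y i, a} : Finset V)) ∪
              (Finset.univ.image fun i : Fin t => ({x i, y i, b} : Finset V))) :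
    ConfigFree 7 5 F ∧ ConfigFree 9 7 F ∧
    (∀ ℓ ∈ ({2, 3, 4, 5, 6} : Set ℕ), ConfigFree (ℓ + 1) ℓ F) ∧
    PLE 3 3 F = P1 F ∪ {({a, b} : Finset V)} ∧
    (PLE 3 3 F).ncard = 5 * t + 1 := by
  have hxinj : Function.Injective x := fun i j h =>
    Sum.inl_injective (hxyinj (h : Sum.elim x y (Sum.inl i) = Sum.elim x y (Sum.inl j)))
  have hyinj : Function.Injective y := fun i j h =>
    Sum.inr_injective (hxyinj (h : Sum.elim x y (Sum.inr i) = Sum.elim x y (Sum.inr j)))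
  have hxy : ∀ i j, x i ≠ y j := fun i j h =>
    Sum.inl_ne_inr (hxyinj (h : Sum.elim x y (Sum.inl i) = Sum.elim x y (Sum.inr j)))
  have H : DiaHyp a b x y := ⟨hab, hxinj, hyinj, hxy, hxa, hxb, hya, hyb⟩
  have hFg : F = Finset.univ.image (edg a b x y) := by
    rw [hF]; ext e
    simp only [Finset.mem_union, Finset.mem_image, Finset.mem_univ, true_and]
    constructor
    · rintro (⟨i, rfl⟩ | ⟨i, rfl⟩)
      exacts [⟨(i, false), by simp [edg]⟩, ⟨(i, true), by simp [edg]⟩]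
    · rintro ⟨⟨i, _ | _⟩, rfl⟩
      exacts [Or.inl ⟨i, by simp [edg]⟩, Or.inr ⟨i, by simp [edg]⟩]
  clear hF
  subst hFg
  have h3 : ∀ e ∈ Finset.univ.image (edg a b x y), e.card = 3 := by
    intro e he
    obtain ⟨p, -, rfl⟩ := Finset.mem_image.mp he
    exact card_edg H p
  have hcf : ∀ s k : ℕ, 0 < k →
      (∀ m, ¬(k ≤ 2 * m ∧ 2 * m + 1 ≤ s ∧ (m < k → 2 * m + 2 ≤ s))) →
      ConfigFree s k (Finset.univ.image (edg a b x y)) := by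
    rintro s k hk hm ⟨S, hSF, hcard, hspan⟩
    obtain ⟨m, h1, h2, h3'⟩ := span_ge H hSF (Finset.card_pos.mp (hcard ▸ hk))
    exact hm m ⟨hcard ▸ h1, le_trans h2 hspan,
      fun hlt => le_trans (h3' (by omega)) hspan⟩
  have hab_mem : ∀ i : Fin t,
      edg a b x y (i, false) ∈ Finset.univ.image (edg a b x y) ∧
      edg a b x y (i, true) ∈ Finset.univ.image (edg a b x y) :=
    fun i => ⟨Finset.mem_image_of_mem _ (Finset.mem_univ _),
      Finset.mem_image_of_mem _ (Finset.mem_univ _)⟩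
  have hnoc3 : ∀ u v : V, ¬ Claims 3 3 (Finset.univ.image (edg a b x y)) u v := by
    rintro u v ⟨S, hSF, hc, hle⟩
    have hle' : (insert u (insert v (S.biUnion id))).card ≤ 5 := by
      have : 3 * 3 - 2 * 3 + 2 = 5 := by norm_num
      omega
    have hsp : (S.biUnion id).card ≤ 5 :=
      le_trans (Finset.card_le_card
        ((Finset.subset_insert v _).trans (Finset.subset_insert u _))) hle'
    obtain ⟨m, h1, h2, h3'⟩ := span_ge H hSF (Finset.card_pos.mp (by omega))
    rcases lt_or_ge m 3 with h | h
    · have := h3' (by omega); omega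
    · omega
  have hPLE_eq : PLE 3 3 (Finset.univ.image (edg a b x y)) =
      P1 (Finset.univ.image (edg a b x y)) ∪ {({a, b} : Finset V)} := by
    ext p
    simp only [PLE, Set.mem_setOf_eq, Set.mem_union, Set.mem_singleton_iff]
    constructor
    · rintro ⟨u, v, hne, rfl, -, -, i, hi1, hi3, hcl⟩
      interval_cases i
      · left
        rw [claims_one h3] at hcl
        exact ⟨u, v, hne, rfl, hcl⟩
      · have hcl' : ∃ S ⊆ Finset.univ.image (edg a b x y), S.card = 2 ∧
            (insert u (insert v (S.biUnion id))).card ≤ 4 := by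
          obtain ⟨S, hS1, hS2, hS3⟩ := hcl
          exact ⟨S, hS1, hS2, by omega⟩
        obtain ⟨j, hu, hv⟩ := claims_two H hcl'
        simp only [Finset.mem_insert, Finset.mem_singleton] at hu hv
        rcases hu with rfl | rfl | rfl | rfl <;> rcases hv with rfl | rfl | rfl | rfl <;>
          first
            | exact absurd rfl hne
            | (right; rfl)
            | (right; exact Finset.pair_comm _ _)
            | (left; refine ⟨_, _, hne, rfl, _, (hab_mem j).1, ?_, ?_⟩ <;> simp [edg]) <;> done
            | (left; refine ⟨_, _, hne, rfl, _, (hab_mem j).2, ?_, ?_⟩ <;> simp [edg]) <;> done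
      · exact absurd hcl (hnoc3 u v)
    · rintro (⟨u, v, hne, rfl, e, heF, hue, hve⟩ | rfl)
      · exact ⟨u, v, hne, rfl, Finset.mem_biUnion.mpr ⟨e, heF, hue⟩,
          Finset.mem_biUnion.mpr ⟨e, heF, hve⟩, 1, le_refl _, by norm_num,
          (claims_one h3).mpr ⟨e, heF, hue, hve⟩⟩
      · set i0 : Fin t := ⟨0, ht⟩
        have hne : edg a b x y (i0, false) ≠ edg a b x y (i0, true) := by
          intro h
          have := edg_inj H h
          simp at this
        have hunion : edg a b x y (i0, false) ∪ edg a b x y (i0, true) =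
            ({x i0, y i0, a, b} : Finset V) := by
          ext w
          simp only [Finset.mem_union, mem_edg, Finset.mem_insert, Finset.mem_singleton]
          simp only [if_true, if_false, Bool.false_eq_true, ite_false, ite_true]
          tauto
        have hcard4 : ({x i0, y i0, a, b} : Finset V).card = 4 := by
          rw [Finset.card_insert_of_notMem, Finset.card_insert_of_notMem,
            Finset.card_insert_of_notMem, Finset.card_singleton]
          · simp [hab]
          · simp [hya i0, hyb i0]
          · simp [hxy i0 i0, hxa i0, hxb i0]
        refine ⟨a, b, hab, rfl,
          Finset.mem_biUnion.mpr ⟨edg a b x y (i0, false), (hab_mem i0).1, by simp [edg]⟩,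
          Finset.mem_biUnion.mpr ⟨edg a b x y (i0, true), (hab_mem i0).2, by simp [edg]⟩,
          2, by norm_num, by norm_num, ?_⟩
        refine ⟨{edg a b x y (i0, false), edg a b x y (i0, true)},
          Finset.insert_subset (hab_mem i0).1 (Finset.singleton_subset_iff.mpr (hab_mem i0).2),
          Finset.card_insert_of_notMem (by simpa using hne), ?_⟩
        have hspan : ({edg a b x y (i0, false), edg a b x y (i0, true)} :
            Finset (Finset V)).biUnion id =
            edg a b x y (i0, false) ∪ edg a b x y (i0, true) := by simp
        rw [hspan, hunion]
        have : insert a (insert b ({x i0, y i0, a, b} : Finset V)) =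
            ({x i0, y i0, a, b} : Finset V) := by
          rw [Finset.insert_eq_self.mpr (by simp), Finset.insert_eq_self.mpr (by simp)]
        rw [this, hcard4]
  refine ⟨?_, ?_, ?_, hPLE_eq, ?_⟩
  · refine hcf 7 5 (by norm_num) ?_
    rintro m ⟨h1, h2, h3'⟩
    rcases lt_or_ge m 5 with h | h
    · have := h3' h; omega
    · omega
  · refine hcf 9 7 (by norm_num) ?_
    rintro m ⟨h1, h2, h3'⟩
    rcases lt_or_ge m 7 with h | h
    · have := h3' h; omega
    · omega
  · intro ℓ hℓ
    have hℓ2 : 2 ≤ ℓ := by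
      simp only [Set.mem_insert_iff, Set.mem_singleton_iff] at hℓ
      rcases hℓ with rfl | rfl | rfl | rfl | rfl <;> norm_num
    refine hcf (ℓ + 1) ℓ (by omega) ?_
    rintro m ⟨h1, h2, h3'⟩
    rcases lt_or_ge m ℓ with h | h
    · have := h3' h; omega
    · omega
  · have hple : PLE 3 3 (Finset.univ.image (edg a b x y)) =
        ↑(insert ({a, b} : Finset V) (Finset.univ.biUnion fun i => prs a b x y i)) := by
      rw [hPLE_eq, P1_diamonds H, Finset.coe_insert, Set.union_singleton]
    rw [hple, Set.ncard_coe_finset,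
      Finset.card_insert_of_notMem (ab_not_prs H),
      Finset.card_biUnion (fun i _ j _ h => prs_disj H h)]
    have : ∀ i ∈ (Finset.univ : Finset (Fin t)), (prs a b x y i).card = 5 :=
      fun i _ => prs_card H i
    rw [Finset.sum_congr rfl this, Finset.sum_const, smul_eq_mul]
    simp [mul_comm]
end

section
/- Let r ≥ 3 and k ≥ 2 be integers, let G be an (rk-2k+2,k)-free r-graph, let u and v be two distinct vertices, and let F_1, …, F_s be pairwise edge-disjoint subgraphs of G. Then there do not exist integers m_1, …, m_s with m_i ∈ C_{F_i}(uv) for every i ∈ [s] and m_1 + … + m_s = k. -/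
open Finset Filter

/-- Lemma: for edge-disjoint subgraphs `F_1, …, F_s` of an `(rk-2k+2,k)`-free `r`-graph `G`,
the sum-set `∑ C_{F_i}(uv)` does not contain `k`. -/
theorem sum_claims_ne (r k : ℕ) (hr : 3 ≤ r) (hk : 2 ≤ k)
    {V : Type*} [DecidableEq V]
    (G : Finset (Finset V)) (hG : IsRGraph r G)
    (hfree : ConfigFree (r * k - 2 * k + 2) k G)
    (u v : V) (huv : u ≠ v)
    (s : ℕ) (F : Fin s → Finset (Finset V))
    (hsub : ∀ i, F i ⊆ G)
    (hdisj : ∀ i j, i ≠ j → Disjoint (F i) (F j)) :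
    ¬ ∃ m : Fin s → ℕ, (∀ i, m i ∈ CSet r (F i) u v) ∧ ∑ i, m i = k := by

  rintro ⟨m, hm, hsum⟩
  choose S hSsub hScard hSspan using hm
  set T : Finset (Finset V) := Finset.univ.biUnion S with hT
  have hTsub : T ⊆ G := by
    intro e he
    simp only [hT, Finset.mem_biUnion] at he
    obtain ⟨i, _, hei⟩ := he
    exact hsub i (hSsub i hei)
  have hTcard : T.card = k := by
    rw [hT, Finset.card_biUnion]
    · simp only [hScard, hsum]
    · intro i _ j _ hij
      exact (hdisj i j hij).mono (hSsub i) (hSsub j)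
  have key : ∀ X : Finset V, insert u (insert v X) = (X \ {u, v}) ∪ {u, v} := by
    intro X
    ext x
    by_cases hu : x = u <;> by_cases hv : x = v <;>
      simp [hu, hv, Finset.mem_sdiff, Finset.mem_union, Finset.mem_insert]
  have hcuv : ({u, v} : Finset V).card = 2 := Finset.card_pair huv
  have hper : ∀ i, ((S i).biUnion id \ {u, v}).card ≤ r * m i - 2 * m i := by
    intro i
    have := hSspan i
    rw [key, Finset.card_union_of_disjoint Finset.sdiff_disjoint, hcuv] at this
    omega
  have hsdiff : (T.biUnion id \ {u, v}).card ≤ r * k - 2 * k := by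
    have hsubU : T.biUnion id \ {u, v} ⊆
        Finset.univ.biUnion (fun i => (S i).biUnion id \ {u, v}) := by
      intro x hx
      rw [Finset.mem_sdiff] at hx
      obtain ⟨hx1, hx2⟩ := hx
      rw [Finset.mem_biUnion] at hx1
      obtain ⟨e, he, hxe⟩ := hx1
      rw [hT, Finset.mem_biUnion] at he
      obtain ⟨i, _, hei⟩ := he
      simp only [Finset.mem_biUnion, Finset.mem_sdiff, id]
      exact ⟨i, Finset.mem_univ i, ⟨e, hei, hxe⟩, hx2⟩
    calc (T.biUnion id \ {u, v}).card
        ≤ (Finset.univ.biUnion (fun i => (S i).biUnion id \ {u, v})).card :=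
          Finset.card_le_card hsubU
      _ ≤ ∑ i, ((S i).biUnion id \ {u, v}).card := Finset.card_biUnion_le
      _ ≤ ∑ i, (r * m i - 2 * m i) := Finset.sum_le_sum (fun i _ => hper i)
      _ = ∑ i, (r - 2) * m i := by
          apply Finset.sum_congr rfl
          intro i _
          rw [Nat.sub_mul]
      _ = (r - 2) * k := by rw [← Finset.mul_sum, hsum]
      _ = r * k - 2 * k := by rw [Nat.sub_mul]
  have hspan : (T.biUnion id).card ≤ r * k - 2 * k + 2 := by
    have h1 : (T.biUnion id).card ≤ (insert u (insert v (T.biUnion id))).card :=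
      Finset.card_le_card (fun x hx => by simp [hx])
    rw [key, Finset.card_union_of_disjoint Finset.sdiff_disjoint, hcuv] at h1
    omega
  exact hfree ⟨T, hTsub, hTcard, hspan⟩
end

section
/- Let G be an r-graph, let P be a partition of the edge set of G, and let A, B ⊆ ℕ. Let M' be the smallest family of subgraphs of G that contains every member of P and contains F ∪ H whenever F, H ∈ M' are edge-disjoint and A⋈B-mergeable. Assume that whenever F, H ∈ M' are A⟨B-mergeable, there exist F', H' ∈ P with F' ⊆ F and H' ⊆ H such that F' and H' are A⟨B-mergeable. Then for all F₀, F ∈ M' with F₀ ⊆ F there is an ordering F_1, …, F_s of the members of P that are contained in F and edge-disjoint from F₀ such that, for every i ∈ [s], the subgraphs F₀ ∪ F_1 ∪ … ∪ F_{i-1} and F_i are A⋈B-mergeable. -/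
open Finset Filter

/-- Edge-disjoint subgraphs `F` and `H` are `A⟨B`-mergeable if there is a pair `{u,v}` of
distinct vertices with `A ⊆ C_F(uv)` and `B ⊆ C_H(uv)`. -/
def OMergeable {V : Type*} [DecidableEq V] (r : ℕ) (A B : Set ℕ)
    (F H : Finset (Finset V)) : Prop :=
  Disjoint F H ∧ ∃ u v : V, u ≠ v ∧ A ⊆ CSet r F u v ∧ B ⊆ CSet r H u v

/-- `F` and `H` are `A⋈B`-mergeable if `F,H` or `H,F` are `A⟨B`-mergeable. -/
def Mergeable {V : Type*} [DecidableEq V] (r : ℕ) (A B : Set ℕ)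
    (F H : Finset (Finset V)) : Prop :=
  OMergeable r A B F H ∨ OMergeable r A B H F

/-! Every member of `M'` is a union of parts of `P` on which the relation "`A⋈B`-mergeable"
is connected: a merge preserves this because, by the trimming hypothesis, two merged members
contain mergeable parts. Walking from the parts of `F₀` through this connected graph on the
parts of `F` lists the remaining parts so that each is mergeable with an earlier one, hence,
claims being monotone in the subgraph, with the union of everything before it. -/

lemma Relation.ReflTransGen.exists_step_out {α : Type*} {R : α → α → Prop} {s : Set α}
    {a b : α} (h : Relation.ReflTransGen R a b) (ha : a ∈ s) (hb : b ∉ s) :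
    ∃ c ∈ s, ∃ d ∉ s, R c d := by
  induction h with
  | refl => exact absurd ha hb
  | @tail c d _ hcd ih =>
    by_cases hc : c ∈ s
    · exact ⟨c, hc, d, hb, hcd⟩
    · exact ih hc

theorem Finset.exists_ordering_related_to_earlier {α : Type*} [DecidableEq α]
    {R : α → α → Prop} {T : Finset α} (hRT : ∀ a b, R a b → b ∈ T) :
    ∀ S ⊆ T, (∀ x ∈ T, ∃ s ∈ S, Relation.ReflTransGen R s x) →
      ∃ (n : ℕ) (g : Fin n → α), Function.Injective g ∧ (∀ i, g i ∈ T \ S) ∧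
        (∀ x ∈ T \ S, ∃ i, g i = x) ∧
        ∀ i, ∃ a, (a ∈ S ∨ ∃ j < i, g j = a) ∧ R a (g i) := by
  intro S hST hconn
  induction hcard : (T \ S).card generalizing S with
  | zero =>
    refine ⟨0, Fin.elim0, fun i => i.elim0, fun i => i.elim0, ?_, fun i => i.elim0⟩
    simp [Finset.card_eq_zero.mp hcard]
  | succ n ih =>
    obtain ⟨x, hx⟩ : (T \ S).Nonempty := Finset.card_pos.mp (by omega)
    obtain ⟨s, hs, hsx⟩ := hconn x (Finset.mem_sdiff.mp hx).1
    obtain ⟨a, haS, b, hbS, hab⟩ :=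
      hsx.exists_step_out (s := (S : Set α)) hs (Finset.mem_sdiff.mp hx).2
    have hbT : b ∈ T := hRT a b hab
    have hbTS : b ∈ T \ S := Finset.mem_sdiff.mpr ⟨hbT, hbS⟩
    obtain ⟨m, g, hg, hgT, hgcov, hgrel⟩ := ih (insert b S)
      (Finset.insert_subset hbT hST)
      (fun y hy => (hconn y hy).imp fun s hs => ⟨Finset.mem_insert_of_mem hs.1, hs.2⟩)
      (by rw [Finset.sdiff_insert, Finset.card_erase_of_mem hbTS, hcard]; rfl)
    have hgS i : g i ∈ T \ S ∧ g i ≠ b := by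
      simpa [not_or, and_right_comm, and_assoc] using hgT i
    refine ⟨m + 1, Fin.cons b g, ?_, ?_, ?_, ?_⟩
    · exact Fin.cons_injective_iff.mpr ⟨fun ⟨i, hi⟩ => (hgS i).2 hi, hg⟩
    · exact Fin.cases hbTS fun i => by simpa using (hgS i).1
    · intro y hy
      by_cases hyb : y = b
      · exact ⟨0, by simp [hyb]⟩
      · obtain ⟨i, hi⟩ := hgcov y (by simp [Finset.mem_sdiff.mp hy, hyb])
        exact ⟨i.succ, by simpa using hi⟩
    · refine Fin.cases ⟨a, Or.inl haS, hab⟩ fun i => ?_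
      obtain ⟨c, hc, hcg⟩ := hgrel i
      refine ⟨c, ?_, by simpa using hcg⟩
      rcases hc with hc | ⟨j, hji, rfl⟩
      · rcases Finset.mem_insert.mp hc with rfl | hc
        · exact Or.inr ⟨0, Fin.succ_pos i, rfl⟩
        · exact Or.inl hc
      · exact Or.inr ⟨j.succ, Fin.succ_lt_succ_iff.mpr hji, by simp⟩

section Parts

variable {V : Type*}

def IsPartUnion (P : Finset (Finset (Finset V))) (F : Finset (Finset V)) : Prop :=
  ∀ e ∈ F, ∃ p ∈ P, e ∈ p ∧ p ⊆ F

lemma IsPartUnion.subset_of_mem {P : Finset (Finset (Finset V))} {F p : Finset (Finset V)}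
    {e : Finset V} (hF : IsPartUnion P F) (hPdisj : ∀ p ∈ P, ∀ q ∈ P, p ≠ q → Disjoint p q)
    (hp : p ∈ P) (hep : e ∈ p) (heF : e ∈ F) : p ⊆ F := by
  obtain ⟨q, hq, heq, hqF⟩ := hF e heF
  obtain rfl : p = q := by_contra fun hpq => disjoint_left.mp (hPdisj p hp q hq hpq) hep heq
  exact hqF

lemma IsPartUnion.disjoint_iff_not_subset {P : Finset (Finset (Finset V))}
    {F p : Finset (Finset V)} (hF : IsPartUnion P F)
    (hPne : ∀ p ∈ P, p.Nonempty) (hPdisj : ∀ p ∈ P, ∀ q ∈ P, p ≠ q → Disjoint p q)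
    (hp : p ∈ P) : Disjoint p F ↔ ¬ p ⊆ F := by
  refine ⟨fun hpF hsub => (hPne p hp).ne_empty (disjoint_self.mp (hpF.mono_right hsub)),
    fun hsub => disjoint_left.mpr fun _ hep heF => hsub (hF.subset_of_mem hPdisj hp hep heF)⟩

lemma IsPartUnion.mem_filter_sdiff_filter_iff [DecidableEq V]
    {P : Finset (Finset (Finset V))} {F F₀ p : Finset (Finset V)} (hF₀ : IsPartUnion P F₀)
    (hPne : ∀ p ∈ P, p.Nonempty) (hPdisj : ∀ p ∈ P, ∀ q ∈ P, p ≠ q → Disjoint p q) :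
    p ∈ P.filter (· ⊆ F) \ P.filter (· ⊆ F₀) ↔ p ∈ P ∧ p ⊆ F ∧ Disjoint p F₀ := by
  rw [Finset.mem_sdiff, mem_filter, mem_filter]
  constructor
  · rintro ⟨⟨hp, hpF⟩, hpF₀⟩
    exact ⟨hp, hpF, (hF₀.disjoint_iff_not_subset hPne hPdisj hp).mpr fun h => hpF₀ ⟨hp, h⟩⟩
  · rintro ⟨hp, hpF, hpF₀⟩
    exact ⟨⟨hp, hpF⟩, fun h => (hF₀.disjoint_iff_not_subset hPne hPdisj hp).mp hpF₀ h.2⟩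

variable [DecidableEq V] {r : ℕ} {A B : Set ℕ} {P : Finset (Finset (Finset V))}

lemma CSet.mono {F F' : Finset (Finset V)} (h : F ⊆ F') (u v : V) :
    CSet r F u v ⊆ CSet r F' u v :=
  fun _ ⟨S, hS, hcard, hspan⟩ => ⟨S, hS.trans h, hcard, hspan⟩

lemma Mergeable.mono_left {a b U : Finset (Finset V)} (hab : Mergeable r A B a b)
    (haU : a ⊆ U) (hUb : Disjoint U b) : Mergeable r A B U b := by
  rcases hab with ⟨_, u, v, huv, hA, hB⟩ | ⟨_, u, v, huv, hA, hB⟩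
  · exact Or.inl ⟨hUb, u, v, huv, hA.trans (CSet.mono haU u v), hB⟩
  · exact Or.inr ⟨hUb.symm, u, v, huv, hA, hB.trans (CSet.mono haU u v)⟩

variable (r A B P) in
def PartMergeable (F a b : Finset (Finset V)) : Prop :=
  a ∈ P ∧ a ⊆ F ∧ b ∈ P ∧ b ⊆ F ∧ Mergeable r A B a b

lemma PartMergeable.reflTransGen_mono {F F' a b : Finset (Finset V)} (h : F ⊆ F')
    (hab : Relation.ReflTransGen (PartMergeable r A B P F) a b) :
    Relation.ReflTransGen (PartMergeable r A B P F') a b :=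
  Relation.ReflTransGen.mono
    (fun _ _ ⟨ha, haF, hb, hbF, hm⟩ => ⟨ha, haF.trans h, hb, hbF.trans h, hm⟩) _ _ hab

variable (r A B P) in
structure IsMergeConnected (F : Finset (Finset V)) : Prop where
  nonempty : F.Nonempty
  isPartUnion : IsPartUnion P F
  connected : ∀ p ∈ P, p ⊆ F → ∀ q ∈ P, q ⊆ F →
    Relation.ReflTransGen (PartMergeable r A B P F) p q

lemma isMergeConnected_of_mem_parts {p : Finset (Finset V)}
    (hPne : ∀ p ∈ P, p.Nonempty) (hPdisj : ∀ p ∈ P, ∀ q ∈ P, p ≠ q → Disjoint p q)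
    (hp : p ∈ P) : IsMergeConnected r A B P p := by
  have heq : ∀ q ∈ P, q ⊆ p → q = p := fun q hq hqp => by_contra fun hne =>
    (hPne q hq).ne_empty (disjoint_self.mp ((hPdisj q hq p hp hne).mono_right hqp))
  refine ⟨hPne p hp, fun e he => ⟨p, hp, he, subset_rfl⟩, fun q hq hqp q' hq' hq'p => ?_⟩
  rw [heq q hq hqp, heq q' hq' hq'p]

lemma IsMergeConnected.union {F H a b : Finset (Finset V)}
    (hPne : ∀ p ∈ P, p.Nonempty) (hPdisj : ∀ p ∈ P, ∀ q ∈ P, p ≠ q → Disjoint p q)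
    (hF : IsMergeConnected r A B P F) (hH : IsMergeConnected r A B P H)
    (ha : a ∈ P) (haF : a ⊆ F) (hb : b ∈ P) (hbH : b ⊆ H) (hab : Mergeable r A B a b) :
    IsMergeConnected r A B P (F ∪ H) := by
  have hFH : F ⊆ F ∪ H := subset_union_left
  have hHFH : H ⊆ F ∪ H := subset_union_right
  have hside : ∀ p ∈ P, p ⊆ F ∪ H → p ⊆ F ∨ p ⊆ H := fun p hp hpFH => by
    obtain ⟨e, hep⟩ := hPne p hp
    exact (mem_union.mp (hpFH hep)).imp (hF.isPartUnion.subset_of_mem hPdisj hp hep)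
      (hH.isPartUnion.subset_of_mem hPdisj hp hep)
  refine ⟨hF.nonempty.mono hFH, fun e he => ?_, fun p hp hpFH q hq hqFH => ?_⟩
  · rcases mem_union.mp he with he | he
    · obtain ⟨p, hp, hep, hpF⟩ := hF.isPartUnion e he
      exact ⟨p, hp, hep, hpF.trans hFH⟩
    · obtain ⟨p, hp, hep, hpH⟩ := hH.isPartUnion e he
      exact ⟨p, hp, hep, hpH.trans hHFH⟩
  have inF {x y} (hx : x ∈ P) (hxF : x ⊆ F) (hy : y ∈ P) (hyF : y ⊆ F) :=
    PartMergeable.reflTransGen_mono hFH (hF.connected x hx hxF y hy hyF)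
  have inH {x y} (hx : x ∈ P) (hxH : x ⊆ H) (hy : y ∈ P) (hyH : y ⊆ H) :=
    PartMergeable.reflTransGen_mono hHFH (hH.connected x hx hxH y hy hyH)
  have hab' : PartMergeable r A B P (F ∪ H) a b :=
    ⟨ha, haF.trans hFH, hb, hbH.trans hHFH, hab⟩
  have hba' : PartMergeable r A B P (F ∪ H) b a :=
    ⟨hb, hbH.trans hHFH, ha, haF.trans hFH, hab.symm⟩
  rcases hside p hp hpFH with hpF | hpH <;> rcases hside q hq hqFH with hqF | hqH
  · exact inF hp hpF hq hqF
  · exact ((inF hp hpF ha haF).tail hab').trans (inH hb hbH hq hqH)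
  · exact ((inH hp hpH hb hbH).tail hba').trans (inF ha haF hq hqF)
  · exact inH hp hpH hq hqH

lemma isMergeConnected_of_minimal (hPne : ∀ p ∈ P, p.Nonempty)
    (hPdisj : ∀ p ∈ P, ∀ q ∈ P, p ≠ q → Disjoint p q) (M' : Set (Finset (Finset V)))
    (hPM : ∀ p ∈ P, p ∈ M')
    (hClosed : ∀ F ∈ M', ∀ H ∈ M', Disjoint F H → Mergeable r A B F H → F ∪ H ∈ M')
    (hMin : ∀ N : Set (Finset (Finset V)), (∀ p ∈ P, p ∈ N) →
      (∀ F ∈ N, ∀ H ∈ N, Disjoint F H → Mergeable r A B F H → F ∪ H ∈ N) →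
      M' ⊆ N)
    (hTrim : ∀ F ∈ M', ∀ H ∈ M', OMergeable r A B F H →
      ∃ F' ∈ P, ∃ H' ∈ P, F' ⊆ F ∧ H' ⊆ H ∧ OMergeable r A B F' H')
    {F : Finset (Finset V)} (hF : F ∈ M') : IsMergeConnected r A B P F := by
  refine (hMin {X | X ∈ M' ∧ IsMergeConnected r A B P X}
    (fun p hp => ⟨hPM p hp, isMergeConnected_of_mem_parts hPne hPdisj hp⟩) ?_ hF).2
  rintro X ⟨hXM, hX⟩ Y ⟨hYM, hY⟩ hXY hm
  refine ⟨hClosed X hXM Y hYM hXY hm, ?_⟩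
  rcases hm with hm | hm
  · obtain ⟨a, ha, b, hb, haX, hbY, hab⟩ := hTrim X hXM Y hYM hm
    exact hX.union hPne hPdisj hY ha haX hb hbY (Or.inl hab)
  · obtain ⟨b, hb, a, ha, hbY, haX, hba⟩ := hTrim Y hYM X hXM hm
    exact hX.union hPne hPdisj hY ha haX hb hbY (Or.inr hba)

end Parts

theorem trimming_lemma_general {V : Type*} [DecidableEq V] (r : ℕ)
    (P : Finset (Finset (Finset V))) (A B : Set ℕ)
    (hPne : ∀ p ∈ P, p.Nonempty)
    (hPdisj : ∀ p ∈ P, ∀ q ∈ P, p ≠ q → Disjoint p q)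
    -- `M'` is the smallest family containing `P` and closed under unions of
    -- edge-disjoint `A⋈B`-mergeable members:
    (M' : Set (Finset (Finset V)))
    (hPM : ∀ p ∈ P, p ∈ M')
    (hClosed : ∀ F ∈ M', ∀ H ∈ M', Disjoint F H → Mergeable r A B F H → F ∪ H ∈ M')
    (hMin : ∀ N : Set (Finset (Finset V)), (∀ p ∈ P, p ∈ N) →
      (∀ F ∈ N, ∀ H ∈ N, Disjoint F H → Mergeable r A B F H → F ∪ H ∈ N) →
      M' ⊆ N)
    -- the trimming hypothesis:
    (hTrim : ∀ F ∈ M', ∀ H ∈ M', OMergeable r A B F H →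
      ∃ F' ∈ P, ∃ H' ∈ P, F' ⊆ F ∧ H' ⊆ H ∧ OMergeable r A B F' H')
    (F₀ F : Finset (Finset V)) (hF₀ : F₀ ∈ M') (hF : F ∈ M') (hsub : F₀ ⊆ F) :
    ∃ (s : ℕ) (g : Fin s → Finset (Finset V)),
      Function.Injective g ∧
      (∀ i, g i ∈ P ∧ g i ⊆ F ∧ Disjoint (g i) F₀) ∧
      (∀ p ∈ P, p ⊆ F → Disjoint p F₀ → ∃ i, g i = p) ∧
      ∀ i : Fin s,
        Mergeable r A B (F₀ ∪ (Finset.univ.filter fun j => j < i).biUnion g) (g i) := by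
  have hFc := isMergeConnected_of_minimal hPne hPdisj M' hPM hClosed hMin hTrim hF
  have hF₀c := isMergeConnected_of_minimal hPne hPdisj M' hPM hClosed hMin hTrim hF₀
  have hmem p := hF₀c.isPartUnion.mem_filter_sdiff_filter_iff (F := F) (p := p) hPne hPdisj
  have hreach : ∀ x ∈ P.filter (· ⊆ F), ∃ s ∈ P.filter (· ⊆ F₀),
      Relation.ReflTransGen (PartMergeable r A B P F) s x := fun x hx => by
    obtain ⟨e, he⟩ := hF₀c.nonempty
    obtain ⟨p, hp, hep, hpF₀⟩ := hF₀c.isPartUnion e he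
    exact ⟨p, mem_filter.mpr ⟨hp, hpF₀⟩, hFc.connected p hp (hpF₀.trans hsub) x
      (mem_filter.mp hx).1 (mem_filter.mp hx).2⟩
  obtain ⟨s, g, hg, hgmem, hgcov, hgrel⟩ := exists_ordering_related_to_earlier
    (fun _ _ ⟨_, _, hb, hbF, _⟩ => mem_filter.mpr ⟨hb, hbF⟩) _
    (fun _ hp => mem_filter.mpr ⟨(mem_filter.mp hp).1, (mem_filter.mp hp).2.trans hsub⟩)
    hreach
  have hgP i : g i ∈ P ∧ g i ⊆ F ∧ Disjoint (g i) F₀ := (hmem _).mp (hgmem i)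
  refine ⟨s, g, hg, hgP, fun p hp hpF hpF₀ => hgcov p ((hmem p).mpr ⟨hp, hpF, hpF₀⟩),
    fun i => ?_⟩
  obtain ⟨a, ha, -, -, -, -, hag⟩ := hgrel i
  refine hag.mono_left ?_ (disjoint_union_left.mpr ⟨(hgP i).2.2.symm,
    (disjoint_biUnion_left _ _ _).mpr fun j hj => hPdisj _ (hgP j).1 _ (hgP i).1
      (hg.ne (mem_filter.mp hj).2.ne)⟩)
  rcases ha with ha | ⟨j, hji, rfl⟩
  · exact (mem_filter.mp ha).2.trans subset_union_left
  · exact (subset_biUnion_of_mem g (mem_filter.mpr ⟨mem_univ j, hji⟩)).trans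
      subset_union_right

/-- The Trimming Lemma. -/
theorem trimming_lemma {V : Type*} [DecidableEq V] (r : ℕ)
    (G : Finset (Finset V)) (hG : IsRGraph r G)
    (P : Finset (Finset (Finset V))) (A B : Set ℕ)
    -- `P` is a partition of the edge set of `G`:
    (hPsub : ∀ p ∈ P, p ⊆ G)
    (hPne : ∀ p ∈ P, p.Nonempty)
    (hPdisj : ∀ p ∈ P, ∀ q ∈ P, p ≠ q → Disjoint p q)
    (hPcover : ∀ e ∈ G, ∃ p ∈ P, e ∈ p)
    -- `M'` is the smallest family containing `P` and closed under unions of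
    -- edge-disjoint `A⋈B`-mergeable members:
    (M' : Set (Finset (Finset V)))
    (hPM : ∀ p ∈ P, p ∈ M')
    (hClosed : ∀ F ∈ M', ∀ H ∈ M', Disjoint F H → Mergeable r A B F H → F ∪ H ∈ M')
    (hMin : ∀ N : Set (Finset (Finset V)), (∀ p ∈ P, p ∈ N) →
      (∀ F ∈ N, ∀ H ∈ N, Disjoint F H → Mergeable r A B F H → F ∪ H ∈ N) →
      M' ⊆ N)
    -- the trimming hypothesis:
    (hTrim : ∀ F ∈ M', ∀ H ∈ M', OMergeable r A B F H →
      ∃ F' ∈ P, ∃ H' ∈ P, F' ⊆ F ∧ H' ⊆ H ∧ OMergeable r A B F' H')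
    (F₀ F : Finset (Finset V)) (hF₀ : F₀ ∈ M') (hF : F ∈ M') (hsub : F₀ ⊆ F) :
    ∃ (s : ℕ) (g : Fin s → Finset (Finset V)),
      Function.Injective g ∧
      (∀ i, g i ∈ P ∧ g i ⊆ F ∧ Disjoint (g i) F₀) ∧
      (∀ p ∈ P, p ⊆ F → Disjoint p F₀ → ∃ i, g i = p) ∧
      ∀ i : Fin s,
        Mergeable r A B (F₀ ∪ (Finset.univ.filter fun j => j < i).biUnion g) (g i) :=
  trimming_lemma_general r P A B hPne hPdisj M' hPM hClosed hMin hTrim F₀ F hF₀ hF hsub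
end

section
/- Let r ≥ 3 and k ≥ 2 be integers and let G be a G^{(r)}_k-free r-graph. Then every maximal connected subgraph of G (a connected subgraph of G not properly contained in any other connected subgraph of G) is an m-tree for some integer m with 1 ≤ m ≤ k-1. -/
open Finset

/-- `G` is `𝒢^{(r)}_k`-free: `(rk-2k+2, k)`-free and `(rℓ-2ℓ+1, ℓ)`-free for `2 ≤ ℓ ≤ k-1`. -/
def GFree {V : Type*} [DecidableEq V] (r k : ℕ) (G : Finset (Finset V)) : Prop :=
  ConfigFree (r * k - 2 * k + 2) k G ∧
    ∀ ℓ, 2 ≤ ℓ → ℓ ≤ k - 1 → ConfigFree (r * ℓ - 2 * ℓ + 1) ℓ G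

/-- A (nonempty) `r`-graph `F` is connected if any two edges `X, Y ∈ F` are joined by a
sequence of edges of `F`, consecutive ones sharing at least two vertices. -/
def Connected {V : Type*} [DecidableEq V] (F : Finset (Finset V)) : Prop :=
  ∀ X ∈ F, ∀ Y ∈ F, ∃ (m : ℕ) (c : Fin (m + 1) → Finset V),
    (∀ j, c j ∈ F) ∧ c 0 = X ∧ c (Fin.last m) = Y ∧
    ∀ j : Fin m, 2 ≤ (c j.castSucc ∩ c j.succ).card

/-- `IsTree r i T`: `T` is an `i`-tree of uniformity `r`. A `1`-tree consists of a single
edge of size `r`; an `(i+1)`-tree is obtained from an `i`-tree by adding a new edge made of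
two vertices lying together in an existing edge together with `r-2` brand new vertices. -/
inductive IsTree {V : Type*} [DecidableEq V] (r : ℕ) : ℕ → Finset (Finset V) → Prop
  | single (e : Finset V) (he : e.card = r) : IsTree r 1 {e}
  | extend (i : ℕ) (T : Finset (Finset V)) (hT : IsTree r i T)
      (x y : V) (S : Finset V) (hxy : x ≠ y)
      (hmem : ∃ e ∈ T, x ∈ e ∧ y ∈ e)
      (hScard : S.card = r - 2)
      (hSnew : ∀ v ∈ S, v ∉ T.biUnion id) :
      IsTree r (i + 1) (insert ({x, y} ∪ S) T)

section Aux
variable {V : Type*} [DecidableEq V]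

inductive Buildable : ℕ → Finset (Finset V) → Prop
  | single (e : Finset V) : Buildable 1 {e}
  | extend (n : ℕ) (T : Finset (Finset V)) (h : Buildable n T) (e : Finset V)
      (he : e ∉ T) (hf : ∃ f ∈ T, 2 ≤ (e ∩ f).card) : Buildable (n + 1) (insert e T)

lemma Buildable.card_eq {n : ℕ} {T : Finset (Finset V)} (h : Buildable n T) : T.card = n := by
  induction h with
  | single e => simp
  | extend n T h e he hf ih => rw [card_insert_of_notMem he, ih]

lemma Buildable.nonempty {n : ℕ} {T : Finset (Finset V)} (h : Buildable n T) : T.Nonempty := by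
  induction h with
  | single e => simp
  | extend n T h e he hf ih => exact insert_nonempty _ _

lemma Buildable.union_card {r n : ℕ} {T : Finset (Finset V)} (hr : 2 ≤ r)
    (h : Buildable n T) (hc : ∀ e ∈ T, e.card = r) :
    (T.biUnion id).card + 2 * n ≤ r * n + 2 := by
  induction h with
  | single e =>
    have := hc e (mem_singleton_self e)
    simp only [singleton_biUnion, id] at *
    omega
  | extend n T hb e he hf ih =>
    obtain ⟨f, hfT, hef⟩ := hf
    have hcT : ∀ x ∈ T, x.card = r := fun x hx => hc x (mem_insert_of_mem hx)
    have her : e.card = r := hc e (mem_insert_self e T)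
    have h4 := ih hcT
    have hbU : (insert e T).biUnion id = e ∪ T.biUnion id := biUnion_insert
    have h1 : (e \ T.biUnion id).card + (T.biUnion id).card = (e ∪ T.biUnion id).card :=
      card_sdiff_add_card e _
    have hfU : f ⊆ T.biUnion id := subset_biUnion_of_mem id hfT
    have h2 : (e \ T.biUnion id).card ≤ (e \ f).card :=
      card_le_card (sdiff_subset_sdiff (Finset.Subset.refl e) hfU)
    have h3 : (e ∩ f).card + (e \ f).card = e.card := card_inter_add_card_sdiff e f
    have h5 : r * (n + 1) = r * n + r := by ring
    rw [hbU]
    omega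

lemma Buildable.prefix {n : ℕ} {T : Finset (Finset V)} (h : Buildable n T) :
    ∀ j, 1 ≤ j → j ≤ n → ∃ T' ⊆ T, Buildable j T' := by
  induction h with
  | single e =>
    intro j h1 hj
    obtain rfl : j = 1 := le_antisymm hj h1
    exact ⟨{e}, Finset.Subset.refl _, Buildable.single e⟩
  | extend n T hb e he hf ih =>
    intro j h1 hj
    rcases Nat.lt_succ_iff_lt_or_eq.mp (Nat.lt_succ_of_le hj) with hlt | rfl
    · obtain ⟨T', hsub, hb'⟩ := ih j h1 (by omega)
      exact ⟨T', hsub.trans (subset_insert _ _), hb'⟩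
    · exact ⟨insert e T, Finset.Subset.refl _, Buildable.extend n T hb e he hf⟩

lemma exists_crossing : ∀ {m : ℕ} (p : Fin (m + 1) → Prop), ¬ p 0 → p (Fin.last m) →
    ∃ j : Fin m, ¬ p j.castSucc ∧ p j.succ := by
  intro m
  induction m with
  | zero =>
    intro p h0 hl
    exact absurd hl (by simpa using h0)
  | succ m ih =>
    intro p h0 hl
    by_cases hc : p (Fin.castSucc (Fin.last m))
    · obtain ⟨j, hj1, hj2⟩ := ih (fun i => p i.castSucc) (by simpa using h0) hc
      exact ⟨j.castSucc, hj1, by rwa [Fin.succ_castSucc]⟩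
    · exact ⟨Fin.last m, hc, by rwa [Fin.succ_last]⟩

lemma grow {F T : Finset (Finset V)} (hconn : Connected F) (hTF : T ⊆ F)
    {n : ℕ} (hb : Buildable n T) (hne : T ≠ F) :
    ∃ e ∈ F, e ∉ T ∧ ∃ f ∈ T, 2 ≤ (e ∩ f).card := by
  obtain ⟨Y, hYF, hYT⟩ : ∃ Y ∈ F, Y ∉ T := by
    by_contra h
    push_neg at h
    exact hne (Finset.Subset.antisymm hTF h)
  obtain ⟨X, hX⟩ := hb.nonempty
  obtain ⟨m, c, hcF, hc0, hcl, hadj⟩ := hconn X (hTF hX) Y hYF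
  obtain ⟨j, hj1, hj2⟩ := exists_crossing (fun i => c i ∉ T)
    (by simp only [hc0]; exact not_not.mpr hX) (by simp only [hcl]; exact hYT)
  refine ⟨c j.succ, hcF _, hj2, c j.castSucc, not_not.mp hj1, ?_⟩
  rw [Finset.inter_comm]
  exact hadj j

lemma connected_buildable {F : Finset (Finset V)} (hne : F.Nonempty) (hconn : Connected F) :
    Buildable F.card F := by
  suffices h : ∀ j, 1 ≤ j → j ≤ F.card → ∃ T ⊆ F, T.card = j ∧ Buildable j T by
    obtain ⟨T, hTF, hTc, hb⟩ := h F.card hne.card_pos le_rfl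
    have : T = F := eq_of_subset_of_card_le hTF (le_of_eq hTc.symm)
    exact this ▸ hb
  intro j
  induction j with
  | zero => omega
  | succ j ih =>
    intro h1 hj
    rcases Nat.lt_or_ge j 1 with h | h
    · obtain rfl : j = 0 := by omega
      obtain ⟨e, he⟩ := hne
      exact ⟨{e}, singleton_subset_iff.mpr he, card_singleton e, Buildable.single e⟩
    · obtain ⟨T, hTF, hTc, hb⟩ := ih h (by omega)
      have hne' : T ≠ F := by
        intro heq
        rw [heq] at hTc
        omega
      obtain ⟨e, heF, heT, f, hfT, hef⟩ := grow hconn hTF hb hne'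
      exact ⟨insert e T, insert_subset heF hTF,
        by rw [card_insert_of_notMem heT, hTc],
        Buildable.extend j T hb e heT ⟨f, hfT, hef⟩⟩

lemma Buildable.isTree {r n : ℕ} {T : Finset (Finset V)} (hr : 3 ≤ r)
    (h : Buildable n T) (hc : ∀ e ∈ T, e.card = r)
    (hlb : r * n + 2 ≤ (T.biUnion id).card + 2 * n) : IsTree r n T := by
  induction h with
  | single e => exact IsTree.single e (hc e (mem_singleton_self e))
  | extend n T hb e he hf ih =>
    obtain ⟨f, hfT, hef⟩ := hf
    have hcT : ∀ x ∈ T, x.card = r := fun x hx => hc x (mem_insert_of_mem hx)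
    have her : e.card = r := hc e (mem_insert_self e T)
    have hbU : (insert e T).biUnion id = e ∪ T.biUnion id := biUnion_insert
    have h1 : (e \ T.biUnion id).card + (T.biUnion id).card = (e ∪ T.biUnion id).card :=
      card_sdiff_add_card e _
    have hfU : f ⊆ T.biUnion id := subset_biUnion_of_mem id hfT
    have h2' : e \ T.biUnion id ⊆ e \ f := sdiff_subset_sdiff (Finset.Subset.refl e) hfU
    have h2 : (e \ T.biUnion id).card ≤ (e \ f).card := card_le_card h2'
    have h3 : (e ∩ f).card + (e \ f).card = e.card := card_inter_add_card_sdiff e f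
    have h4 : (T.biUnion id).card + 2 * n ≤ r * n + 2 :=
      Buildable.union_card (by omega) hb hcT
    have h5 : r * (n + 1) = r * n + r := by ring
    rw [hbU] at hlb
    have hintf : (e ∩ f).card = 2 := by omega
    have hsd : (e \ f).card ≤ (e \ T.biUnion id).card := by omega
    have hUlb : r * n + 2 ≤ (T.biUnion id).card + 2 * n := by omega
    have hseteq : e \ T.biUnion id = e \ f := eq_of_subset_of_card_le h2' hsd
    obtain ⟨x, y, hxy, hxyeq⟩ := card_eq_two.mp hintf
    have hT : IsTree r n T := ih hcT hUlb
    have hx : x ∈ e ∩ f := by rw [hxyeq]; simp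
    have hy : y ∈ e ∩ f := by rw [hxyeq]; simp
    have hS : ({x, y} ∪ (e \ f)) = e := by
      rw [← hxyeq]
      ext v
      simp only [mem_union, mem_inter, mem_sdiff]
      tauto
    have hScard : (e \ f).card = r - 2 := by omega
    have hSnew : ∀ v ∈ e \ f, v ∉ T.biUnion id := by
      intro v hv
      rw [← hseteq] at hv
      exact (mem_sdiff.mp hv).2
    have tree := IsTree.extend n T hT x y (e \ f) hxy
      ⟨f, hfT, (mem_inter.mp hx).2, (mem_inter.mp hy).2⟩ hScard hSnew
    rwa [hS] at tree

end Aux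

/-- In a `𝒢^{(r)}_k`-free `r`-graph, every maximal connected subgraph is an `m`-tree
for some `1 ≤ m ≤ k-1`. -/
theorem maximal_connected_is_tree {V : Type*} [DecidableEq V] (r k : ℕ)
    (hr : 3 ≤ r) (hk : 2 ≤ k)
    (G : Finset (Finset V)) (hG : IsRGraph r G) (hfree : GFree r k G)
    (F : Finset (Finset V)) (hFG : F ⊆ G) (hFne : F.Nonempty) (hFconn : Connected F)
    (hFmax : ∀ F', F ⊆ F' → F' ⊆ G → Connected F' → F' = F) :
    ∃ m, 1 ≤ m ∧ m ≤ k - 1 ∧ IsTree r m F := by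
  classical
  have hb : Buildable F.card F := connected_buildable hFne hFconn
  have hn1 : 1 ≤ F.card := hFne.card_pos
  have hcF : ∀ e ∈ F, e.card = r := fun e he => hG e (hFG he)
  have h2r : 2 ≤ r := by omega
  have hnk : F.card ≤ k - 1 := by
    by_contra h
    obtain ⟨T', hsub, hb'⟩ := hb.prefix k (by omega) (by omega)
    have hc' : ∀ e ∈ T', e.card = r := fun e he => hcF e (hsub he)
    have hu := hb'.union_card h2r hc'
    have h2k : 2 * k ≤ r * k := Nat.mul_le_mul_right k h2r
    exact hfree.1 ⟨T', hsub.trans hFG, hb'.card_eq, by omega⟩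
  rcases Nat.lt_or_ge F.card 2 with h1 | h2
  · have hc1 : F.card = 1 := by omega
    obtain ⟨e, rfl⟩ := card_eq_one.mp hc1
    exact ⟨1, le_rfl, by omega, IsTree.single e (hcF e (mem_singleton_self e))⟩
  · refine ⟨F.card, by omega, hnk, ?_⟩
    have hfree2 := hfree.2 F.card h2 hnk
    have hlbU : ¬ (F.biUnion id).card ≤ r * F.card - 2 * F.card + 1 :=
      fun hle => hfree2 ⟨F, hFG, rfl, hle⟩
    have h2n : 2 * F.card ≤ r * F.card := Nat.mul_le_mul_right F.card h2r
    exact hb.isTree hr hcF (by omega)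
end

section
/- Let G be a 3-graph containing no (4,3)-, (5,4)- or (7,5)-configuration, and let F be a maximal connected subgraph of G which is an i-tree with i ∈ {3,4}. Then there exists a pair {x,y} of distinct vertices such that F 2-claims {x,y}, F does not 1-claim {x,y}, and the subgraph G∖F consisting of all edges of G not in F neither 1-claims nor 2-claims {x,y}. -/
open Finset

section Aux
variable {V : Type*} [DecidableEq V]


lemma pair_of_one_claim {H : Finset (Finset V)} {x y : V}
    (hH : ∀ e ∈ H, e.card = 3) (h : Claims 3 1 H x y) : ∃ E ∈ H, x ∈ E ∧ y ∈ E := by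
  obtain ⟨S, hS, hcard, hle⟩ := h
  obtain ⟨E, rfl⟩ := Finset.card_eq_one.mp hcard
  have hEH : E ∈ H := hS (mem_singleton_self E)
  have hE3 : E.card = 3 := hH E hEH
  rw [singleton_biUnion] at hle
  simp only [id] at hle
  have hsub : E ⊆ insert x (insert y E) :=
    (subset_insert _ _).trans (subset_insert _ _)
  have heq : E = insert x (insert y E) :=
    Finset.eq_of_subset_of_card_le hsub (by omega)
  refine ⟨E, hEH, ?_, ?_⟩
  · rw [heq]; exact mem_insert_self _ _
  · rw [heq]; exact mem_insert_of_mem (mem_insert_self _ _)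

lemma pair_of_two_claim {H : Finset (Finset V)} {x y : V}
    (hH : ∀ e ∈ H, e.card = 3) (h : Claims 3 2 H x y) :
    ∃ X ∈ H, ∃ Y ∈ H, X ≠ Y ∧ x ∈ X ∪ Y ∧ y ∈ X ∪ Y ∧ (X ∪ Y).card ≤ 4 := by
  obtain ⟨S, hS, hcard, hle⟩ := h
  obtain ⟨X, Y, hXY, rfl⟩ := Finset.card_eq_two.mp hcard
  have hXH : X ∈ H := hS (by simp)
  have hYH : Y ∈ H := hS (by simp)
  have hbi : ({X, Y} : Finset (Finset V)).biUnion id = X ∪ Y := by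
    simp [Finset.biUnion_insert]
  rw [hbi] at hle
  have hXc := hH X hXH; have hYc := hH Y hYH
  have hinter : (X ∩ Y).card ≤ 2 := by
    by_contra hc
    push_neg at hc
    have h1 : X.card ≤ (X ∩ Y).card := by omega
    have h2 : X ∩ Y = X := Finset.eq_of_subset_of_card_le inter_subset_left h1
    have : X ⊆ Y := by rw [← h2]; exact inter_subset_right
    exact hXY (Finset.eq_of_subset_of_card_le this (by omega))
  have hcu : (X ∪ Y).card + (X ∩ Y).card = X.card + Y.card :=
    Finset.card_union_add_card_inter X Y
  have h4 : 4 ≤ (X ∪ Y).card := by omega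
  have hle4 : (insert x (insert y (X ∪ Y))).card ≤ 4 := by
    convert hle using 2
  have hsub : X ∪ Y ⊆ insert x (insert y (X ∪ Y)) :=
    (subset_insert _ _).trans (subset_insert _ _)
  have heq : X ∪ Y = insert x (insert y (X ∪ Y)) :=
    Finset.eq_of_subset_of_card_le hsub (by omega)
  refine ⟨X, hXH, Y, hYH, hXY, ?_, ?_, by rw [heq]; omega⟩
  · rw [heq]; exact mem_insert_self _ _
  · rw [heq]; exact mem_insert_of_mem (mem_insert_self _ _)

lemma claims_two_of_witness {F : Finset (Finset V)} {x y : V} {A B : Finset V}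
    (hA : A ∈ F) (hB : B ∈ F) (hAB : A ≠ B) (hx : x ∈ A ∪ B) (hy : y ∈ A ∪ B)
    (hc : (A ∪ B).card ≤ 4) : Claims 3 2 F x y := by
  refine ⟨{A, B}, ?_, card_pair hAB, ?_⟩
  · simp only [insert_subset_iff, singleton_subset_iff]
    exact ⟨hA, hB⟩
  · have hbi : ({A, B} : Finset (Finset V)).biUnion id = A ∪ B := by simp
    rw [hbi, insert_eq_self.mpr hy, insert_eq_self.mpr hx]
    exact le_trans hc (by norm_num)

lemma no_two_claim {G F T : Finset (Finset V)} (hG : IsRGraph 3 G) (h75 : ConfigFree 7 5 G)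
    (hTG : T ⊆ G) (hTF : T ⊆ F) (hT3 : T.card = 3) (hV5 : (T.biUnion id).card ≤ 5)
    {x y : V} (hxy : x ≠ y) (hx : x ∈ T.biUnion id) (hy : y ∈ T.biUnion id) :
    ¬ Claims 3 2 (G \ F) x y := by
  intro hcl
  have hGF3 : ∀ e ∈ G \ F, e.card = 3 := fun e he => hG e (mem_sdiff.mp he).1
  obtain ⟨X, hX, Y, hY, hXY, hxU, hyU, hU4⟩ := pair_of_two_claim hGF3 hcl
  have hXG := (mem_sdiff.mp hX).1
  have hXF := (mem_sdiff.mp hX).2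
  have hYG := (mem_sdiff.mp hY).1
  have hYF := (mem_sdiff.mp hY).2
  have hYn : Y ∉ T := fun h => hYF (hTF h)
  have hXn : X ∉ insert Y T := by
    intro h
    rcases mem_insert.mp h with h | h
    · exact hXY h
    · exact hXF (hTF h)
  have hScard : (insert X (insert Y T)).card = 5 := by
    rw [card_insert_of_notMem hXn, card_insert_of_notMem hYn, hT3]
  have hSG : insert X (insert Y T) ⊆ G := by
    simp only [insert_subset_iff]
    exact ⟨hXG, hYG, hTG⟩
  have hmemxy : ∀ w, w ∈ ({x, y} : Finset V) → w ∈ T.biUnion id := by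
    intro w hw
    rcases mem_insert.mp hw with rfl | hw
    · exact hx
    · rw [mem_singleton] at hw; subst hw; exact hy
  have hxyXY : ({x, y} : Finset V) ⊆ X ∪ Y := by
    intro w hw
    rcases mem_insert.mp hw with rfl | hw
    · exact hxU
    · rw [mem_singleton] at hw; subst hw; exact hyU
  have hsdc : ((X ∪ Y) \ {x, y}).card ≤ 2 := by
    rw [card_sdiff_of_subset hxyXY, card_pair hxy]
    omega
  have hbsub : (insert X (insert Y T)).biUnion id ⊆
      (T.biUnion id) ∪ ((X ∪ Y) \ {x, y}) := by
    intro w hw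
    rw [mem_biUnion] at hw
    obtain ⟨f, hf, hwf⟩ := hw
    simp only [id] at hwf
    have key : ∀ (Z : Finset V), w ∈ Z → Z ⊆ X ∪ Y →
        w ∈ (T.biUnion id) ∪ ((X ∪ Y) \ {x, y}) := by
      intro Z hwZ hZ
      by_cases hwxy : w ∈ ({x, y} : Finset V)
      · exact mem_union_left _ (hmemxy w hwxy)
      · exact mem_union_right _ (mem_sdiff.mpr ⟨hZ hwZ, hwxy⟩)
    rcases mem_insert.mp hf with rfl | hf
    · exact key f hwf subset_union_left
    · rcases mem_insert.mp hf with rfl | hf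
      · exact key f hwf subset_union_right
      · exact mem_union_left _ (mem_biUnion.mpr ⟨f, hf, hwf⟩)
  have hBcard : ((T.biUnion id) ∪ ((X ∪ Y) \ {x, y})).card ≤ 7 :=
    le_trans (card_union_le _ _) (by omega)
  exact h75 ⟨_, hSG, hScard, le_trans (card_le_card hbsub) hBcard⟩

lemma no_one_claim_big {G F : Finset (Finset V)} (hG : IsRGraph 3 G)
    (h75 : ConfigFree 7 5 G) (hFG : F ⊆ G) (hF4 : F.card = 4)
    (hV6 : (F.biUnion id).card ≤ 6) {x y : V} (hxy : x ≠ y)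
    (hx : x ∈ F.biUnion id) (hy : y ∈ F.biUnion id) : ¬ Claims 3 1 (G \ F) x y := by
  intro hc
  have hGF3 : ∀ e ∈ G \ F, e.card = 3 := fun e he => hG e (mem_sdiff.mp he).1
  obtain ⟨E, hE, hxE, hyE⟩ := pair_of_one_claim hGF3 hc
  have hEG := (mem_sdiff.mp hE).1
  have hEF := (mem_sdiff.mp hE).2
  have hScard : (insert E F).card = 5 := by
    rw [card_insert_of_notMem hEF, hF4]
  have hSG : insert E F ⊆ G := insert_subset_iff.mpr ⟨hEG, hFG⟩
  have hxyE : ({x, y} : Finset V) ⊆ E := by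
    intro w hw
    rcases mem_insert.mp hw with rfl | hw
    · exact hxE
    · rw [mem_singleton] at hw; subst hw; exact hyE
  have hE3 : E.card = 3 := hG E hEG
  have hsdc : (E \ {x, y}).card ≤ 1 := by
    rw [card_sdiff_of_subset hxyE, card_pair hxy]
    omega
  have hbsub : (insert E F).biUnion id ⊆ (F.biUnion id) ∪ (E \ {x, y}) := by
    intro w hw
    rw [mem_biUnion] at hw
    obtain ⟨f, hf, hwf⟩ := hw
    simp only [id] at hwf
    rcases mem_insert.mp hf with rfl | hf
    · by_cases hwxy : w ∈ ({x, y} : Finset V)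
      · rcases mem_insert.mp hwxy with rfl | hwxy
        · exact mem_union_left _ hx
        · rw [mem_singleton] at hwxy; subst hwxy; exact mem_union_left _ hy
      · exact mem_union_right _ (mem_sdiff.mpr ⟨hwf, hwxy⟩)
    · exact mem_union_left _ (mem_biUnion.mpr ⟨f, hf, hwf⟩)
  have hBcard : ((F.biUnion id) ∪ (E \ {x, y})).card ≤ 7 :=
    le_trans (card_union_le _ _) (by omega)
  exact h75 ⟨_, hSG, hScard, le_trans (card_le_card hbsub) hBcard⟩



lemma tree3_pairs {T : Finset (Finset V)} (hT : IsTree 3 3 T) :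
    ∃ x1 y1 x2 y2 : V,
      x1 ≠ y1 ∧ x2 ≠ y2 ∧ x2 ≠ x1 ∧ x2 ≠ y1 ∧
      x1 ∈ T.biUnion id ∧ y1 ∈ T.biUnion id ∧ x2 ∈ T.biUnion id ∧ y2 ∈ T.biUnion id ∧
      (∀ f ∈ T, ¬(x1 ∈ f ∧ y1 ∈ f)) ∧ (∀ f ∈ T, ¬(x2 ∈ f ∧ y2 ∈ f)) ∧
      (∃ A ∈ T, ∃ B ∈ T, A ≠ B ∧ x1 ∈ A ∪ B ∧ y1 ∈ A ∪ B ∧ (A ∪ B).card ≤ 4) ∧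
      (∃ A ∈ T, ∃ B ∈ T, A ≠ B ∧ x2 ∈ A ∪ B ∧ y2 ∈ A ∪ B ∧ (A ∪ B).card ≤ 4) ∧
      T.card = 3 ∧ (T.biUnion id).card ≤ 5 := by
  cases hT with
  | extend i2 T2 hT2 a3 b3 S3 hab3 hmem3 hS3card hS3new =>
  cases hT2 with
  | extend i1 T1 hT1 a2 b2 S2 hab2 hmem2 hS2card hS2new =>
  cases hT1 with
  | extend i0 T0 hT0 x0 y0 S0 h1 h2 h3 h4 => cases hT0
  | single e1 he1 =>
  obtain ⟨v2, rfl⟩ : ∃ v, S2 = {v} := Finset.card_eq_one.mp hS2card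
  obtain ⟨v3, rfl⟩ : ∃ v, S3 = {v} := Finset.card_eq_one.mp hS3card
  set e2 : Finset V := {a2, b2} ∪ {v2} with he2def
  set e3 : Finset V := {a3, b3} ∪ {v3} with he3def
  have hab1 : a2 ∈ e1 ∧ b2 ∈ e1 := by
    obtain ⟨e', he', h1, h2⟩ := hmem2
    rw [mem_singleton] at he'
    rw [he'] at h1 h2
    exact ⟨h1, h2⟩
  obtain ⟨ha2, hb2⟩ := hab1
  have hv2 : v2 ∉ e1 := by
    have := hS2new v2 (mem_singleton_self v2)
    simpa using this
  have hv2e2 : v2 ∈ e2 := by simp [he2def]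
  have hv3e3 : v3 ∈ e3 := by simp [he3def]
  have hv3e2 : v3 ∉ e2 := fun hmem =>
    (hS3new v3 (mem_singleton_self v3)) (mem_biUnion.mpr ⟨e2, by simp, hmem⟩)
  have hv3e1 : v3 ∉ e1 := fun hmem =>
    (hS3new v3 (mem_singleton_self v3)) (mem_biUnion.mpr ⟨e1, by simp, hmem⟩)
  -- third vertex of e1
  have hsub21 : ({a2, b2} : Finset V) ⊆ e1 := by
    intro w hw; rcases mem_insert.mp hw with rfl | hw
    · exact ha2
    · rw [mem_singleton] at hw; subst hw; exact hb2
  have hcard21 : ({a2, b2} : Finset V).card = 2 := card_pair hab2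
  obtain ⟨z, hz⟩ : ∃ z, e1 \ {a2, b2} = {z} := by
    apply Finset.card_eq_one.mp
    rw [card_sdiff_of_subset hsub21, hcard21, he1]
  have hzmem : z ∈ e1 \ {a2, b2} := hz ▸ mem_singleton_self z
  have hze1 : z ∈ e1 := (mem_sdiff.mp hzmem).1
  have hzab : z ∉ ({a2, b2} : Finset V) := (mem_sdiff.mp hzmem).2
  have hza2 : z ≠ a2 := fun h => hzab (by simp [h])
  have hzb2 : z ≠ b2 := fun h => hzab (by simp [h])
  have hzv2 : z ≠ v2 := fun h => hv2 (h ▸ hze1)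
  have hze2 : z ∉ e2 := by
    simp only [he2def, mem_union, mem_insert, mem_singleton]
    push_neg
    exact ⟨⟨hza2, hzb2⟩, hzv2⟩
  -- the edge e3 hangs on
  obtain ⟨e, he, ha3, hb3⟩ := hmem3
  have hsube2 : e2 ⊆ insert v2 e1 := by
    intro w hw
    rcases mem_union.mp hw with h | h
    · rcases mem_insert.mp h with rfl | h
      · exact mem_insert_of_mem ha2
      · rw [mem_singleton] at h; subst h; exact mem_insert_of_mem hb2
    · rw [mem_singleton] at h; subst h; exact mem_insert_self _ _
  have hecard : e.card = 3 := by
    rcases mem_insert.mp he with heq | heq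
    · have hv2ab : v2 ∉ ({a2, b2} : Finset V) := by
        simp only [mem_insert, mem_singleton]
        push_neg
        exact ⟨fun h => hv2 (h ▸ ha2), fun h => hv2 (h ▸ hb2)⟩
      rw [heq, he2def, union_comm, ← insert_eq, card_insert_of_notMem hv2ab, hcard21]
    · rw [mem_singleton] at heq; rw [heq]; exact he1
  have hv3e : v3 ∉ e := by
    rcases mem_insert.mp he with heq | heq
    · rw [heq]; exact hv3e2
    · rw [mem_singleton] at heq; rw [heq]; exact hv3e1
  have hsubE : e ⊆ insert v2 e1 := by
    rcases mem_insert.mp he with heq | heq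
    · rw [heq]; exact hsube2
    · rw [mem_singleton] at heq; rw [heq]; exact subset_insert _ _
  have hsub3e : ({a3, b3} : Finset V) ⊆ e := by
    intro w hw; rcases mem_insert.mp hw with rfl | hw
    · exact ha3
    · rw [mem_singleton] at hw; subst hw; exact hb3
  have hcard3e : ({a3, b3} : Finset V).card = 2 := card_pair hab3
  obtain ⟨z', hz'⟩ : ∃ w, e \ {a3, b3} = {w} := by
    apply Finset.card_eq_one.mp
    rw [card_sdiff_of_subset hsub3e, hcard3e, hecard]
  have hz'mem : z' ∈ e \ {a3, b3} := hz' ▸ mem_singleton_self z'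
  have hz'e : z' ∈ e := (mem_sdiff.mp hz'mem).1
  have hz'ab : z' ∉ ({a3, b3} : Finset V) := (mem_sdiff.mp hz'mem).2
  have hz'v3 : z' ≠ v3 := fun h => hv3e (h ▸ hz'e)
  -- memberships of edges in T
  have he1T : e1 ∈ (insert e3 (insert e2 {e1}) : Finset (Finset V)) := by simp
  have he2T : e2 ∈ (insert e3 (insert e2 {e1}) : Finset (Finset V)) := by simp
  have he3T : e3 ∈ (insert e3 (insert e2 {e1}) : Finset (Finset V)) := by simp
  have heT : e ∈ (insert e3 (insert e2 {e1}) : Finset (Finset V)) := mem_insert_of_mem he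
  -- distinctness of special vertices
  have hv2v3 : v3 ≠ v2 := fun h => hv3e2 (h ▸ hv2e2)
  have hv3z : v3 ≠ z := fun h => hv3e1 (h ▸ hze1)
  have hv2z : v2 ≠ z := fun h => hv2 (h ▸ hze1)
  refine ⟨v2, z, v3, z', fun h => hv2z h, fun h => hz'v3 h.symm, hv2v3, hv3z,
    mem_biUnion.mpr ⟨e2, he2T, hv2e2⟩, mem_biUnion.mpr ⟨e1, he1T, hze1⟩,
    mem_biUnion.mpr ⟨e3, he3T, hv3e3⟩, mem_biUnion.mpr ⟨e, heT, hz'e⟩,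
    ?_, ?_, ?_, ?_, ?_, ?_⟩
  · -- no edge contains both v2 and z
    rintro f hf ⟨hv2f, hzf⟩
    rcases mem_insert.mp hf with rfl | hf
    · -- f = e3
      have hv2ab3 : v2 = a3 ∨ v2 = b3 := by
        rcases mem_union.mp hv2f with h | h
        · rcases mem_insert.mp h with h | h
          · exact Or.inl h
          · exact Or.inr (mem_singleton.mp h)
        · exact absurd (mem_singleton.mp h).symm hv2v3
      have hzab3 : z = a3 ∨ z = b3 := by
        rcases mem_union.mp hzf with h | h
        · rcases mem_insert.mp h with h | h
          · exact Or.inl h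
          · exact Or.inr (mem_singleton.mp h)
        · exact absurd (mem_singleton.mp h).symm hv3z
      rcases mem_insert.mp he with heq | heq
      · -- e = e2 : z ∈ e2, contradiction
        apply hze2
        rw [← heq]
        rcases hzab3 with h | h
        · rw [h]; exact ha3
        · rw [h]; exact hb3
      · -- e = e1 : v2 ∈ e1, contradiction
        rw [mem_singleton] at heq
        apply hv2
        rw [← heq]
        rcases hv2ab3 with h | h
        · rw [h]; exact ha3
        · rw [h]; exact hb3
    · rcases mem_insert.mp hf with hf | hf
      · rw [hf] at hzf; exact hze2 hzf
      · rw [mem_singleton] at hf; rw [hf] at hv2f; exact hv2 hv2f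
  · -- no edge contains both v3 and z'
    rintro f hf ⟨hv3f, hz'f⟩
    rcases mem_insert.mp hf with rfl | hf
    · rcases mem_union.mp hz'f with h | h
      · exact hz'ab h
      · exact hz'v3 (mem_singleton.mp h)
    · rcases mem_insert.mp hf with hf | hf
      · rw [hf] at hv3f; exact hv3e2 hv3f
      · rw [mem_singleton] at hf; rw [hf] at hv3f; exact hv3e1 hv3f
  · -- witnesses for {v2, z}
    refine ⟨e1, he1T, e2, he2T, ?_, mem_union_right _ hv2e2, mem_union_left _ hze1, ?_⟩
    · intro h; rw [h] at hv2; exact hv2 hv2e2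
    · have hsub : e1 ∪ e2 ⊆ insert v2 e1 := by
        intro w hw
        rcases mem_union.mp hw with h | h
        · exact mem_insert_of_mem h
        · exact hsube2 h
      calc (e1 ∪ e2).card ≤ (insert v2 e1).card := card_le_card hsub
        _ ≤ e1.card + 1 := card_insert_le _ _
        _ ≤ 4 := by omega
  · -- witnesses for {v3, z'}
    refine ⟨e, heT, e3, he3T, ?_, mem_union_right _ hv3e3, mem_union_left _ hz'e, ?_⟩
    · intro h; rw [h] at hv3e; exact hv3e hv3e3
    · have hsub : e ∪ e3 ⊆ insert v3 e := by
        intro w hw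
        rcases mem_union.mp hw with h | h
        · exact mem_insert_of_mem h
        · rcases mem_union.mp h with h | h
          · exact mem_insert_of_mem (hsub3e h)
          · rw [mem_singleton] at h; subst h; exact mem_insert_self _ _
      calc (e ∪ e3).card ≤ (insert v3 e).card := card_le_card hsub
        _ ≤ e.card + 1 := card_insert_le _ _
        _ ≤ 4 := by omega
  · -- T.card = 3
    have h21 : e2 ∉ ({e1} : Finset (Finset V)) := by
      rw [mem_singleton]; intro h; rw [← h] at hv2; exact hv2 hv2e2
    have h3 : e3 ∉ (insert e2 {e1} : Finset (Finset V)) := by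
      intro h
      rcases mem_insert.mp h with h | h
      · rw [h] at hv3e3; exact hv3e2 hv3e3
      · rw [mem_singleton] at h; rw [h] at hv3e3; exact hv3e1 hv3e3
    rw [card_insert_of_notMem h3, card_insert_of_notMem h21, card_singleton]
  · -- biUnion card ≤ 5
    have hsub : ((insert e3 (insert e2 {e1}) : Finset (Finset V))).biUnion id ⊆ insert v3 (insert v2 e1) := by
      intro w hw
      rw [mem_biUnion] at hw
      obtain ⟨f, hf, hwf⟩ := hw
      simp only [id] at hwf
      rcases mem_insert.mp hf with rfl | hf
      · rcases mem_union.mp hwf with h | h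
        · exact mem_insert_of_mem (hsubE (hsub3e h))
        · rw [mem_singleton] at h; subst h; exact mem_insert_self _ _
      · rcases mem_insert.mp hf with hf | hf
        · rw [hf] at hwf; exact mem_insert_of_mem (hsube2 hwf)
        · rw [mem_singleton] at hf; rw [hf] at hwf
          exact mem_insert_of_mem (mem_insert_of_mem hwf)
    calc (((insert e3 (insert e2 {e1}) : Finset (Finset V))).biUnion id).card
        ≤ (insert v3 (insert v2 e1)).card := card_le_card hsub
      _ ≤ (insert v2 e1).card + 1 := card_insert_le _ _
      _ ≤ (e1.card + 1) + 1 := by have := card_insert_le v2 e1; omega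
      _ ≤ 5 := by omega

end Aux

/-- If `G` is a `3`-graph with no `(4,3)`-, `(5,4)`- or `(7,5)`-configuration and `F` is a
maximal connected subgraph of `G` which is an `i`-tree with `i ∈ {3,4}`, then some pair is
`⟨1,2⟩`-claimed by `F` but neither `1`-claimed nor `2`-claimed by `G ∖ F`. -/
theorem deficit_pair {V : Type*} [DecidableEq V]
    (G : Finset (Finset V)) (hG : IsRGraph 3 G)
    (h43 : ConfigFree 4 3 G) (h54 : ConfigFree 5 4 G) (h75 : ConfigFree 7 5 G)
    (F : Finset (Finset V)) (hFG : F ⊆ G) (hFne : F.Nonempty) (hFconn : Connected F)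
    (hFmax : ∀ F', F ⊆ F' → F' ⊆ G → Connected F' → F' = F)
    (i : ℕ) (hi : i = 3 ∨ i = 4) (hFtree : IsTree 3 i F) :
    ∃ x y : V, x ≠ y ∧
      Claims 3 2 F x y ∧ ¬ Claims 3 1 F x y ∧
      ¬ Claims 3 1 (G \ F) x y ∧ ¬ Claims 3 2 (G \ F) x y := by
  have hGF3 : ∀ e ∈ G \ F, e.card = 3 := fun e he => hG e (mem_sdiff.mp he).1
  have hF3 : ∀ e ∈ F, e.card = 3 := fun e he => hG e (hFG he)
  rcases hi with rfl | rfl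
  · -- i = 3
    obtain ⟨x1, y1, x2, y2, hxy1, hxy2, hne1, hne2, hx1m, hy1m, hx2m, hy2m,
      ncov1, ncov2, ⟨A1, hA1, B1, hB1, hAB1, hx1U, hy1U, hU1⟩,
      ⟨A2, hA2, B2, hB2, hAB2, hx2U, hy2U, hU2⟩, hTcard, hVcard⟩ := tree3_pairs hFtree
    have hno2 : ∀ x y : V, x ≠ y → x ∈ F.biUnion id → y ∈ F.biUnion id →
        ¬ Claims 3 2 (G \ F) x y :=
      fun x y hxy hx hy => no_two_claim hG h75 hFG Subset.rfl hTcard hVcard hxy hx hy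
    have hkill54 : ∀ E ∈ G \ F, ¬ (E ⊆ F.biUnion id) := by
      intro E hE hsubE
      have hEF := (mem_sdiff.mp hE).2
      have hSG : insert E F ⊆ G := insert_subset_iff.mpr ⟨(mem_sdiff.mp hE).1, hFG⟩
      have hScard : (insert E F).card = 4 := by
        rw [card_insert_of_notMem hEF, hTcard]
      have hbi : (insert E F).biUnion id ⊆ F.biUnion id := by
        intro w hw
        rw [mem_biUnion] at hw
        obtain ⟨f, hf, hwf⟩ := hw
        simp only [id] at hwf
        rcases mem_insert.mp hf with rfl | hf
        · exact hsubE hwf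
        · exact mem_biUnion.mpr ⟨f, hf, hwf⟩
      exact h54 ⟨_, hSG, hScard, le_trans (card_le_card hbi) hVcard⟩
    have hnoboth : ¬ (Claims 3 1 (G \ F) x1 y1 ∧ Claims 3 1 (G \ F) x2 y2) := by
      rintro ⟨h1, h2⟩
      obtain ⟨E1, hE1, hx1E, hy1E⟩ := pair_of_one_claim hGF3 h1
      obtain ⟨E2, hE2, hx2E, hy2E⟩ := pair_of_one_claim hGF3 h2
      have hE13 : E1.card = 3 := hGF3 E1 hE1
      have hE23 : E2.card = 3 := hGF3 E2 hE2
      have hE1ns := hkill54 E1 hE1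
      have hE2ns := hkill54 E2 hE2
      have hE1E2 : E1 ≠ E2 := by
        intro h
        subst h
        have h3sub : ({x1, y1, x2} : Finset V) ⊆ E1 := by
          intro w hw
          rcases mem_insert.mp hw with rfl | hw
          · exact hx1E
          · rcases mem_insert.mp hw with rfl | hw
            · exact hy1E
            · rw [mem_singleton] at hw; subst hw; exact hx2E
        have h1n : y1 ∉ ({x2} : Finset V) := by
          rw [mem_singleton]; exact fun h => hne2 h.symm
        have h2n : x1 ∉ ({y1, x2} : Finset V) := by
          intro h
          rcases mem_insert.mp h with h | h
          · exact hxy1 h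
          · rw [mem_singleton] at h; exact hne1 h.symm
        have hc3 : ({x1, y1, x2} : Finset V).card = 3 := by
          rw [card_insert_of_notMem h2n, card_insert_of_notMem h1n, card_singleton]
        have hEeq : ({x1, y1, x2} : Finset V) = E1 :=
          Finset.eq_of_subset_of_card_le h3sub (by omega)
        apply hE1ns
        rw [← hEeq]
        intro w hw
        rcases mem_insert.mp hw with rfl | hw
        · exact hx1m
        · rcases mem_insert.mp hw with rfl | hw
          · exact hy1m
          · rw [mem_singleton] at hw; subst hw; exact hx2m
      have hE1F := (mem_sdiff.mp hE1).2
      have hE2F := (mem_sdiff.mp hE2).2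
      have hE1n : E1 ∉ insert E2 F := by
        intro h
        rcases mem_insert.mp h with h | h
        · exact hE1E2 h
        · exact hE1F h
      have hScard : (insert E1 (insert E2 F)).card = 5 := by
        rw [card_insert_of_notMem hE1n, card_insert_of_notMem hE2F, hTcard]
      have hSG : insert E1 (insert E2 F) ⊆ G := by
        simp only [insert_subset_iff]
        exact ⟨(mem_sdiff.mp hE1).1, (mem_sdiff.mp hE2).1, hFG⟩
      have hxy1E : ({x1, y1} : Finset V) ⊆ E1 := by
        intro w hw
        rcases mem_insert.mp hw with rfl | hw
        · exact hx1E
        · rw [mem_singleton] at hw; subst hw; exact hy1E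
      have hxy2E : ({x2, y2} : Finset V) ⊆ E2 := by
        intro w hw
        rcases mem_insert.mp hw with rfl | hw
        · exact hx2E
        · rw [mem_singleton] at hw; subst hw; exact hy2E
      have hsd1 : (E1 \ {x1, y1}).card ≤ 1 := by
        rw [card_sdiff_of_subset hxy1E, card_pair hxy1]; omega
      have hsd2 : (E2 \ {x2, y2}).card ≤ 1 := by
        rw [card_sdiff_of_subset hxy2E, card_pair hxy2]; omega
      have hbsub : (insert E1 (insert E2 F)).biUnion id ⊆
          (F.biUnion id ∪ (E1 \ {x1, y1})) ∪ (E2 \ {x2, y2}) := by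
        intro w hw
        rw [mem_biUnion] at hw
        obtain ⟨f, hf, hwf⟩ := hw
        simp only [id] at hwf
        rcases mem_insert.mp hf with rfl | hf
        · by_cases hwxy : w ∈ ({x1, y1} : Finset V)
          · apply mem_union_left
            apply mem_union_left
            rcases mem_insert.mp hwxy with rfl | hwxy
            · exact hx1m
            · rw [mem_singleton] at hwxy; subst hwxy; exact hy1m
          · exact mem_union_left _ (mem_union_right _ (mem_sdiff.mpr ⟨hwf, hwxy⟩))
        · rcases mem_insert.mp hf with rfl | hf
          · by_cases hwxy : w ∈ ({x2, y2} : Finset V)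
            · apply mem_union_left
              apply mem_union_left
              rcases mem_insert.mp hwxy with rfl | hwxy
              · exact hx2m
              · rw [mem_singleton] at hwxy; subst hwxy; exact hy2m
            · exact mem_union_right _ (mem_sdiff.mpr ⟨hwf, hwxy⟩)
          · exact mem_union_left _ (mem_union_left _ (mem_biUnion.mpr ⟨f, hf, hwf⟩))
      have hBcard : ((F.biUnion id ∪ (E1 \ {x1, y1})) ∪ (E2 \ {x2, y2})).card ≤ 7 := by
        have g1 := card_union_le (F.biUnion id) (E1 \ {x1, y1})
        have g2 := card_union_le (F.biUnion id ∪ (E1 \ {x1, y1})) (E2 \ {x2, y2})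
        omega
      exact h75 ⟨_, hSG, hScard, le_trans (card_le_card hbsub) hBcard⟩
    by_cases hcl1 : Claims 3 1 (G \ F) x1 y1
    · refine ⟨x2, y2, hxy2, claims_two_of_witness hA2 hB2 hAB2 hx2U hy2U hU2, ?_,
        fun h => hnoboth ⟨hcl1, h⟩, hno2 x2 y2 hxy2 hx2m hy2m⟩
      intro hc
      obtain ⟨E, hE, ha, hb⟩ := pair_of_one_claim hF3 hc
      exact ncov2 E hE ⟨ha, hb⟩
    · refine ⟨x1, y1, hxy1, claims_two_of_witness hA1 hB1 hAB1 hx1U hy1U hU1, ?_,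
        hcl1, hno2 x1 y1 hxy1 hx1m hy1m⟩
      intro hc
      obtain ⟨E, hE, ha, hb⟩ := pair_of_one_claim hF3 hc
      exact ncov1 E hE ⟨ha, hb⟩
  · -- i = 4
    cases hFtree with
    | extend i3 T hT a4 b4 S4 hab4 hmem4 hS4card hS4new =>
    obtain ⟨v4, rfl⟩ : ∃ v, S4 = {v} := Finset.card_eq_one.mp hS4card
    obtain ⟨x1, y1, x2, y2, hxy1, hxy2, hne1, hne2, hx1m, hy1m, hx2m, hy2m,
      ncov1, ncov2, ⟨A1, hA1, B1, hB1, hAB1, hx1U, hy1U, hU1⟩, -, hTcard, hVcard⟩ :=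
      tree3_pairs hT
    have hv4 : v4 ∉ T.biUnion id := by
      simpa using hS4new v4 (mem_singleton_self v4)
    have hv4e4 : v4 ∈ ({a4, b4} ∪ {v4} : Finset V) := by simp
    have he4T : ({a4, b4} ∪ {v4} : Finset V) ∉ T :=
      fun h => hv4 (mem_biUnion.mpr ⟨_, h, hv4e4⟩)
    have hab4T : a4 ∈ T.biUnion id ∧ b4 ∈ T.biUnion id := by
      obtain ⟨e, he, h1, h2⟩ := hmem4
      exact ⟨mem_biUnion.mpr ⟨e, he, h1⟩, mem_biUnion.mpr ⟨e, he, h2⟩⟩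
    have hFcard : (insert ({a4, b4} ∪ {v4}) T).card = 4 := by
      rw [card_insert_of_notMem he4T, hTcard]
    have hVF : (insert ({a4, b4} ∪ {v4}) T).biUnion id ⊆ insert v4 (T.biUnion id) := by
      intro w hw
      rw [mem_biUnion] at hw
      obtain ⟨f, hf, hwf⟩ := hw
      simp only [id] at hwf
      rcases mem_insert.mp hf with rfl | hf
      · rcases mem_union.mp hwf with h | h
        · rcases mem_insert.mp h with rfl | h
          · exact mem_insert_of_mem hab4T.1
          · rw [mem_singleton] at h; subst h; exact mem_insert_of_mem hab4T.2
        · rw [mem_singleton] at h; subst h; exact mem_insert_self _ _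
      · exact mem_insert_of_mem (mem_biUnion.mpr ⟨f, hf, hwf⟩)
    have hVF6 : ((insert ({a4, b4} ∪ {v4}) T).biUnion id).card ≤ 6 := by
      have := card_insert_le v4 (T.biUnion id)
      have := card_le_card hVF
      omega
    have hV3F : T.biUnion id ⊆ (insert ({a4, b4} ∪ {v4}) T).biUnion id := by
      intro w hw
      rw [mem_biUnion] at hw
      obtain ⟨f, hf, hwf⟩ := hw
      exact mem_biUnion.mpr ⟨f, mem_insert_of_mem hf, hwf⟩
    refine ⟨x1, y1, hxy1,
      claims_two_of_witness (mem_insert_of_mem hA1) (mem_insert_of_mem hB1)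
        hAB1 hx1U hy1U hU1, ?_, ?_, ?_⟩
    · intro hc
      obtain ⟨E, hE, ha, hb⟩ := pair_of_one_claim hF3 hc
      rcases mem_insert.mp hE with rfl | hE
      · have hx1ab : x1 = a4 ∨ x1 = b4 := by
          rcases mem_union.mp ha with h | h
          · rcases mem_insert.mp h with h | h
            · exact Or.inl h
            · exact Or.inr (mem_singleton.mp h)
          · rw [mem_singleton] at h; subst h; exact absurd hx1m hv4
        have hy1ab : y1 = a4 ∨ y1 = b4 := by
          rcases mem_union.mp hb with h | h
          · rcases mem_insert.mp h with h | h
            · exact Or.inl h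
            · exact Or.inr (mem_singleton.mp h)
          · rw [mem_singleton] at h; subst h; exact absurd hy1m hv4
        obtain ⟨e, he, he1, he2⟩ := hmem4
        rcases hx1ab with h | h <;> rcases hy1ab with h' | h'
        · exact hxy1 (h.trans h'.symm)
        · exact ncov1 e he ⟨by rw [h]; exact he1, by rw [h']; exact he2⟩
        · exact ncov1 e he ⟨by rw [h]; exact he2, by rw [h']; exact he1⟩
        · exact hxy1 (h.trans h'.symm)
      · exact ncov1 E hE ⟨ha, hb⟩
    · exact no_one_claim_big hG h75 hFG hFcard hVF6 hxy1 (hV3F hx1m) (hV3F hy1m)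
    · exact no_two_claim hG h75 (fun f hf => hFG (mem_insert_of_mem hf))
        (subset_insert _ _) hTcard hVcard hxy1 hx1m hy1m
end

section
/- For all integers r ≥ 3 and n ≥ 2, every G^{(r)}_5-free r-graph on n vertices has at most (2/(r²-r-1))·C(n,2) edges. -/
open Finset

/-!
Call two edges linked when they share two vertices. Freeness says that `k` edges, `2 ≤ k ≤ 4`,
span at least `(r-2)k+2` vertices, and that no five edges span at most `5r-8`. An edge attached
to a linked set adds at most `r-2` new vertices, so a linked component has at most four edges and
each new edge meets the earlier ones in exactly two vertices; hence a component with `k` edges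
covers at least `k·C(r,2) - k + 1` pairs of vertices, and distinct components cover disjoint pairs.
The bound then reduces to `|G| ≤ 2·#components + 2·#uncovered pairs`, i.e. to paying for the
components with three or four edges. Such a component has a hole: a pair spanned by two of its
edges but contained in none of them. Distinct such components have distinct holes, the hole of a
four-edge component lies in no edge of `G`, and the hole of a three-edge component is either
uncovered or lies in an isolated edge, which serves no other component.
-/

namespace RGraph

variable {V : Type*} [DecidableEq V] {r : ℕ} {S T : Finset (Finset V)} {e f : Finset V}

def span (S : Finset (Finset V)) : Finset V := S.biUnion id

lemma subset_span (he : e ∈ S) : e ⊆ span S := subset_biUnion_of_mem id he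

lemma span_mono (h : S ⊆ T) : span S ⊆ span T := biUnion_subset_biUnion_of_subset_left _ h

lemma span_union : span (S ∪ T) = span S ∪ span T := union_biUnion

lemma span_singleton : span {e} = e := singleton_biUnion

lemma span_insert : span (insert e S) = e ∪ span S := biUnion_insert

lemma two_le_card_inter {p s t : Finset V} (hp : #p = 2) (hs : p ⊆ s) (ht : p ⊆ t) :
    2 ≤ #(s ∩ t) :=
  hp ▸ card_le_card (subset_inter hs ht)

/-- `S` spans at most `(r - 2) * #S + 2` vertices (written without truncated subtraction). -/
def IsTight (r : ℕ) (S : Finset (Finset V)) : Prop :=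
  #(span S) + 2 * #S ≤ r * #S + 2

lemma isTight_singleton (he : #e = r) : IsTight r {e} := by
  simp [IsTight, span_singleton, he]

lemma IsTight.union (hS : IsTight r S) (hT : IsTight r T) (hST : Disjoint S T)
    (h : 2 ≤ #(span S ∩ span T)) : IsTight r (S ∪ T) := by
  have := card_union_add_card_inter (span S) (span T)
  unfold IsTight at *
  rw [span_union, card_union_of_disjoint hST]
  simp only [mul_add]
  omega

lemma IsTight.insert (hS : IsTight r S) (he : #e = r) (heS : e ∉ S)
    (h : 2 ≤ #(e ∩ span S)) : IsTight r (insert e S) := by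
  rw [insert_eq]
  refine (isTight_singleton he).union hS (disjoint_singleton_left.mpr heS) ?_
  rwa [span_singleton]

inductive Linked : Finset (Finset V) → Prop
  | singleton (e : Finset V) : Linked {e}
  | insert {S : Finset (Finset V)} {f a : Finset V} :
      Linked S → f ∉ S → a ∈ S → 2 ≤ #(a ∩ f) → Linked (insert f S)

lemma Linked.nonempty (hS : Linked S) : S.Nonempty := by
  cases hS with
  | singleton e => exact singleton_nonempty e
  | insert => exact insert_nonempty _ _

lemma Linked.isTight (hS : Linked S) (hr : ∀ e ∈ S, #e = r) : IsTight r S := by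
  induction hS with
  | singleton e => exact isTight_singleton (hr e (mem_singleton_self e))
  | @insert S f a _ hf ha h2 ih =>
    refine (ih fun e he => hr e (mem_insert_of_mem he)).insert (hr f (mem_insert_self f S)) hf ?_
    exact h2.trans <| card_le_card <|
      subset_inter inter_subset_right (inter_subset_left.trans (subset_span ha))

def coveredPairs (S : Finset (Finset V)) : Finset (Finset V) := S.biUnion (powersetCard 2)

lemma mem_coveredPairs {p : Finset V} :
    p ∈ coveredPairs S ↔ #p = 2 ∧ ∃ e ∈ S, p ⊆ e := by
  simp only [coveredPairs, mem_biUnion, mem_powersetCard]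
  grind

lemma exists_pair_not_subset {a b : Finset V} (hab : a ≠ b) (hcard : #a = #b) :
    ∃ p, #p = 2 ∧ p ⊆ a ∪ b ∧ ¬ p ⊆ a ∧ ¬ p ⊆ b := by
  obtain ⟨x, hxa, hxb⟩ := not_subset.mp fun h => hab (eq_of_subset_of_card_le h hcard.ge)
  obtain ⟨y, hyb, hya⟩ := not_subset.mp fun h => hab (eq_of_subset_of_card_le h hcard.le).symm
  have hxy : x ≠ y := by rintro rfl; exact hxb hyb
  refine ⟨{x, y}, card_pair hxy, ?_, ?_, ?_⟩
  · exact insert_subset (mem_union_left _ hxa) (singleton_subset_iff.mpr (mem_union_right _ hyb))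
  · exact fun h => hya (h (mem_insert_of_mem (mem_singleton_self y)))
  · exact fun h => hxb (h (mem_insert_self x {y}))

def IsHole (r : ℕ) (K : Finset (Finset V)) (p : Finset V) : Prop :=
  #p = 2 ∧ (∀ e ∈ K, ¬ p ⊆ e) ∧ ∃ T ⊆ K, #T = 2 ∧ IsTight r T ∧ p ⊆ span T

lemma IsHole.subset_span {K : Finset (Finset V)} {p : Finset V} (hp : IsHole r K p) :
    p ⊆ span K := by
  obtain ⟨-, -, T, hTK, -, -, hpT⟩ := hp
  exact hpT.trans (span_mono hTK)

def linkGraph (G : Finset (Finset V)) : SimpleGraph (Finset V) where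
  Adj e f := e ∈ G ∧ f ∈ G ∧ e ≠ f ∧ 2 ≤ #(e ∩ f)
  symm := ⟨fun _ _ ⟨he, hf, hef, h2⟩ => ⟨hf, he, hef.symm, by rwa [inter_comm]⟩⟩
  loopless := ⟨fun _ h => h.2.2.1 rfl⟩

variable {G : Finset (Finset V)} {c c₁ c₂ : (linkGraph G).ConnectedComponent}

lemma linkGraph_adj :
    (linkGraph G).Adj e f ↔ e ∈ G ∧ f ∈ G ∧ e ≠ f ∧ 2 ≤ #(e ∩ f) := Iff.rfl

open Classical in
noncomputable def component (G : Finset (Finset V)) (c : (linkGraph G).ConnectedComponent) :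
    Finset (Finset V) :=
  {e ∈ G | (linkGraph G).connectedComponentMk e = c}

lemma mem_component :
    e ∈ component G c ↔ e ∈ G ∧ (linkGraph G).connectedComponentMk e = c := by
  classical
  simp only [component, mem_filter]

lemma component_subset : component G c ⊆ G := fun _ he => (mem_component.mp he).1

lemma mem_component_of_adj (he : e ∈ component G c) (hef : (linkGraph G).Adj e f) :
    f ∈ component G c := by
  rw [mem_component] at he ⊢
  exact ⟨(linkGraph_adj.mp hef).2.1,
    (SimpleGraph.ConnectedComponent.connectedComponentMk_eq_of_adj hef).symm.trans he.2⟩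

lemma eq_of_mem_component (h₁ : e ∈ component G c₁) (h₂ : e ∈ component G c₂) :
    c₁ = c₂ :=
  (mem_component.mp h₁).2.symm.trans (mem_component.mp h₂).2

lemma disjoint_component (h : c₁ ≠ c₂) : Disjoint (component G c₁) (component G c₂) :=
  disjoint_left.mpr fun _ h₁ h₂ => h (eq_of_mem_component h₁ h₂)

lemma exists_adj_of_mem_sdiff (hS : S ⊆ component G c) (hne : S.Nonempty)
    (hf : f ∈ component G c) (hfS : f ∉ S) :
    ∃ a ∈ S, ∃ b ∈ component G c, b ∉ S ∧ (linkGraph G).Adj a b := by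
  obtain ⟨a, ha⟩ := hne
  have hreach : (linkGraph G).Reachable a f := SimpleGraph.ConnectedComponent.exact <|
    (mem_component.mp (hS ha)).2.trans (mem_component.mp hf).2.symm
  obtain ⟨d, -, hdS, hdS'⟩ := hreach.some.exists_boundary_dart (S : Set (Finset V)) ha hfS
  have hdc : d.fst ∈ component G c := hS hdS
  exact ⟨d.fst, hdS, d.snd, mem_component_of_adj hdc d.adj, hdS', d.adj⟩

lemma exists_linked_subset {t : ℕ} (ht1 : 1 ≤ t) (ht : t ≤ #(component G c)) :
    ∃ S ⊆ component G c, #S = t ∧ Linked S := by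
  induction t, ht1 using Nat.le_induction with
  | base =>
    obtain ⟨e, he⟩ := card_pos.mp ht
    exact ⟨{e}, singleton_subset_iff.mpr he, card_singleton e, Linked.singleton e⟩
  | succ t ht1 ih =>
    obtain ⟨S, hS, hSt, hSl⟩ := ih (by omega)
    obtain ⟨f, hf, hfS⟩ := exists_mem_notMem_of_card_lt_card (hSt ▸ ht : #S < _)
    obtain ⟨a, ha, b, hb, hbS, hab⟩ := exists_adj_of_mem_sdiff hS hSl.nonempty hf hfS
    exact ⟨insert b S, insert_subset hb hS, by rw [card_insert_of_notMem hbS, hSt],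
      hSl.insert hbS ha (linkGraph_adj.mp hab).2.2.2⟩

lemma linked_component (hne : (component G c).Nonempty) : Linked (component G c) := by
  obtain ⟨S, hSc, hS, hSl⟩ := exists_linked_subset (c := c) hne.card_pos le_rfl
  rwa [← eq_of_subset_of_card_le hSc hS.ge]

lemma isTight_component (hG : IsRGraph r G) : IsTight r (component G c) := by
  obtain hemp | hne := (component G c).eq_empty_or_nonempty
  · simp [IsTight, hemp, span]
  · exact (linked_component hne).isTight fun e he => hG e (component_subset he)

lemma exists_isTight_insert (hG : IsRGraph r G) (hS : S ⊆ component G c) (hT : IsTight r S)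
    (hne : S.Nonempty) (hlt : #S < #(component G c)) :
    ∃ b ∈ component G c, b ∉ S ∧ IsTight r (insert b S) := by
  obtain ⟨f, hf, hfS⟩ := exists_mem_notMem_of_card_lt_card hlt
  obtain ⟨a, ha, b, hb, hbS, hab⟩ := exists_adj_of_mem_sdiff hS hne hf hfS
  obtain ⟨-, hbG, -, h2⟩ := linkGraph_adj.mp hab
  refine ⟨b, hb, hbS, hT.insert (hG b hbG) hbS (h2.trans (card_le_card ?_))⟩
  exact inter_comm a b ▸ inter_subset_inter_left (subset_span ha)

lemma component_eq_singleton (he : e ∈ G) (hiso : ∀ f, ¬ (linkGraph G).Adj e f) :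
    component G ((linkGraph G).connectedComponentMk e) = {e} := by
  ext f
  rw [mem_component, mem_singleton, SimpleGraph.ConnectedComponent.eq]
  constructor
  · rintro ⟨-, hfe⟩
    obtain ⟨w⟩ := hfe.symm
    cases w with
    | nil => rfl
    | cons h _ => exact absurd h (hiso _)
  · rintro rfl
    exact ⟨he, SimpleGraph.Reachable.rfl⟩

open Classical in
noncomputable def components (G : Finset (Finset V)) : Finset (linkGraph G).ConnectedComponent :=
  G.image (linkGraph G).connectedComponentMk

lemma mem_components_of_mem (he : e ∈ G) :
    (linkGraph G).connectedComponentMk e ∈ components G := by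
  classical
  exact mem_image_of_mem _ he

lemma nonempty_component_of_mem_components (hc : c ∈ components G) :
    (component G c).Nonempty := by
  classical
  obtain ⟨e, he, rfl⟩ := mem_image.mp hc
  exact ⟨e, mem_component.mpr ⟨he, rfl⟩⟩

lemma card_eq_sum_card_component : #G = ∑ c ∈ components G, #(component G c) := by
  classical
  rw [card_eq_sum_card_image (linkGraph G).connectedComponentMk G, components]
  congr! 2 with c

lemma card_coveredPairs_eq_sum :
    #(coveredPairs G) = ∑ c ∈ components G, #(coveredPairs (component G c)) := by
  classical
  have hG : coveredPairs G = (components G).biUnion fun c => coveredPairs (component G c) := by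
    ext p
    simp only [mem_biUnion, mem_coveredPairs, mem_component]
    constructor
    · rintro ⟨hp, e, he, hpe⟩
      exact ⟨_, mem_components_of_mem he, hp, e, ⟨he, rfl⟩, hpe⟩
    · rintro ⟨c, -, hp, e, ⟨he, -⟩, hpe⟩
      exact ⟨hp, e, he, hpe⟩
  rw [hG, card_biUnion]
  intro c₁ _ c₂ _ hne
  refine disjoint_left.mpr fun p hp₁ hp₂ => hne ?_
  obtain ⟨hp, e₁, he₁, hpe₁⟩ := mem_coveredPairs.mp hp₁
  obtain ⟨-, e₂, he₂, hpe₂⟩ := mem_coveredPairs.mp hp₂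
  obtain rfl | hne₁₂ := eq_or_ne e₁ e₂
  · exact eq_of_mem_component he₁ he₂
  · have hadj : (linkGraph G).Adj e₁ e₂ :=
      linkGraph_adj.mpr ⟨component_subset he₁, component_subset he₂, hne₁₂,
        two_le_card_inter hp hpe₁ hpe₂⟩
    exact eq_of_mem_component (mem_component_of_adj he₁ hadj) he₂

lemma card_add_card_filter_eq_one_le (h4 : ∀ c, #(component G c) ≤ 4) :
    #G + #{c ∈ components G | #(component G c) = 1} ≤
      2 * #(components G) + #{c ∈ components G | 3 ≤ #(component G c)} +
        #{c ∈ components G | #(component G c) = 4} := by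
  rw [card_eq_sum_card_component, card_filter, card_filter, card_filter,
    card_eq_sum_ones (components G), mul_sum, ← sum_add_distrib, ← sum_add_distrib,
    ← sum_add_distrib]
  refine sum_le_sum fun c hc => ?_
  have := (nonempty_component_of_mem_components hc).card_pos
  have := h4 c
  split_ifs <;> omega

section Fintype

variable [Fintype V]

def uncoveredPairs (G : Finset (Finset V)) : Finset (Finset V) :=
  powersetCard 2 univ \ coveredPairs G

lemma mem_uncoveredPairs {p : Finset V} :
    p ∈ uncoveredPairs G ↔ #p = 2 ∧ ∀ e ∈ G, ¬ p ⊆ e := by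
  simp only [uncoveredPairs, mem_sdiff, mem_powersetCard, mem_coveredPairs, subset_univ, true_and]
  grind

lemma card_coveredPairs_add_card_uncoveredPairs :
    #(coveredPairs G) + #(uncoveredPairs G) = (Fintype.card V).choose 2 := by
  have hsub : coveredPairs G ⊆ powersetCard 2 univ := fun p hp =>
    mem_powersetCard.mpr ⟨subset_univ p, (mem_coveredPairs.mp hp).1⟩
  rw [uncoveredPairs, add_comm, card_sdiff_add_card_eq_card hsub, card_powersetCard, card_univ]

end Fintype

end RGraph

namespace GFree

open RGraph

variable {V : Type*} [DecidableEq V] {r : ℕ} {G S K : Finset (Finset V)}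
  {a f h p p₁ p₂ : Finset V} {c c₁ c₂ : (linkGraph G).ConnectedComponent}

lemma le_card_span (hfree : GFree r 5 G) (hS : S ⊆ G) (h2 : 2 ≤ #S) (h4 : #S ≤ 4) :
    r * #S + 2 ≤ #(span S) + 2 * #S := by
  by_contra! h
  exact hfree.2 #S h2 (by omega) ⟨S, hS, rfl, by unfold span at h; omega⟩

lemma not_isTight_of_card_eq_five (hfree : GFree r 5 G) (hS : S ⊆ G) (h5 : #S = 5) :
    ¬ IsTight r S := fun h =>
  hfree.1 ⟨S, hS, h5, by unfold IsTight span at h; rw [h5] at h; omega⟩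

variable (hG : IsRGraph r G) (hfree : GFree r 5 G)
include hG hfree

lemma card_inter_span_le_two (hS : S ⊆ G) (hT : IsTight r S) (hne : S.Nonempty) (h3 : #S ≤ 3)
    (hf : f ∈ G) (hfS : f ∉ S) : #(f ∩ span S) ≤ 2 := by
  have hlow := hfree.le_card_span (insert_subset hf hS)
    (by rw [card_insert_of_notMem hfS]; have := hne.card_pos; omega)
    (by rw [card_insert_of_notMem hfS]; omega)
  have := card_union_add_card_inter f (span S)
  rw [span_insert, card_insert_of_notMem hfS, mul_add] at hlow
  rw [hG f hf] at this
  unfold IsTight at hT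
  omega

lemma inter_span_subset (hS : S ⊆ G) (hT : IsTight r S) (h3 : #S ≤ 3) (hf : f ∈ G)
    (hfS : f ∉ S) (ha : a ∈ S) (h2 : 2 ≤ #(a ∩ f)) : f ∩ span S ⊆ a := by
  have hsub : a ∩ f ⊆ f ∩ span S :=
    subset_inter inter_subset_right (inter_subset_left.trans (subset_span ha))
  have := card_inter_span_le_two hG hfree hS hT ⟨a, ha⟩ h3 hf hfS
  rw [← eq_of_subset_of_card_le hsub (by omega)]
  exact inter_subset_left

lemma card_coveredPairs_of_linked (hS : Linked S) (hSG : S ⊆ G) (h4 : #S ≤ 4) :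
    #S * r.choose 2 + 1 ≤ #(coveredPairs S) + #S := by
  induction hS with
  | singleton e => simp [coveredPairs, hG e (hSG (mem_singleton_self e))]
  | @insert S f a hS hf ha h2 ih =>
    rw [insert_subset_iff] at hSG
    rw [card_insert_of_notMem hf] at h4 ⊢
    have hshared : powersetCard 2 f ∩ coveredPairs S ⊆ powersetCard 2 (f ∩ span S) := by
      intro p hp
      simp only [mem_inter, mem_powersetCard, mem_coveredPairs] at hp ⊢
      obtain ⟨⟨hpf, hp2⟩, -, g, hg, hpg⟩ := hp
      exact ⟨subset_inter hpf (hpg.trans (subset_span hg)), hp2⟩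
    have hinter : #(f ∩ span S) ≤ 2 := card_inter_span_le_two hG hfree hSG.2
      (hS.isTight fun e he => hG e (hSG.2 he)) hS.nonempty (by omega) hSG.1 hf
    have hshared_card : #(powersetCard 2 f ∩ coveredPairs S) ≤ 1 := by
      refine (card_le_card hshared).trans ?_
      rw [card_powersetCard]
      exact Nat.choose_le_choose 2 hinter
    have := card_union_add_card_inter (powersetCard 2 f) (coveredPairs S)
    rw [card_powersetCard, hG f hSG.1] at this
    have := ih hSG.2 (by omega)
    rw [coveredPairs, biUnion_insert, ← coveredPairs, add_mul, one_mul]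
    omega

lemma exists_isHole_of_linked (hK : Linked K) (hKG : K ⊆ G) (h2 : 2 ≤ #K) (h4 : #K ≤ 4) :
    ∃ p, IsHole r K p := by
  induction hK with
  | singleton e => simp at h2
  | @insert S f a hS hf ha h2f ih =>
    rw [insert_subset_iff] at hKG
    rw [card_insert_of_notMem hf] at h2 h4
    obtain hS1 | hS2 := (by omega : #S = 1 ∨ 2 ≤ #S)
    · obtain ⟨e, rfl⟩ := card_eq_one.mp hS1
      have hfe : f ≠ e := fun h => hf (h ▸ mem_singleton_self f)
      have heG : e ∈ G := hKG.2 (mem_singleton_self e)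
      obtain ⟨p, hp2, hpfe, hpf, hpe⟩ :=
        exists_pair_not_subset hfe ((hG f hKG.1).trans (hG e heG).symm)
      refine ⟨p, hp2, ?_, _, subset_rfl, card_pair hfe, ?_, ?_⟩
      · simp only [mem_insert, mem_singleton, forall_eq_or_imp, forall_eq]
        exact ⟨hpf, hpe⟩
      · exact (Linked.insert (Linked.singleton e) hf ha h2f).isTight
          (by simp [hG f hKG.1, hG e heG])
      · rwa [span_insert, span_singleton]
    · obtain ⟨p, hp2, hpS, T, hTS, hT2, hT, hpT⟩ := ih hKG.2 hS2 (by omega)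
      refine ⟨p, hp2, ?_, T, hTS.trans (subset_insert f S), hT2, hT, hpT⟩
      intro g hg hpg
      obtain rfl | hg := mem_insert.mp hg
      · refine hpS a ha ((subset_inter hpg (hpT.trans (span_mono hTS))).trans ?_)
        exact inter_span_subset hG hfree hKG.2 (hS.isTight fun e he => hG e (hKG.2 he))
          (by omega) hKG.1 hf ha h2f
      · exact hpS g hg hpg

lemma card_component_le_four : #(component G c) ≤ 4 := by
  by_contra! h
  obtain ⟨S, hSc, hS5, hS⟩ := exists_linked_subset (c := c) (t := 5) (by norm_num) h
  exact hfree.not_isTight_of_card_eq_five (hSc.trans component_subset) hS5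
    (hS.isTight fun e he => hG e (component_subset (hSc he)))

lemma exists_isHole (h3 : 3 ≤ #(component G c)) : ∃ p, IsHole r (component G c) p :=
  exists_isHole_of_linked hG hfree (linked_component (card_pos.mp (by omega))) component_subset
    (by omega) (card_component_le_four hG hfree)

lemma not_isHole_of_isHole (hne : c₁ ≠ c₂) (h3 : 3 ≤ #(component G c₁))
    (hp₁ : IsHole r (component G c₁) p) : ¬ IsHole r (component G c₂) p := by
  rintro ⟨-, -, T₂, hT₂K, hT₂card, hT₂tight, hpT₂⟩
  obtain ⟨hp, -, T₁, hT₁K, hT₁card, hT₁tight, hpT₁⟩ := hp₁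
  obtain ⟨b, hb, hbT₁, hS₁⟩ :=
    exists_isTight_insert hG hT₁K hT₁tight (card_pos.mp (by omega)) (by omega)
  have hdisj : Disjoint (insert b T₁) T₂ :=
    (disjoint_component hne).mono (insert_subset hb hT₁K) hT₂K
  refine hfree.not_isTight_of_card_eq_five (S := insert b T₁ ∪ T₂) ?_ ?_
    (hS₁.union hT₂tight hdisj (two_le_card_inter hp (hpT₁.trans ?_) hpT₂))
  · exact union_subset (insert_subset (component_subset hb) (hT₁K.trans component_subset))
      (hT₂K.trans component_subset)
  · rw [card_union_of_disjoint hdisj, card_insert_of_notMem hbT₁, hT₁card, hT₂card]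
  · exact span_mono (subset_insert b T₁)

lemma not_subset_of_isHole_of_card_eq_four (h4 : #(component G c) = 4)
    (hp : IsHole r (component G c) p) (hh : h ∈ G) : ¬ p ⊆ h := by
  intro hph
  have hhK : h ∉ component G c := fun hK => hp.2.1 h hK hph
  refine hfree.not_isTight_of_card_eq_five (insert_subset hh component_subset)
    (by rw [card_insert_of_notMem hhK, h4]) ?_
  exact (isTight_component hG).insert (hG h hh) hhK (two_le_card_inter hp.1 hph hp.subset_span)

lemma not_adj_of_isHole_of_card_eq_three (h3 : #(component G c) = 3)
    (hp : IsHole r (component G c) p) (hh : h ∈ G) (hph : p ⊆ h) (f : Finset V) :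
    ¬ (linkGraph G).Adj h f := by
  intro hhf
  obtain ⟨-, hf, hne, h2⟩ := linkGraph_adj.mp hhf
  have hhK : h ∉ component G c := fun hK => hp.2.1 h hK hph
  have hfK : f ∉ insert h (component G c) := by
    rw [mem_insert, not_or]
    exact ⟨hne.symm, fun hfK => hhK (mem_component_of_adj hfK hhf.symm)⟩
  have hT := (isTight_component hG).insert (hG h hh) hhK (two_le_card_inter hp.1 hph hp.subset_span)
  refine hfree.not_isTight_of_card_eq_five (insert_subset hf (insert_subset hh component_subset))
    (by rw [card_insert_of_notMem hfK, card_insert_of_notMem hhK, h3]) ?_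
  refine hT.insert (hG f hf) hfK (h2.trans (card_le_card ?_))
  rw [span_insert, inter_comm]
  exact inter_subset_inter_left subset_union_left

lemma eq_of_isHole_of_subset (hp₁ : IsHole r (component G c₁) p₁)
    (hp₂ : IsHole r (component G c₂) p₂) (hh : h ∈ G) (h₁ : p₁ ⊆ h)
    (h₂ : p₂ ⊆ h) : c₁ = c₂ := by
  by_contra hne
  obtain ⟨hp₁2, hp₁K, T₁, hT₁K, hT₁card, hT₁tight, hpT₁⟩ := hp₁
  obtain ⟨hp₂2, hp₂K, T₂, hT₂K, hT₂card, hT₂tight, hpT₂⟩ := hp₂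
  have hhT₁ : h ∉ T₁ := fun hT => hp₁K h (hT₁K hT) h₁
  have hhT₂ : h ∉ T₂ := fun hT => hp₂K h (hT₂K hT) h₂
  have hdisj : Disjoint (insert h T₁) T₂ :=
    disjoint_insert_left.mpr ⟨hhT₂, (disjoint_component hne).mono hT₁K hT₂K⟩
  have hS₁ := hT₁tight.insert (hG h hh) hhT₁ (two_le_card_inter hp₁2 h₁ hpT₁)
  refine hfree.not_isTight_of_card_eq_five (S := insert h T₁ ∪ T₂) ?_ ?_
    (hS₁.union hT₂tight hdisj (two_le_card_inter hp₂2 (h₂.trans ?_) hpT₂))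
  · exact union_subset (insert_subset hh (hT₁K.trans component_subset))
      (hT₂K.trans component_subset)
  · rw [card_union_of_disjoint hdisj, card_insert_of_notMem hhT₁, hT₁card, hT₂card]
  · exact subset_span (mem_insert_self h T₁)

lemma card_mul_choose_add_card_components_le :
    #G * r.choose 2 + #(components G) ≤ #(coveredPairs G) + #G := by
  rw [card_eq_sum_card_component, card_coveredPairs_eq_sum, card_eq_sum_ones (components G),
    sum_mul, ← sum_add_distrib, ← sum_add_distrib]
  exact sum_le_sum fun c hc => card_coveredPairs_of_linked hG hfree
    (linked_component (nonempty_component_of_mem_components hc)) component_subset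
    (card_component_le_four hG hfree)

variable [Fintype V]

lemma mem_uncoveredPairs_or_component_eq_singleton (h3 : 3 ≤ #(component G c))
    (hp : IsHole r (component G c) p) :
    p ∈ uncoveredPairs G ∨
      ∃ h ∈ G, p ⊆ h ∧ component G ((linkGraph G).connectedComponentMk h) = {h} := by
  refine or_iff_not_imp_left.mpr fun hpA => ?_
  obtain ⟨h, hh, hph⟩ : ∃ h ∈ G, p ⊆ h := by
    simpa [mem_uncoveredPairs, hp.1] using hpA
  have h3' : #(component G c) = 3 := by
    have := card_component_le_four hG hfree (c := c)
    have : #(component G c) ≠ 4 := fun h4 =>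
      not_subset_of_isHole_of_card_eq_four hG hfree h4 hp hh hph
    omega
  exact ⟨h, hh, hph,
    component_eq_singleton hh (not_adj_of_isHole_of_card_eq_three hG hfree h3' hp hh hph)⟩

lemma card_filter_eq_four_le_card_uncoveredPairs :
    #{c ∈ components G | #(component G c) = 4} ≤ #(uncoveredPairs G) := by
  refine card_le_card_of_forall_subsingleton (fun c p => IsHole r (component G c) p) ?_ ?_
  · intro c hc
    obtain ⟨-, h4⟩ := mem_filter.mp hc
    obtain ⟨p, hp⟩ := exists_isHole hG hfree (c := c) (by omega)
    exact ⟨p, mem_uncoveredPairs.mpr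
      ⟨hp.1, fun e he => not_subset_of_isHole_of_card_eq_four hG hfree h4 hp he⟩, hp⟩
  · rintro p - c₁ ⟨hc₁, hp₁⟩ c₂ ⟨-, hp₂⟩
    by_contra hne
    have := (mem_filter.mp hc₁).2
    exact not_isHole_of_isHole hG hfree hne (by omega) hp₁ hp₂

lemma card_filter_three_le_le_card_uncoveredPairs_add :
    #{c ∈ components G | 3 ≤ #(component G c)} ≤
      #(uncoveredPairs G) + #{c ∈ components G | #(component G c) = 1} := by
  rw [← card_disjSum]
  refine card_le_card_of_forall_subsingleton (fun c x => x.elim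
    (fun p => IsHole r (component G c) p)
    (fun c' => ∃ p, IsHole r (component G c) p ∧ ∃ h ∈ component G c', p ⊆ h)) ?_ ?_
  · intro c hc
    obtain ⟨-, h3⟩ := mem_filter.mp hc
    obtain ⟨p, hp⟩ := exists_isHole hG hfree h3
    obtain hpA | ⟨h, hh, hph, hsingle⟩ :=
      mem_uncoveredPairs_or_component_eq_singleton hG hfree h3 hp
    · exact ⟨.inl p, inl_mem_disjSum.mpr hpA, hp⟩
    refine ⟨.inr _, inr_mem_disjSum.mpr (mem_filter.mpr ⟨mem_components_of_mem hh, ?_⟩),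
      p, hp, h, ?_, hph⟩
    · rw [hsingle, card_singleton]
    · rw [hsingle]; exact mem_singleton_self h
  · rintro (p | c') hx c₁ ⟨hc₁, hr₁⟩ c₂ ⟨-, hr₂⟩
    · by_contra hne
      exact not_isHole_of_isHole hG hfree hne (mem_filter.mp hc₁).2 hr₁ hr₂
    · obtain ⟨p₁, hp₁, h₁, hh₁, hph₁⟩ := hr₁
      obtain ⟨p₂, hp₂, h₂, hh₂, hph₂⟩ := hr₂
      obtain ⟨h, hc'⟩ := card_eq_one.mp (mem_filter.mp (inr_mem_disjSum.mp hx)).2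
      rw [hc', mem_singleton] at hh₁ hh₂
      subst hh₁ hh₂
      exact eq_of_isHole_of_subset hG hfree hp₁ hp₂
        (component_subset (hc' ▸ mem_singleton_self _)) hph₁ hph₂

theorem card_mul_two_mul_choose_le :
    #G * (2 * r.choose 2) ≤ 2 * (Fintype.card V).choose 2 + #G := by
  have hcovered := card_mul_choose_add_card_components_le hG hfree
  have hsizes := card_add_card_filter_eq_one_le (G := G) fun c => card_component_le_four hG hfree
  have hfour := card_filter_eq_four_le_card_uncoveredPairs hG hfree
  have hthree := card_filter_three_le_le_card_uncoveredPairs_add hG hfree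
  have hpairs := card_coveredPairs_add_card_uncoveredPairs (G := G)
  have : #G * (2 * r.choose 2) = 2 * (#G * r.choose 2) := by ring
  omega

end GFree

theorem upper_bound_five_general (r n : ℕ) (hr : 3 ≤ r)
    (G : Finset (Finset (Fin n))) (hG : IsRGraph r G) (hfree : GFree r 5 G) :
    (G.card : ℝ) ≤ (2 / ((r : ℝ) ^ 2 - r - 1)) * (n.choose 2 : ℝ) := by
  have hbound := hfree.card_mul_two_mul_choose_le hG
  rw [Fintype.card_fin] at hbound
  have hr' : (3 : ℝ) ≤ r := by exact_mod_cast hr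
  have hpos : (0 : ℝ) < (r : ℝ) ^ 2 - r - 1 := by nlinarith
  have hreal : (G.card : ℝ) * (r * (r - 1)) ≤ 2 * n.choose 2 + G.card := by
    have := (Nat.cast_le (α := ℝ)).mpr hbound
    rw [Nat.cast_add, Nat.cast_mul, Nat.cast_mul, Nat.cast_mul, Nat.cast_choose_two ℝ r] at this
    push_cast at this
    linarith
  rw [div_mul_eq_mul_div, le_div_iff₀ hpos]
  nlinarith

/-- Every `𝒢^{(r)}_5`-free `r`-graph on `n` vertices has at most `(2/(r²-r-1))·C(n,2)` edges. -/
theorem upper_bound_five (r n : ℕ) (hr : 3 ≤ r) (hn : 2 ≤ n)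
    (G : Finset (Finset (Fin n))) (hG : IsRGraph r G) (hfree : GFree r 5 G) :
    (G.card : ℝ) ≤ (2 / ((r : ℝ) ^ 2 - r - 1)) * (n.choose 2 : ℝ) :=
  upper_bound_five_general r n hr G hG hfree
end

section
/- For all integers r ≥ 4 and n ≥ 2, every G^{(r)}_6-free r-graph on n vertices has at most C(n,2)/C(r,2) edges. -/
open Finset

namespace UBSix

variable {V : Type*} [DecidableEq V]

lemma no_cfg {s k : ℕ} {G : Finset (Finset V)} (hfr : ConfigFree s k G)
    {S : Finset (Finset V)} (hS : S ⊆ G) (hk : S.card = k)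
    (hs : (S.biUnion id).card ≤ s) : False :=
  hfr ⟨S, hS, hk, hs⟩

lemma one_le_inter {A B : Finset V} {x : V} (hA : x ∈ A) (hB : x ∈ B) :
    1 ≤ (A ∩ B).card :=
  Finset.card_pos.2 ⟨x, Finset.mem_inter.2 ⟨hA, hB⟩⟩

lemma two_le_inter {A B : Finset V} {x y : V} (hxy : x ≠ y)
    (hxA : x ∈ A) (hxB : x ∈ B) (hyA : y ∈ A) (hyB : y ∈ B) :
    2 ≤ (A ∩ B).card := by
  have hs : ({x, y} : Finset V) ⊆ A ∩ B := by
    intro z hz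
    rcases Finset.mem_insert.1 hz with rfl | hz
    · exact Finset.mem_inter.2 ⟨hxA, hxB⟩
    · rw [Finset.mem_singleton] at hz; subst hz
      exact Finset.mem_inter.2 ⟨hyA, hyB⟩
  calc 2 = ({x, y} : Finset V).card := (Finset.card_pair hxy).symm
    _ ≤ _ := Finset.card_le_card hs

lemma card3' {α : Type*} [DecidableEq α] {a b c : α} (hab : a ≠ b) (hac : a ≠ c)
    (hbc : b ≠ c) : ({a, b, c} : Finset α).card = 3 := by
  rw [Finset.card_insert_of_notMem (by simp [hab, hac]), Finset.card_pair hbc]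

lemma three_le_inter {A B : Finset V} {x y z : V} (hxy : x ≠ y) (hxz : x ≠ z) (hyz : y ≠ z)
    (hxA : x ∈ A) (hxB : x ∈ B) (hyA : y ∈ A) (hyB : y ∈ B) (hzA : z ∈ A) (hzB : z ∈ B) :
    3 ≤ (A ∩ B).card := by
  have hs : ({x, y, z} : Finset V) ⊆ A ∩ B := by
    intro w hw
    simp only [Finset.mem_insert, Finset.mem_singleton] at hw
    rcases hw with rfl | rfl | rfl <;> exact Finset.mem_inter.2 ⟨by assumption, by assumption⟩
  calc 3 = ({x, y, z} : Finset V).card := (card3' hxy hxz hyz).symm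
    _ ≤ _ := Finset.card_le_card hs

lemma card_union_le' {A B : Finset V} {t : ℕ} (h : t ≤ (A ∩ B).card) :
    (A ∪ B).card + t ≤ A.card + B.card := by
  have := Finset.card_union_add_card_inter A B
  omega

lemma card4' {α : Type*} [DecidableEq α] {a b c d : α} (hab : a ≠ b) (hac : a ≠ c)
    (had : a ≠ d) (hbc : b ≠ c) (hbd : b ≠ d) (hcd : c ≠ d) :
    ({a, b, c, d} : Finset α).card = 4 := by
  rw [Finset.card_insert_of_notMem (by simp [hab, hac, had]), card3' hbc hbd hcd]

lemma card5' {α : Type*} [DecidableEq α] {a b c d e : α} (hab : a ≠ b) (hac : a ≠ c)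
    (had : a ≠ d) (hae : a ≠ e) (hbc : b ≠ c) (hbd : b ≠ d) (hbe : b ≠ e)
    (hcd : c ≠ d) (hce : c ≠ e) (hde : d ≠ e) :
    ({a, b, c, d, e} : Finset α).card = 5 := by
  rw [Finset.card_insert_of_notMem (by simp [hab, hac, had, hae]),
    card4' hbc hbd hbe hcd hce hde]

lemma card6' {α : Type*} [DecidableEq α] {a b c d e f : α} (hab : a ≠ b) (hac : a ≠ c)
    (had : a ≠ d) (hae : a ≠ e) (haf : a ≠ f) (hbc : b ≠ c) (hbd : b ≠ d) (hbe : b ≠ e)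
    (hbf : b ≠ f) (hcd : c ≠ d) (hce : c ≠ e) (hcf : c ≠ f) (hde : d ≠ e) (hdf : d ≠ f)
    (hef : e ≠ f) :
    ({a, b, c, d, e, f} : Finset α).card = 6 := by
  rw [Finset.card_insert_of_notMem (by simp [hab, hac, had, hae, haf]),
    card5' hbc hbd hbe hbf hcd hce hcf hde hdf hef]

lemma exists_four {α : Type*} [DecidableEq α] {s : Finset α} (h : 4 ≤ s.card) :
    ∃ q₁ ∈ s, ∃ q₂ ∈ s, ∃ q₃ ∈ s, ∃ q₄ ∈ s,
      q₁ ≠ q₂ ∧ q₁ ≠ q₃ ∧ q₁ ≠ q₄ ∧ q₂ ≠ q₃ ∧ q₂ ≠ q₄ ∧ q₃ ≠ q₄ := by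
  obtain ⟨q₁, h₁⟩ := Finset.card_pos.1 (by omega : 0 < s.card)
  have c1 : 3 ≤ (s.erase q₁).card := by rw [Finset.card_erase_of_mem h₁]; omega
  obtain ⟨q₂, h₂⟩ := Finset.card_pos.1 (by omega : 0 < (s.erase q₁).card)
  have c2 : 2 ≤ ((s.erase q₁).erase q₂).card := by rw [Finset.card_erase_of_mem h₂]; omega
  obtain ⟨q₃, h₃⟩ := Finset.card_pos.1 (by omega : 0 < ((s.erase q₁).erase q₂).card)
  have c3 : 1 ≤ (((s.erase q₁).erase q₂).erase q₃).card := by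
    rw [Finset.card_erase_of_mem h₃]; omega
  obtain ⟨q₄, h₄⟩ := Finset.card_pos.1 (by omega : 0 < (((s.erase q₁).erase q₂).erase q₃).card)
  have m₂ := Finset.mem_erase.1 h₂
  have m₃ := Finset.mem_erase.1 h₃
  have m₃' := Finset.mem_erase.1 m₃.2
  have m₄ := Finset.mem_erase.1 h₄
  have m₄' := Finset.mem_erase.1 m₄.2
  have m₄'' := Finset.mem_erase.1 m₄'.2
  exact ⟨q₁, h₁, q₂, m₂.2, q₃, m₃'.2, q₄, m₄''.2,
    (m₂.1).symm, (m₃'.1).symm, (m₄''.1).symm, (m₃.1).symm, (m₄'.1).symm, (m₄.1).symm⟩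

end UBSix

namespace UBSix

variable {V : Type*} [DecidableEq V]

/-- Any two distinct edges meet in at most 2 vertices. -/
lemma inter_card_le_two {r : ℕ} {G : Finset (Finset V)} (hr : 4 ≤ r) (hG : IsRGraph r G)
    (h2 : ConfigFree (r * 2 - 2 * 2 + 1) 2 G) {e f : Finset V}
    (he : e ∈ G) (hf : f ∈ G) (hef : e ≠ f) : (e ∩ f).card ≤ 2 := by
  by_contra hlt
  refine no_cfg h2 (S := {e, f}) (by simp [Finset.insert_subset_iff, he, hf])
    (Finset.card_pair hef) ?_
  have hbu : ({e, f} : Finset (Finset V)).biUnion id = e ∪ f := by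
    ext x; simp [Finset.mem_union]
  rw [hbu]
  have h1 := Finset.card_union_add_card_inter e f
  have hce := hG e he; have hcf := hG f hf
  omega

/-- Any third edge meets the union of a 2-intersecting pair in at most 2 vertices. -/
lemma third_inter_le_two {r : ℕ} {G : Finset (Finset V)} (hr : 4 ≤ r) (hG : IsRGraph r G)
    (h3 : ConfigFree (r * 3 - 2 * 3 + 1) 3 G) {e f g : Finset V}
    (he : e ∈ G) (hf : f ∈ G) (hg : g ∈ G) (hef : e ≠ f) (hef2 : (e ∩ f).card = 2)
    (hge : g ≠ e) (hgf : g ≠ f) : (g ∩ (e ∪ f)).card ≤ 2 := by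
  by_contra hlt
  have hce := hG e he; have hcf := hG f hf; have hcg := hG g hg
  have hEF := Finset.card_union_add_card_inter e f
  refine no_cfg h3 (S := {e, f, g}) (by simp [Finset.insert_subset_iff, he, hf, hg])
    (card3' hef hge.symm hgf.symm) ?_
  have hbu : ({e, f, g} : Finset (Finset V)).biUnion id = (e ∪ f) ∪ g := by
    ext x; simp [Finset.mem_union, or_assoc]
  rw [hbu]
  have hu := Finset.card_union_add_card_inter (e ∪ f) g
  rw [Finset.inter_comm (e ∪ f) g] at hu
  omega

/-- An edge covering a cross pair meets `e ∪ f` exactly in that pair. -/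
lemma coverer_eq {r : ℕ} {G : Finset (Finset V)} (hr : 4 ≤ r) (hG : IsRGraph r G)
    (h3 : ConfigFree (r * 3 - 2 * 3 + 1) 3 G) {e f g q : Finset V}
    (he : e ∈ G) (hf : f ∈ G) (hg : g ∈ G) (hef : e ≠ f) (hef2 : (e ∩ f).card = 2)
    (hge : g ≠ e) (hgf : g ≠ f) (hq2 : q.card = 2) (hqg : q ⊆ g) (hqef : q ⊆ e ∪ f) :
    g ∩ (e ∪ f) = q := by
  refine (Finset.eq_of_subset_of_card_le (Finset.subset_inter hqg hqef) ?_).symm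
  rw [hq2]
  exact third_inter_le_two hr hG h3 he hf hg hef hef2 hge hgf

/-- Structure of a collision partner: its two edges meet `e ∪ f` exactly in `a` resp. `b`. -/
lemma partner_struct {r : ℕ} {G : Finset (Finset V)} (hr : 4 ≤ r) (hG : IsRGraph r G)
    (h3 : ConfigFree (r * 3 - 2 * 3 + 1) 3 G) (h4 : ConfigFree (r * 4 - 2 * 4 + 1) 4 G)
    {e f e₂ f₂ : Finset V} {a b : V}
    (he : e ∈ G) (hf : f ∈ G) (he₂ : e₂ ∈ G) (hf₂ : f₂ ∈ G)
    (hef : e ≠ f) (hef2 : (e ∩ f).card = 2) (h22 : (e₂ ∩ f₂).card = 2)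
    (ha : a ∈ e) (haf : a ∉ f) (hb : b ∈ f) (hbe : b ∉ e)
    (ha₂ : a ∈ e₂) (haf₂ : a ∉ f₂) (hb₂ : b ∈ f₂) (hbe₂ : b ∉ e₂)
    (hne : ¬(e₂ = e ∧ f₂ = f)) :
    e₂ ∩ (e ∪ f) = {a} ∧ f₂ ∩ (e ∪ f) = {b} := by
  have hce := hG e he; have hcf := hG f hf
  have hce₂ := hG e₂ he₂; have hcf₂ := hG f₂ hf₂
  have he₂f₂ : e₂ ≠ f₂ := fun h => haf₂ (h ▸ ha₂)
  obtain ⟨u, v, huv, hp⟩ := Finset.card_eq_two.1 h22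
  have hue₂ : u ∈ e₂ ∧ u ∈ f₂ := by
    have hu : u ∈ e₂ ∩ f₂ := by rw [hp]; simp
    exact ⟨(Finset.mem_inter.1 hu).1, (Finset.mem_inter.1 hu).2⟩
  have hve₂ : v ∈ e₂ ∧ v ∈ f₂ := by
    have hv : v ∈ e₂ ∩ f₂ := by rw [hp]; simp
    exact ⟨(Finset.mem_inter.1 hv).1, (Finset.mem_inter.1 hv).2⟩
  have hub : u ≠ b := fun h => hbe₂ (h ▸ hue₂.1)
  have hvb : v ≠ b := fun h => hbe₂ (h ▸ hve₂.1)
  have hua : u ≠ a := fun h => haf₂ (h ▸ hue₂.2)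
  have hva : v ≠ a := fun h => haf₂ (h ▸ hve₂.2)
  have he₂f : e₂ ≠ f := fun h => haf (h ▸ ha₂)
  have hf₂e : f₂ ≠ e := fun h => hbe (h ▸ hb₂)
  have he₂e : e₂ ≠ e := by
    intro h
    have hf₂f : f₂ ≠ f := fun h' => hne ⟨h, h'⟩
    have h3le : 3 ≤ (f₂ ∩ (e ∪ f)).card :=
      three_le_inter huv hub hvb hue₂.2 (Finset.mem_union_left _ (h ▸ hue₂.1))
        hve₂.2 (Finset.mem_union_left _ (h ▸ hve₂.1)) hb₂ (Finset.mem_union_right _ hb)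
    have := third_inter_le_two hr hG h3 he hf hf₂ hef hef2 hf₂e hf₂f
    omega
  have hf₂f : f₂ ≠ f := by
    intro h
    have h3le : 3 ≤ (e₂ ∩ (e ∪ f)).card :=
      three_le_inter huv hua hva hue₂.1 (Finset.mem_union_right _ (h ▸ hue₂.2))
        hve₂.1 (Finset.mem_union_right _ (h ▸ hve₂.2)) ha₂ (Finset.mem_union_left _ ha)
    have := third_inter_le_two hr hG h3 he hf he₂ hef hef2 he₂e he₂f
    omega
  -- 4-configuration forcing
  have hEF := Finset.card_union_add_card_inter e f
  have hU1 := Finset.card_union_add_card_inter (e ∪ f) e₂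
  rw [Finset.inter_comm (e ∪ f) e₂] at hU1
  have hU2 := Finset.card_union_add_card_inter ((e ∪ f) ∪ e₂) f₂
  rw [Finset.inter_comm ((e ∪ f) ∪ e₂) f₂] at hU2
  have hx1 : 1 ≤ (e₂ ∩ (e ∪ f)).card := one_le_inter ha₂ (Finset.mem_union_left _ ha)
  have hy3 : 3 ≤ (f₂ ∩ ((e ∪ f) ∪ e₂)).card :=
    three_le_inter huv hub hvb hue₂.2 (Finset.mem_union_right _ hue₂.1)
      hve₂.2 (Finset.mem_union_right _ hve₂.1) hb₂
      (Finset.mem_union_left _ (Finset.mem_union_right _ hb))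
  have hlow : ¬((((e ∪ f) ∪ e₂) ∪ f₂).card ≤ r * 4 - 2 * 4 + 1) := by
    intro hle
    refine no_cfg h4 (S := {e, f, e₂, f₂})
      (by simp [Finset.insert_subset_iff, he, hf, he₂, hf₂])
      (card4' hef he₂e.symm hf₂e.symm he₂f.symm hf₂f.symm he₂f₂) ?_
    have hbu : ({e, f, e₂, f₂} : Finset (Finset V)).biUnion id = ((e ∪ f) ∪ e₂) ∪ f₂ := by
      ext w; simp [Finset.mem_union, or_assoc]
    rw [hbu]; exact hle
  have hx : (e₂ ∩ (e ∪ f)).card = 1 := by omega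
  have hy : (f₂ ∩ ((e ∪ f) ∪ e₂)).card = 3 := by omega
  obtain ⟨c, hc⟩ := Finset.card_eq_one.1 hx
  have haᵢ : a ∈ e₂ ∩ (e ∪ f) := Finset.mem_inter.2 ⟨ha₂, Finset.mem_union_left _ ha⟩
  have hca : c = a := by rw [hc] at haᵢ; exact (Finset.mem_singleton.1 haᵢ).symm
  have hE2 : e₂ ∩ (e ∪ f) = {a} := by rw [hc, hca]
  have hsub : ({u, v, b} : Finset V) ⊆ f₂ ∩ ((e ∪ f) ∪ e₂) := by
    intro w hw
    simp only [Finset.mem_insert, Finset.mem_singleton] at hw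
    rcases hw with rfl | rfl | rfl
    · exact Finset.mem_inter.2 ⟨hue₂.2, Finset.mem_union_right _ hue₂.1⟩
    · exact Finset.mem_inter.2 ⟨hve₂.2, Finset.mem_union_right _ hve₂.1⟩
    · exact Finset.mem_inter.2 ⟨hb₂, Finset.mem_union_left _ (Finset.mem_union_right _ hb)⟩
  have hF2' : f₂ ∩ ((e ∪ f) ∪ e₂) = {u, v, b} :=
    (Finset.eq_of_subset_of_card_le hsub (by rw [hy, card3' huv hub hvb])).symm
  have hunotef : u ∉ e ∪ f := by
    intro hu
    have hmem : u ∈ e₂ ∩ (e ∪ f) := Finset.mem_inter.2 ⟨hue₂.1, hu⟩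
    rw [hE2] at hmem
    exact hua (Finset.mem_singleton.1 hmem)
  have hvnotef : v ∉ e ∪ f := by
    intro hv
    have hmem : v ∈ e₂ ∩ (e ∪ f) := Finset.mem_inter.2 ⟨hve₂.1, hv⟩
    rw [hE2] at hmem
    exact hva (Finset.mem_singleton.1 hmem)
  have hF2 : f₂ ∩ (e ∪ f) = {b} := by
    apply Finset.Subset.antisymm
    · intro w hw
      have hw1 := Finset.mem_inter.1 hw
      have hw' : w ∈ f₂ ∩ ((e ∪ f) ∪ e₂) :=
        Finset.mem_inter.2 ⟨hw1.1, Finset.mem_union_left _ hw1.2⟩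
      rw [hF2'] at hw'
      simp only [Finset.mem_insert, Finset.mem_singleton] at hw'
      rcases hw' with rfl | rfl | rfl
      · exact absurd hw1.2 hunotef
      · exact absurd hw1.2 hvnotef
      · exact Finset.mem_singleton_self _
    · intro w hw
      rw [Finset.mem_singleton] at hw; subst hw
      exact Finset.mem_inter.2 ⟨hb₂, Finset.mem_union_right _ hb⟩
  exact ⟨hE2, hF2⟩

end UBSix

namespace UBSix

variable {V : Type*} [DecidableEq V]

/-- If a link has a collision partner, it cannot have two covered cross pairs. -/
lemma collision_blocks_two_covered {r : ℕ} {G : Finset (Finset V)} (hr : 4 ≤ r)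
    (hG : IsRGraph r G) (h6 : ConfigFree (r * 6 - 2 * 6 + 2) 6 G)
    {e f e₂ f₂ g₁ g₂ : Finset V} {a b a₁ b₁ a₂ b₂ : V}
    (he : e ∈ G) (hf : f ∈ G) (he₂ : e₂ ∈ G) (hf₂ : f₂ ∈ G) (hg₁ : g₁ ∈ G) (hg₂ : g₂ ∈ G)
    (hef : e ≠ f) (hef2 : (e ∩ f).card = 2) (h22 : (e₂ ∩ f₂).card = 2)
    (hE2 : e₂ ∩ (e ∪ f) = {a}) (hF2 : f₂ ∩ (e ∪ f) = {b})
    (ha : a ∈ e) (haf : a ∉ f) (hb : b ∈ f) (hbe : b ∉ e)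
    (ha₁ : a₁ ∈ e) (ha₁f : a₁ ∉ f) (hb₁ : b₁ ∈ f) (hb₁e : b₁ ∉ e)
    (ha₂' : a₂ ∈ e) (ha₂f : a₂ ∉ f) (hb₂' : b₂ ∈ f) (hb₂e : b₂ ∉ e)
    (hcap₁ : g₁ ∩ (e ∪ f) = {a₁, b₁}) (hcap₂ : g₂ ∩ (e ∪ f) = {a₂, b₂})
    (hqne : ({a₁, b₁} : Finset V) ≠ {a₂, b₂}) : False := by
  have hce := hG e he; have hcf := hG f hf
  have hce₂ := hG e₂ he₂; have hcf₂ := hG f₂ hf₂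
  have hcg₁ := hG g₁ hg₁; have hcg₂ := hG g₂ hg₂
  have hab : a ≠ b := fun h => haf (h ▸ hb)
  have ha₁b₁ : a₁ ≠ b₁ := fun h => ha₁f (h ▸ hb₁)
  have ha₂b₂ : a₂ ≠ b₂ := fun h => ha₂f (h ▸ hb₂')
  have hee : e ∩ (e ∪ f) = e := Finset.inter_eq_left.2 Finset.subset_union_left
  have hff : f ∩ (e ∪ f) = f := Finset.inter_eq_left.2 Finset.subset_union_right
  have cap_ne : ∀ {X Y : Finset V}, (X ∩ (e ∪ f)).card ≠ (Y ∩ (e ∪ f)).card → X ≠ Y :=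
    fun h hxy => h (by rw [hxy])
  have cE : (e ∩ (e ∪ f)).card = r := by rw [hee]; exact hce
  have cF : (f ∩ (e ∪ f)).card = r := by rw [hff]; exact hcf
  have cE₂ : (e₂ ∩ (e ∪ f)).card = 1 := by rw [hE2]; simp
  have cF₂ : (f₂ ∩ (e ∪ f)).card = 1 := by rw [hF2]; simp
  have cG₁ : (g₁ ∩ (e ∪ f)).card = 2 := by rw [hcap₁]; exact Finset.card_pair ha₁b₁
  have cG₂ : (g₂ ∩ (e ∪ f)).card = 2 := by rw [hcap₂]; exact Finset.card_pair ha₂b₂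
  -- memberships derived from cap equalities
  have haE₂ : a ∈ e₂ := by
    have h' : a ∈ e₂ ∩ (e ∪ f) := by rw [hE2]; exact Finset.mem_singleton_self a
    exact (Finset.mem_inter.1 h').1
  have hbF₂ : b ∈ f₂ := by
    have h' : b ∈ f₂ ∩ (e ∪ f) := by rw [hF2]; exact Finset.mem_singleton_self b
    exact (Finset.mem_inter.1 h').1
  have hbE₂ : b ∉ e₂ := by
    intro h
    have h' : b ∈ e₂ ∩ (e ∪ f) := Finset.mem_inter.2 ⟨h, Finset.mem_union_right _ hb⟩
    rw [hE2] at h'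
    exact hab (Finset.mem_singleton.1 h').symm
  have ha₁g₁ : a₁ ∈ g₁ := by
    have h' : a₁ ∈ g₁ ∩ (e ∪ f) := by rw [hcap₁]; simp
    exact (Finset.mem_inter.1 h').1
  have hb₁g₁ : b₁ ∈ g₁ := by
    have h' : b₁ ∈ g₁ ∩ (e ∪ f) := by rw [hcap₁]; simp
    exact (Finset.mem_inter.1 h').1
  have ha₂g₂ : a₂ ∈ g₂ := by
    have h' : a₂ ∈ g₂ ∩ (e ∪ f) := by rw [hcap₂]; simp
    exact (Finset.mem_inter.1 h').1
  have hb₂g₂ : b₂ ∈ g₂ := by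
    have h' : b₂ ∈ g₂ ∩ (e ∪ f) := by rw [hcap₂]; simp
    exact (Finset.mem_inter.1 h').1
  obtain ⟨u, v, huv, hp⟩ := Finset.card_eq_two.1 h22
  have hue : u ∈ e₂ ∧ u ∈ f₂ := by
    have hu : u ∈ e₂ ∩ f₂ := by rw [hp]; simp
    exact ⟨(Finset.mem_inter.1 hu).1, (Finset.mem_inter.1 hu).2⟩
  have hve : v ∈ e₂ ∧ v ∈ f₂ := by
    have hv : v ∈ e₂ ∩ f₂ := by rw [hp]; simp
    exact ⟨(Finset.mem_inter.1 hv).1, (Finset.mem_inter.1 hv).2⟩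
  have hub : u ≠ b := fun h => hbE₂ (h ▸ hue.1)
  have hvb : v ≠ b := fun h => hbE₂ (h ▸ hve.1)
  -- distinctness
  have d_ee₂ : e ≠ e₂ := cap_ne (by omega)
  have d_ef₂ : e ≠ f₂ := cap_ne (by omega)
  have d_eg₁ : e ≠ g₁ := cap_ne (by omega)
  have d_eg₂ : e ≠ g₂ := cap_ne (by omega)
  have d_fe₂ : f ≠ e₂ := cap_ne (by omega)
  have d_ff₂ : f ≠ f₂ := cap_ne (by omega)
  have d_fg₁ : f ≠ g₁ := cap_ne (by omega)
  have d_fg₂ : f ≠ g₂ := cap_ne (by omega)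
  have d_e₂f₂ : e₂ ≠ f₂ := by
    intro h; rw [h, hF2] at hE2; exact hab (Finset.singleton_inj.1 hE2).symm
  have d_e₂g₁ : e₂ ≠ g₁ := cap_ne (by omega)
  have d_e₂g₂ : e₂ ≠ g₂ := cap_ne (by omega)
  have d_f₂g₁ : f₂ ≠ g₁ := cap_ne (by omega)
  have d_f₂g₂ : f₂ ≠ g₂ := cap_ne (by omega)
  have d_g₁g₂ : g₁ ≠ g₂ := by
    intro h; rw [h, hcap₂] at hcap₁; exact hqne hcap₁.symm
  -- union chain
  have hEF := Finset.card_union_add_card_inter e f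
  have hU1 := Finset.card_union_add_card_inter (e ∪ f) e₂
  rw [Finset.inter_comm (e ∪ f) e₂] at hU1
  have hU2 := Finset.card_union_add_card_inter ((e ∪ f) ∪ e₂) f₂
  rw [Finset.inter_comm ((e ∪ f) ∪ e₂) f₂] at hU2
  have hU3 := Finset.card_union_add_card_inter (((e ∪ f) ∪ e₂) ∪ f₂) g₁
  rw [Finset.inter_comm (((e ∪ f) ∪ e₂) ∪ f₂) g₁] at hU3
  have hU4 := Finset.card_union_add_card_inter ((((e ∪ f) ∪ e₂) ∪ f₂) ∪ g₁) g₂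
  rw [Finset.inter_comm ((((e ∪ f) ∪ e₂) ∪ f₂) ∪ g₁) g₂] at hU4
  have i2 : 3 ≤ (f₂ ∩ ((e ∪ f) ∪ e₂)).card :=
    three_le_inter huv hub hvb hue.2 (Finset.mem_union_right _ hue.1)
      hve.2 (Finset.mem_union_right _ hve.1) hbF₂
      (Finset.mem_union_left _ (Finset.mem_union_right _ hb))
  have i3 : 2 ≤ (g₁ ∩ (((e ∪ f) ∪ e₂) ∪ f₂)).card :=
    two_le_inter ha₁b₁ ha₁g₁
      (Finset.mem_union_left _ (Finset.mem_union_left _ (Finset.mem_union_left _ ha₁)))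
      hb₁g₁
      (Finset.mem_union_left _ (Finset.mem_union_left _ (Finset.mem_union_right _ hb₁)))
  have i4 : 2 ≤ (g₂ ∩ ((((e ∪ f) ∪ e₂) ∪ f₂) ∪ g₁)).card :=
    two_le_inter ha₂b₂ ha₂g₂
      (Finset.mem_union_left _ (Finset.mem_union_left _ (Finset.mem_union_left _
        (Finset.mem_union_left _ ha₂'))))
      hb₂g₂
      (Finset.mem_union_left _ (Finset.mem_union_left _ (Finset.mem_union_left _
        (Finset.mem_union_right _ hb₂'))))
  refine no_cfg h6 (S := {e, f, e₂, f₂, g₁, g₂})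
    (by simp [Finset.insert_subset_iff, he, hf, he₂, hf₂, hg₁, hg₂])
    (card6' hef d_ee₂ d_ef₂ d_eg₁ d_eg₂ d_fe₂ d_ff₂ d_fg₁ d_fg₂ d_e₂f₂ d_e₂g₁ d_e₂g₂
      d_f₂g₁ d_f₂g₂ d_g₁g₂) ?_
  have hbu : ({e, f, e₂, f₂, g₁, g₂} : Finset (Finset V)).biUnion id =
      ((((e ∪ f) ∪ e₂) ∪ f₂) ∪ g₁) ∪ g₂ := by
    ext w; simp [Finset.mem_union, or_assoc]
  rw [hbu]
  omega

/-- A link cannot have two distinct collision pairs. -/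
lemma no_two_collisions {r : ℕ} {G : Finset (Finset V)} (hr : 4 ≤ r)
    (hG : IsRGraph r G)
    (h5 : ConfigFree (r * 5 - 2 * 5 + 1) 5 G) (h6 : ConfigFree (r * 6 - 2 * 6 + 2) 6 G)
    {e f e₂ f₂ e₃ f₃ : Finset V} {a b a₁ b₁ : V}
    (he : e ∈ G) (hf : f ∈ G) (he₂ : e₂ ∈ G) (hf₂ : f₂ ∈ G) (he₃ : e₃ ∈ G) (hf₃ : f₃ ∈ G)
    (hef : e ≠ f) (hef2 : (e ∩ f).card = 2)
    (h22 : (e₂ ∩ f₂).card = 2) (h33 : (e₃ ∩ f₃).card = 2)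
    (hE2 : e₂ ∩ (e ∪ f) = {a}) (hF2 : f₂ ∩ (e ∪ f) = {b})
    (hE3 : e₃ ∩ (e ∪ f) = {a₁}) (hF3 : f₃ ∩ (e ∪ f) = {b₁})
    (ha : a ∈ e) (haf : a ∉ f) (hb : b ∈ f) (hbe : b ∉ e)
    (ha₁ : a₁ ∈ e) (ha₁f : a₁ ∉ f) (hb₁ : b₁ ∈ f) (hb₁e : b₁ ∉ e)
    (hqne : ¬(a = a₁ ∧ b = b₁)) : False := by
  have hce := hG e he; have hcf := hG f hf
  have hce₂ := hG e₂ he₂; have hcf₂ := hG f₂ hf₂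
  have hce₃ := hG e₃ he₃; have hcf₃ := hG f₃ hf₃
  have hab : a ≠ b := fun h => haf (h ▸ hb)
  have ha₁b₁ : a₁ ≠ b₁ := fun h => ha₁f (h ▸ hb₁)
  have hab₁ : a ≠ b₁ := fun h => haf (h ▸ hb₁)
  have ha₁b : a₁ ≠ b := fun h => ha₁f (h ▸ hb)
  have hee : e ∩ (e ∪ f) = e := Finset.inter_eq_left.2 Finset.subset_union_left
  have hff : f ∩ (e ∪ f) = f := Finset.inter_eq_left.2 Finset.subset_union_right
  have cap_ne : ∀ {X Y : Finset V}, (X ∩ (e ∪ f)).card ≠ (Y ∩ (e ∪ f)).card → X ≠ Y :=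
    fun h hxy => h (by rw [hxy])
  have cE : (e ∩ (e ∪ f)).card = r := by rw [hee]; exact hce
  have cF : (f ∩ (e ∪ f)).card = r := by rw [hff]; exact hcf
  have cE₂ : (e₂ ∩ (e ∪ f)).card = 1 := by rw [hE2]; simp
  have cF₂ : (f₂ ∩ (e ∪ f)).card = 1 := by rw [hF2]; simp
  have cE₃ : (e₃ ∩ (e ∪ f)).card = 1 := by rw [hE3]; simp
  have cF₃ : (f₃ ∩ (e ∪ f)).card = 1 := by rw [hF3]; simp
  -- memberships
  have haE₂ : a ∈ e₂ := by
    have h' : a ∈ e₂ ∩ (e ∪ f) := by rw [hE2]; exact Finset.mem_singleton_self a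
    exact (Finset.mem_inter.1 h').1
  have hbF₂ : b ∈ f₂ := by
    have h' : b ∈ f₂ ∩ (e ∪ f) := by rw [hF2]; exact Finset.mem_singleton_self b
    exact (Finset.mem_inter.1 h').1
  have ha₁E₃ : a₁ ∈ e₃ := by
    have h' : a₁ ∈ e₃ ∩ (e ∪ f) := by rw [hE3]; exact Finset.mem_singleton_self a₁
    exact (Finset.mem_inter.1 h').1
  have hb₁F₃ : b₁ ∈ f₃ := by
    have h' : b₁ ∈ f₃ ∩ (e ∪ f) := by rw [hF3]; exact Finset.mem_singleton_self b₁
    exact (Finset.mem_inter.1 h').1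
  have hbE₂ : b ∉ e₂ := by
    intro h
    have h' : b ∈ e₂ ∩ (e ∪ f) := Finset.mem_inter.2 ⟨h, Finset.mem_union_right _ hb⟩
    rw [hE2] at h'
    exact hab (Finset.mem_singleton.1 h').symm
  have hb₁E₃ : b₁ ∉ e₃ := by
    intro h
    have h' : b₁ ∈ e₃ ∩ (e ∪ f) := Finset.mem_inter.2 ⟨h, Finset.mem_union_right _ hb₁⟩
    rw [hE3] at h'
    exact ha₁b₁ (Finset.mem_singleton.1 h').symm
  have ha₁F₃ : a₁ ∉ f₃ := by
    intro h
    have h' : a₁ ∈ f₃ ∩ (e ∪ f) := Finset.mem_inter.2 ⟨h, Finset.mem_union_left _ ha₁⟩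
    rw [hF3] at h'
    exact ha₁b₁ (Finset.mem_singleton.1 h')
  -- pairs u₂ v₂ and u₃ v₃
  obtain ⟨u₂, v₂, hu₂v₂, hp₂⟩ := Finset.card_eq_two.1 h22
  have hu₂ : u₂ ∈ e₂ ∧ u₂ ∈ f₂ := by
    have h' : u₂ ∈ e₂ ∩ f₂ := by rw [hp₂]; simp
    exact ⟨(Finset.mem_inter.1 h').1, (Finset.mem_inter.1 h').2⟩
  have hv₂ : v₂ ∈ e₂ ∧ v₂ ∈ f₂ := by
    have h' : v₂ ∈ e₂ ∩ f₂ := by rw [hp₂]; simp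
    exact ⟨(Finset.mem_inter.1 h').1, (Finset.mem_inter.1 h').2⟩
  have hu₂b : u₂ ≠ b := fun h => hbE₂ (h ▸ hu₂.1)
  have hv₂b : v₂ ≠ b := fun h => hbE₂ (h ▸ hv₂.1)
  obtain ⟨u₃, v₃, hu₃v₃, hp₃⟩ := Finset.card_eq_two.1 h33
  have hu₃ : u₃ ∈ e₃ ∧ u₃ ∈ f₃ := by
    have h' : u₃ ∈ e₃ ∩ f₃ := by rw [hp₃]; simp
    exact ⟨(Finset.mem_inter.1 h').1, (Finset.mem_inter.1 h').2⟩
  have hv₃ : v₃ ∈ e₃ ∧ v₃ ∈ f₃ := by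
    have h' : v₃ ∈ e₃ ∩ f₃ := by rw [hp₃]; simp
    exact ⟨(Finset.mem_inter.1 h').1, (Finset.mem_inter.1 h').2⟩
  have hu₃b₁ : u₃ ≠ b₁ := fun h => hb₁E₃ (h ▸ hu₃.1)
  have hv₃b₁ : v₃ ≠ b₁ := fun h => hb₁E₃ (h ▸ hv₃.1)
  have hu₃a₁ : u₃ ≠ a₁ := fun h => ha₁F₃ (h ▸ hu₃.2)
  have hv₃a₁ : v₃ ≠ a₁ := fun h => ha₁F₃ (h ▸ hv₃.2)
  -- generic distinctness
  have d_ee₂ : e ≠ e₂ := cap_ne (by omega)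
  have d_ef₂ : e ≠ f₂ := cap_ne (by omega)
  have d_ee₃ : e ≠ e₃ := cap_ne (by omega)
  have d_ef₃ : e ≠ f₃ := cap_ne (by omega)
  have d_fe₂ : f ≠ e₂ := cap_ne (by omega)
  have d_ff₂ : f ≠ f₂ := cap_ne (by omega)
  have d_fe₃ : f ≠ e₃ := cap_ne (by omega)
  have d_ff₃ : f ≠ f₃ := cap_ne (by omega)
  have d_e₂f₂ : e₂ ≠ f₂ := by
    intro h; rw [h, hF2] at hE2; exact hab (Finset.singleton_inj.1 hE2).symm
  have d_e₂f₃ : e₂ ≠ f₃ := by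
    intro h; rw [h, hF3] at hE2; exact hab₁ (Finset.singleton_inj.1 hE2).symm
  have d_f₂e₃ : f₂ ≠ e₃ := by
    intro h; rw [h, hE3] at hF2; exact ha₁b (Finset.singleton_inj.1 hF2)
  have d_e₃f₃ : e₃ ≠ f₃ := by
    intro h; rw [h, hF3] at hE3; exact ha₁b₁ (Finset.singleton_inj.1 hE3).symm
  -- common chain pieces
  have hEF := Finset.card_union_add_card_inter e f
  have hU1 := Finset.card_union_add_card_inter (e ∪ f) e₂
  rw [Finset.inter_comm (e ∪ f) e₂] at hU1
  have hU2 := Finset.card_union_add_card_inter ((e ∪ f) ∪ e₂) f₂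
  rw [Finset.inter_comm ((e ∪ f) ∪ e₂) f₂] at hU2
  have i2 : 3 ≤ (f₂ ∩ ((e ∪ f) ∪ e₂)).card :=
    three_le_inter hu₂v₂ hu₂b hv₂b hu₂.2 (Finset.mem_union_right _ hu₂.1)
      hv₂.2 (Finset.mem_union_right _ hv₂.1) hbF₂
      (Finset.mem_union_left _ (Finset.mem_union_right _ hb))
  by_cases hE : e₃ = e₂
  · -- a₁ = a, f₃ ≠ f₂, 5-config {e, f, e₂, f₂, f₃}
    have h' : ({a} : Finset V) = {a₁} := by rw [← hE2, ← hE3, hE]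
    have haa₁ : a = a₁ := Finset.singleton_inj.1 h'
    have hbb₁ : b ≠ b₁ := fun h => hqne ⟨haa₁, h⟩
    have d_f₃f₂ : f₂ ≠ f₃ := by
      intro h; rw [h, hF3] at hF2; exact hbb₁ (Finset.singleton_inj.1 hF2).symm
    have hU3 := Finset.card_union_add_card_inter (((e ∪ f) ∪ e₂) ∪ f₂) f₃
    rw [Finset.inter_comm (((e ∪ f) ∪ e₂) ∪ f₂) f₃] at hU3
    have i3 : 3 ≤ (f₃ ∩ (((e ∪ f) ∪ e₂) ∪ f₂)).card :=
      three_le_inter hu₃v₃ hu₃b₁ hv₃b₁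
        hu₃.2 (Finset.mem_union_left _ (Finset.mem_union_right _ (hE ▸ hu₃.1)))
        hv₃.2 (Finset.mem_union_left _ (Finset.mem_union_right _ (hE ▸ hv₃.1)))
        hb₁F₃ (Finset.mem_union_left _ (Finset.mem_union_left _
          (Finset.mem_union_right _ hb₁)))
    refine no_cfg h5 (S := {e, f, e₂, f₂, f₃})
      (by simp [Finset.insert_subset_iff, he, hf, he₂, hf₂, hf₃])
      (card5' hef d_ee₂ d_ef₂ d_ef₃ d_fe₂ d_ff₂ d_ff₃ d_e₂f₂ d_e₂f₃ d_f₃f₂) ?_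
    have hbu : ({e, f, e₂, f₂, f₃} : Finset (Finset V)).biUnion id =
        (((e ∪ f) ∪ e₂) ∪ f₂) ∪ f₃ := by
      ext w; simp [Finset.mem_union, or_assoc]
    rw [hbu]
    omega
  · by_cases hF : f₃ = f₂
    · -- b₁ = b, e₃ ≠ e₂, 5-config {e, f, e₂, f₂, e₃}
      have d_e₂e₃ : e₂ ≠ e₃ := fun h => hE h.symm
      have hU3 := Finset.card_union_add_card_inter (((e ∪ f) ∪ e₂) ∪ f₂) e₃
      rw [Finset.inter_comm (((e ∪ f) ∪ e₂) ∪ f₂) e₃] at hU3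
      have i3 : 3 ≤ (e₃ ∩ (((e ∪ f) ∪ e₂) ∪ f₂)).card :=
        three_le_inter hu₃v₃ hu₃a₁ hv₃a₁
          hu₃.1 (Finset.mem_union_right _ (hF ▸ hu₃.2))
          hv₃.1 (Finset.mem_union_right _ (hF ▸ hv₃.2))
          ha₁E₃ (Finset.mem_union_left _ (Finset.mem_union_left _
            (Finset.mem_union_left _ ha₁)))
      refine no_cfg h5 (S := {e, f, e₂, f₂, e₃})
        (by simp [Finset.insert_subset_iff, he, hf, he₂, hf₂, he₃])
        (card5' hef d_ee₂ d_ef₂ d_ee₃ d_fe₂ d_ff₂ d_fe₃ d_e₂f₂ d_e₂e₃ d_f₂e₃) ?_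
      have hbu : ({e, f, e₂, f₂, e₃} : Finset (Finset V)).biUnion id =
          (((e ∪ f) ∪ e₂) ∪ f₂) ∪ e₃ := by
        ext w; simp [Finset.mem_union, or_assoc]
      rw [hbu]
      omega
    · -- 6-config {e, f, e₂, f₂, e₃, f₃}
      have d_e₂e₃ : e₂ ≠ e₃ := fun h => hE h.symm
      have d_f₂f₃ : f₂ ≠ f₃ := fun h => hF h.symm
      have hU3 := Finset.card_union_add_card_inter (((e ∪ f) ∪ e₂) ∪ f₂) e₃
      rw [Finset.inter_comm (((e ∪ f) ∪ e₂) ∪ f₂) e₃] at hU3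
      have hU4 := Finset.card_union_add_card_inter ((((e ∪ f) ∪ e₂) ∪ f₂) ∪ e₃) f₃
      rw [Finset.inter_comm ((((e ∪ f) ∪ e₂) ∪ f₂) ∪ e₃) f₃] at hU4
      have i3 : 1 ≤ (e₃ ∩ (((e ∪ f) ∪ e₂) ∪ f₂)).card :=
        one_le_inter ha₁E₃ (Finset.mem_union_left _ (Finset.mem_union_left _
          (Finset.mem_union_left _ ha₁)))
      have i4 : 3 ≤ (f₃ ∩ ((((e ∪ f) ∪ e₂) ∪ f₂) ∪ e₃)).card :=
        three_le_inter hu₃v₃ hu₃b₁ hv₃b₁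
          hu₃.2 (Finset.mem_union_right _ hu₃.1)
          hv₃.2 (Finset.mem_union_right _ hv₃.1)
          hb₁F₃ (Finset.mem_union_left _ (Finset.mem_union_left _
            (Finset.mem_union_left _ (Finset.mem_union_right _ hb₁))))
      refine no_cfg h6 (S := {e, f, e₂, f₂, e₃, f₃})
        (by simp [Finset.insert_subset_iff, he, hf, he₂, hf₂, he₃, hf₃])
        (card6' hef d_ee₂ d_ef₂ d_ee₃ d_ef₃ d_fe₂ d_ff₂ d_fe₃ d_ff₃ d_e₂f₂ d_e₂e₃
          d_e₂f₃ d_f₂e₃ d_f₂f₃ d_e₃f₃) ?_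
      have hbu : ({e, f, e₂, f₂, e₃, f₃} : Finset (Finset V)).biUnion id =
          ((((e ∪ f) ∪ e₂) ∪ f₂) ∪ e₃) ∪ f₃ := by
        ext w; simp [Finset.mem_union, or_assoc]
      rw [hbu]
      omega

end UBSix

namespace UBSix

variable {V : Type*} [DecidableEq V]

def CrossPairOf (q e f : Finset V) : Prop :=
  ∃ a b, a ∈ e ∧ a ∉ f ∧ b ∈ f ∧ b ∉ e ∧ q = {a, b}

def Covered (G : Finset (Finset V)) (q : Finset V) : Prop := ∃ g ∈ G, q ⊆ g

def GoodPair (G : Finset (Finset V)) (e f q : Finset V) : Prop :=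
  CrossPairOf q e f ∧ ¬Covered G q ∧
    ∀ e' f', e' ∈ G → f' ∈ G → e' ≠ f' → (e' ∩ f').card = 2 → CrossPairOf q e' f' →
      (e' = e ∧ f' = f) ∨ (e' = f ∧ f' = e)

lemma exists_goodPair {r : ℕ} {G : Finset (Finset V)} (hr : 4 ≤ r) (hG : IsRGraph r G)
    (h2 : ConfigFree (r * 2 - 2 * 2 + 1) 2 G) (h3 : ConfigFree (r * 3 - 2 * 3 + 1) 3 G)
    (h4 : ConfigFree (r * 4 - 2 * 4 + 1) 4 G) (h5 : ConfigFree (r * 5 - 2 * 5 + 1) 5 G)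
    (h6 : ConfigFree (r * 6 - 2 * 6 + 2) 6 G)
    {e f : Finset V} (he : e ∈ G) (hf : f ∈ G) (hef : e ≠ f) (hef2 : (e ∩ f).card = 2) :
    ∃ q, GoodPair G e f q := by
  classical
  have hce := hG e he; have hcf := hG f hf
  set C : Finset (Finset V) :=
    ((e \ f) ×ˢ (f \ e)).image (fun ab => ({ab.1, ab.2} : Finset V)) with hC
  have hCmem : ∀ q ∈ C, ∃ a b, a ∈ e ∧ a ∉ f ∧ b ∈ f ∧ b ∉ e ∧ q = {a, b} := by
    intro q hq
    rw [hC] at hq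
    simp only [Finset.mem_image, Finset.mem_product, Finset.mem_sdiff] at hq
    obtain ⟨⟨x, y⟩, ⟨⟨hx1, hx2⟩, hy1, hy2⟩, rfl⟩ := hq
    exact ⟨x, y, hx1, hx2, hy1, hy2, rfl⟩
  have hC4 : 4 ≤ C.card := by
    have hinj : Set.InjOn (fun ab : V × V => ({ab.1, ab.2} : Finset V))
        ↑((e \ f) ×ˢ (f \ e)) := by
      rintro ⟨x, y⟩ hxy ⟨x', y'⟩ hxy' hEq
      simp only [Finset.coe_product, Set.mem_prod, Finset.mem_coe, Finset.mem_sdiff] at hxy hxy'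
      simp only at hEq
      have hx' : x' ∈ ({x, y} : Finset V) := by rw [hEq]; simp
      have hxx : x' = x := by
        rcases Finset.mem_insert.1 hx' with h | h
        · exact h
        · rw [Finset.mem_singleton] at h
          exact absurd (h ▸ hxy'.1.1) hxy.2.2
      have hy'' : y' ∈ ({x, y} : Finset V) := by rw [hEq]; simp
      have hyy : y' = y := by
        rcases Finset.mem_insert.1 hy'' with h | h
        · exact absurd (h ▸ hxy'.2.1) hxy.1.2
        · exact Finset.mem_singleton.1 h
      simp [hxx, hyy]
    have hcard : C.card = (r - 2) * (r - 2) := by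
      rw [hC, Finset.card_image_of_injOn hinj, Finset.card_product]
      have h1 : (e \ f).card = r - 2 := by
        have := Finset.card_inter_add_card_sdiff e f; omega
      have h2' : (f \ e).card = r - 2 := by
        have h'' := Finset.card_inter_add_card_sdiff f e
        have : (f ∩ e).card = 2 := by rw [Finset.inter_comm]; exact hef2
        omega
      rw [h1, h2']
    rw [hcard]
    have h2r : 2 ≤ r - 2 := by omega
    calc 4 = 2 * 2 := rfl
      _ ≤ (r - 2) * (r - 2) := Nat.mul_le_mul h2r h2r
  set Cov := C.filter (Covered G) with hCov
  set Col := C.filter (fun q => ¬Covered G q ∧ ∃ e' f', e' ∈ G ∧ f' ∈ G ∧ e' ≠ f' ∧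
    (e' ∩ f').card = 2 ∧ CrossPairOf q e' f' ∧
    ¬((e' = e ∧ f' = f) ∨ (e' = f ∧ f' = e))) with hCol
  -- every covered cross pair yields a coverer meeting e ∪ f exactly in it
  have hCovStruct : ∀ q ∈ Cov, ∃ g ∈ G, g ∩ (e ∪ f) = q := by
    intro q hq
    obtain ⟨hqC, g, hgG, hqg⟩ := Finset.mem_filter.1 hq
    obtain ⟨a', b', ha', haf', hb', hbe', rfl⟩ := hCmem q hqC
    have hq2 : ({a', b'} : Finset V).card = 2 :=
      Finset.card_pair (fun h => haf' (h ▸ hb'))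
    have hge : g ≠ e := fun h => hbe' ((h ▸ hqg) (by simp))
    have hgf : g ≠ f := fun h => haf' ((h ▸ hqg) (by simp))
    refine ⟨g, hgG, coverer_eq hr hG h3 he hf hgG hef hef2 hge hgf hq2 hqg ?_⟩
    intro z hz
    simp only [Finset.mem_insert, Finset.mem_singleton] at hz
    rcases hz with rfl | rfl
    · exact Finset.mem_union_left _ ha'
    · exact Finset.mem_union_right _ hb'
  -- normalized collision partner
  have hColStruct : ∀ q ∈ Col, ∀ a b : V, a ∈ e → a ∉ f → b ∈ f → b ∉ e → q = {a, b} →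
      ∃ E F, E ∈ G ∧ F ∈ G ∧ (E ∩ F).card = 2 ∧ a ∈ E ∧ a ∉ F ∧ b ∈ F ∧ b ∉ E ∧
        ¬(E = e ∧ F = f) := by
    intro q hq a b ha' haf' hb' hbe' hqe
    obtain ⟨hnc, e', f', he', hf', hef', h2', hcross, hnot⟩ := (Finset.mem_filter.1 hq).2
    obtain ⟨x, y, hxE, hxF, hyF, hyE, hxyq⟩ := hcross
    rw [hqe] at hxyq
    have hxyne : x ≠ y := fun h => hxF (h ▸ hyF)
    have hxab : x = a ∨ x = b := by
      have : x ∈ ({a, b} : Finset V) := by rw [hxyq]; simp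
      simpa using this
    have hyab : y = a ∨ y = b := by
      have : y ∈ ({a, b} : Finset V) := by rw [hxyq]; simp
      simpa using this
    rcases hxab with hxa | hxb
    · have hyb : y = b := by
        rcases hyab with h | h
        · exact absurd (h.trans hxa.symm) hxyne.symm
        · exact h
      exact ⟨e', f', he', hf', h2', hxa ▸ hxE, hxa ▸ hxF, hyb ▸ hyF, hyb ▸ hyE,
        fun hc => hnot (Or.inl hc)⟩
    · have hya : y = a := by
        rcases hyab with h | h
        · exact h
        · exact absurd (h.trans hxb.symm) hxyne.symm
      refine ⟨f', e', hf', he', by rw [Finset.inter_comm]; exact h2',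
        hya ▸ hyF, hya ▸ hyE, hxb ▸ hxE, hxb ▸ hxF, ?_⟩
      rintro ⟨hc1, hc2⟩
      exact hnot (Or.inr ⟨hc2, hc1⟩)
  by_cases hcol : Col.Nonempty
  · -- there is a collision pair q₀
    obtain ⟨q₀, hq₀⟩ := hcol
    have hq₀C : q₀ ∈ C := (Finset.mem_filter.1 hq₀).1
    obtain ⟨a, b, ha, haf, hb, hbe, hq₀eq⟩ := hCmem q₀ hq₀C
    obtain ⟨E₂, F₂, hE₂G, hF₂G, h22, haE₂, haF₂, hbF₂, hbE₂, hne₂⟩ :=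
      hColStruct q₀ hq₀ a b ha haf hb hbe hq₀eq
    obtain ⟨hcapE₂, hcapF₂⟩ := partner_struct hr hG h3 h4 he hf hE₂G hF₂G hef hef2 h22
      ha haf hb hbe haE₂ haF₂ hbF₂ hbE₂ hne₂
    have hCov1 : Cov.card ≤ 1 := by
      by_contra hgt
      obtain ⟨q₁, m₁, q₂, m₂, hne'⟩ := Finset.one_lt_card.1 (show 1 < Cov.card by omega)
      obtain ⟨a₁, b₁, ha₁, ha₁f, hb₁, hb₁e, hq₁eq⟩ := hCmem q₁ (Finset.mem_filter.1 m₁).1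
      obtain ⟨a₂, b₂, ha₂, ha₂f, hb₂, hb₂e, hq₂eq⟩ := hCmem q₂ (Finset.mem_filter.1 m₂).1
      obtain ⟨g₁, hg₁G, hg₁⟩ := hCovStruct q₁ m₁
      obtain ⟨g₂, hg₂G, hg₂⟩ := hCovStruct q₂ m₂
      rw [hq₁eq] at hg₁
      rw [hq₂eq] at hg₂
      have hqne : ({a₁, b₁} : Finset V) ≠ {a₂, b₂} := by
        rw [← hq₁eq, ← hq₂eq]; exact hne'
      exact collision_blocks_two_covered hr hG h6 he hf hE₂G hF₂G hg₁G hg₂G hef hef2 h22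
        hcapE₂ hcapF₂ ha haf hb hbe ha₁ ha₁f hb₁ hb₁e ha₂ ha₂f hb₂ hb₂e hg₁ hg₂ hqne
    have hColSub : ∀ q₁ ∈ Col, q₁ = q₀ := by
      intro q₁ hq₁
      by_contra hne'
      obtain ⟨a₁, b₁, ha₁, ha₁f, hb₁, hb₁e, hq₁eq⟩ := hCmem q₁ (Finset.mem_filter.1 hq₁).1
      obtain ⟨E₃, F₃, hE₃G, hF₃G, h33, ha₁E₃, ha₁F₃, hb₁F₃, hb₁E₃, hne₃⟩ :=
        hColStruct q₁ hq₁ a₁ b₁ ha₁ ha₁f hb₁ hb₁e hq₁eq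
      obtain ⟨hcapE₃, hcapF₃⟩ := partner_struct hr hG h3 h4 he hf hE₃G hF₃G hef hef2 h33
        ha₁ ha₁f hb₁ hb₁e ha₁E₃ ha₁F₃ hb₁F₃ hb₁E₃ hne₃
      have hqne : ¬(a = a₁ ∧ b = b₁) := by
        rintro ⟨rfl, rfl⟩
        exact hne' (hq₁eq.trans hq₀eq.symm)
      exact no_two_collisions hr hG h5 h6 he hf hE₂G hF₂G hE₃G hF₃G hef hef2 h22 h33
        hcapE₂ hcapF₂ hcapE₃ hcapF₃ ha haf hb hbe ha₁ ha₁f hb₁ hb₁e hqne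
    have hCol1 : Col.card ≤ 1 := by
      have : Col ⊆ {q₀} := fun q hq => Finset.mem_singleton.2 (hColSub q hq)
      calc Col.card ≤ ({q₀} : Finset (Finset V)).card := Finset.card_le_card this
        _ = 1 := Finset.card_singleton _
    have hne : (C \ (Cov ∪ Col)).Nonempty := by
      apply Finset.card_pos.1
      have hsub : Cov ∪ Col ⊆ C :=
        Finset.union_subset (Finset.filter_subset _ _) (Finset.filter_subset _ _)
      have hcup : (Cov ∪ Col).card ≤ 2 := by
        have h1 := Finset.card_union_le Cov Col
        omega
      rw [Finset.card_sdiff_of_subset hsub]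
      omega
    obtain ⟨q, hq⟩ := hne
    have hqC : q ∈ C := (Finset.mem_sdiff.1 hq).1
    have hqn : q ∉ Cov ∪ Col := (Finset.mem_sdiff.1 hq).2
    have hqnc : ¬Covered G q := fun hc =>
      hqn (Finset.mem_union_left _ (Finset.mem_filter.2 ⟨hqC, hc⟩))
    obtain ⟨a', b', ha', haf', hb', hbe', hqeq⟩ := hCmem q hqC
    refine ⟨q, ⟨a', b', ha', haf', hb', hbe', hqeq⟩, hqnc, ?_⟩
    intro e' f' he' hf' hef' h2' hcross'
    by_contra hnot
    exact hqn (Finset.mem_union_right _ (Finset.mem_filter.2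
      ⟨hqC, hqnc, e', f', he', hf', hef', h2', hcross', hnot⟩))
  · -- no collision: at most 3 covered cross pairs
    have hColEmpty : Col = ∅ := Finset.not_nonempty_iff_eq_empty.1 hcol
    have hCov3 : Cov.card ≤ 3 := by
      by_contra hgt
      obtain ⟨q₁, m₁, q₂, m₂, q₃, m₃, q₄, m₄, d₁₂, d₁₃, d₁₄, d₂₃, d₂₄, d₃₄⟩ :=
        exists_four (s := Cov) (by omega)
      obtain ⟨a₁, b₁, ha₁, ha₁f, hb₁, hb₁e, hq₁eq⟩ := hCmem q₁ (Finset.mem_filter.1 m₁).1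
      obtain ⟨a₂, b₂, ha₂, ha₂f, hb₂, hb₂e, hq₂eq⟩ := hCmem q₂ (Finset.mem_filter.1 m₂).1
      obtain ⟨a₃, b₃, ha₃, ha₃f, hb₃, hb₃e, hq₃eq⟩ := hCmem q₃ (Finset.mem_filter.1 m₃).1
      obtain ⟨a₄, b₄, ha₄, ha₄f, hb₄, hb₄e, hq₄eq⟩ := hCmem q₄ (Finset.mem_filter.1 m₄).1
      obtain ⟨g₁, hg₁G, hg₁⟩ := hCovStruct q₁ m₁
      obtain ⟨g₂, hg₂G, hg₂⟩ := hCovStruct q₂ m₂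
      obtain ⟨g₃, hg₃G, hg₃⟩ := hCovStruct q₃ m₃
      obtain ⟨g₄, hg₄G, hg₄⟩ := hCovStruct q₄ m₄
      have hce' := hG e he; have hcf' := hG f hf
      have hcg₁ := hG g₁ hg₁G; have hcg₂ := hG g₂ hg₂G
      have hcg₃ := hG g₃ hg₃G; have hcg₄ := hG g₄ hg₄G
      have hee : e ∩ (e ∪ f) = e := Finset.inter_eq_left.2 Finset.subset_union_left
      have hff : f ∩ (e ∪ f) = f := Finset.inter_eq_left.2 Finset.subset_union_right
      have cap_ne : ∀ {X Y : Finset V}, (X ∩ (e ∪ f)).card ≠ (Y ∩ (e ∪ f)).card → X ≠ Y :=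
        fun h hxy => h (by rw [hxy])
      have cE : (e ∩ (e ∪ f)).card = r := by rw [hee]; exact hce'
      have cF : (f ∩ (e ∪ f)).card = r := by rw [hff]; exact hcf'
      have cq : ∀ {g' q' : Finset V}, g' ∩ (e ∪ f) = q' → q' ∈ Cov →
          (g' ∩ (e ∪ f)).card = 2 := by
        intro g' q' hcap hq'
        obtain ⟨a', b', ha', haf', hb', hbe', hq'eq⟩ := hCmem q' (Finset.mem_filter.1 hq').1
        rw [hcap, hq'eq]
        exact Finset.card_pair (fun h => haf' (h ▸ hb'))
      have cG₁ := cq hg₁ m₁; have cG₂ := cq hg₂ m₂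
      have cG₃ := cq hg₃ m₃; have cG₄ := cq hg₄ m₄
      have gne : ∀ {gi gj qi qj : Finset V}, gi ∩ (e ∪ f) = qi → gj ∩ (e ∪ f) = qj →
          qi ≠ qj → gi ≠ gj := by
        intro gi gj qi qj hi hj hij h
        rw [h, hj] at hi
        exact hij hi.symm
      have d_eg₁ : e ≠ g₁ := cap_ne (by omega)
      have d_eg₂ : e ≠ g₂ := cap_ne (by omega)
      have d_eg₃ : e ≠ g₃ := cap_ne (by omega)
      have d_eg₄ : e ≠ g₄ := cap_ne (by omega)
      have d_fg₁ : f ≠ g₁ := cap_ne (by omega)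
      have d_fg₂ : f ≠ g₂ := cap_ne (by omega)
      have d_fg₃ : f ≠ g₃ := cap_ne (by omega)
      have d_fg₄ : f ≠ g₄ := cap_ne (by omega)
      have d12 : g₁ ≠ g₂ := gne hg₁ hg₂ d₁₂
      have d13 : g₁ ≠ g₃ := gne hg₁ hg₃ d₁₃
      have d14 : g₁ ≠ g₄ := gne hg₁ hg₄ d₁₄
      have d23 : g₂ ≠ g₃ := gne hg₂ hg₃ d₂₃
      have d24 : g₂ ≠ g₄ := gne hg₂ hg₄ d₂₄
      have d34 : g₃ ≠ g₄ := gne hg₃ hg₄ d₃₄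
      -- memberships of aᵢ, bᵢ in gᵢ
      have hmem : ∀ {g' q' : Finset V} {a' b' : V}, g' ∩ (e ∪ f) = q' → q' = {a', b'} →
          a' ∈ g' ∧ b' ∈ g' := by
        intro g' q' a' b' hcap hq'eq
        constructor
        · have h' : a' ∈ g' ∩ (e ∪ f) := by rw [hcap, hq'eq]; simp
          exact (Finset.mem_inter.1 h').1
        · have h' : b' ∈ g' ∩ (e ∪ f) := by rw [hcap, hq'eq]; simp
          exact (Finset.mem_inter.1 h').1
      obtain ⟨ha₁g, hb₁g⟩ := hmem hg₁ hq₁eq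
      obtain ⟨ha₂g, hb₂g⟩ := hmem hg₂ hq₂eq
      obtain ⟨ha₃g, hb₃g⟩ := hmem hg₃ hq₃eq
      obtain ⟨ha₄g, hb₄g⟩ := hmem hg₄ hq₄eq
      have hEF := Finset.card_union_add_card_inter e f
      have hU1 := Finset.card_union_add_card_inter (e ∪ f) g₁
      rw [Finset.inter_comm (e ∪ f) g₁] at hU1
      have hU2 := Finset.card_union_add_card_inter ((e ∪ f) ∪ g₁) g₂
      rw [Finset.inter_comm ((e ∪ f) ∪ g₁) g₂] at hU2
      have hU3 := Finset.card_union_add_card_inter (((e ∪ f) ∪ g₁) ∪ g₂) g₃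
      rw [Finset.inter_comm (((e ∪ f) ∪ g₁) ∪ g₂) g₃] at hU3
      have hU4 := Finset.card_union_add_card_inter ((((e ∪ f) ∪ g₁) ∪ g₂) ∪ g₃) g₄
      rw [Finset.inter_comm ((((e ∪ f) ∪ g₁) ∪ g₂) ∪ g₃) g₄] at hU4
      have hne₂' : a₂ ≠ b₂ := fun h => ha₂f (h ▸ hb₂)
      have hne₃' : a₃ ≠ b₃ := fun h => ha₃f (h ▸ hb₃)
      have hne₄' : a₄ ≠ b₄ := fun h => ha₄f (h ▸ hb₄)
      have i2 : 2 ≤ (g₂ ∩ ((e ∪ f) ∪ g₁)).card :=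
        two_le_inter hne₂' ha₂g
          (Finset.mem_union_left _ (Finset.mem_union_left _ ha₂)) hb₂g
          (Finset.mem_union_left _ (Finset.mem_union_right _ hb₂))
      have i3 : 2 ≤ (g₃ ∩ (((e ∪ f) ∪ g₁) ∪ g₂)).card :=
        two_le_inter hne₃' ha₃g
          (Finset.mem_union_left _ (Finset.mem_union_left _ (Finset.mem_union_left _ ha₃)))
          hb₃g
          (Finset.mem_union_left _ (Finset.mem_union_left _ (Finset.mem_union_right _ hb₃)))
      have i4 : 2 ≤ (g₄ ∩ ((((e ∪ f) ∪ g₁) ∪ g₂) ∪ g₃)).card :=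
        two_le_inter hne₄' ha₄g
          (Finset.mem_union_left _ (Finset.mem_union_left _ (Finset.mem_union_left _
            (Finset.mem_union_left _ ha₄))))
          hb₄g
          (Finset.mem_union_left _ (Finset.mem_union_left _ (Finset.mem_union_left _
            (Finset.mem_union_right _ hb₄))))
      refine no_cfg h6 (S := {e, f, g₁, g₂, g₃, g₄})
        (by simp [Finset.insert_subset_iff, he, hf, hg₁G, hg₂G, hg₃G, hg₄G])
        (card6' hef d_eg₁ d_eg₂ d_eg₃ d_eg₄ d_fg₁ d_fg₂ d_fg₃ d_fg₄ d12 d13 d14 d23 d24 d34)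
        ?_
      have hbu : ({e, f, g₁, g₂, g₃, g₄} : Finset (Finset V)).biUnion id =
          ((((e ∪ f) ∪ g₁) ∪ g₂) ∪ g₃) ∪ g₄ := by
        ext w; simp [Finset.mem_union, or_assoc]
      rw [hbu]
      omega
    have hne : (C \ Cov).Nonempty := by
      apply Finset.card_pos.1
      have hsub : Cov ⊆ C := Finset.filter_subset _ _
      rw [Finset.card_sdiff_of_subset hsub]
      omega
    obtain ⟨q, hq⟩ := hne
    have hqC : q ∈ C := (Finset.mem_sdiff.1 hq).1
    have hqn : q ∉ Cov := (Finset.mem_sdiff.1 hq).2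
    have hqnc : ¬Covered G q := fun hc => hqn (Finset.mem_filter.2 ⟨hqC, hc⟩)
    obtain ⟨a', b', ha', haf', hb', hbe', hqeq⟩ := hCmem q hqC
    refine ⟨q, ⟨a', b', ha', haf', hb', hbe', hqeq⟩, hqnc, ?_⟩
    intro e' f' he' hf' hef' h2' hcross'
    by_contra hnot
    have : q ∈ Col := Finset.mem_filter.2
      ⟨hqC, hqnc, e', f', he', hf', hef', h2', hcross', hnot⟩
    rw [hColEmpty] at this
    exact absurd this (Finset.notMem_empty q)

end UBSix

namespace UBSix

variable {V : Type*} [DecidableEq V]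

open scoped Classical in
noncomputable def pick (G : Finset (Finset V)) (p : Finset V) : Finset V :=
  if h : ∃ e' ∈ G, p ⊆ e' then h.choose else ∅

lemma pick_spec {G : Finset (Finset V)} {p : Finset V} (h : ∃ e' ∈ G, p ⊆ e') :
    pick G p ∈ G ∧ p ⊆ pick G p := by
  simp only [pick]
  rw [dif_pos h]
  exact ⟨h.choose_spec.1, h.choose_spec.2⟩

open scoped Classical in
noncomputable def qpick (G : Finset (Finset V)) (e' f' : Finset V) : Finset V :=
  if h : ∃ q, GoodPair G e' f' q then h.choose else ∅

lemma qpick_spec {G : Finset (Finset V)} {e' f' : Finset V} (h : ∃ q, GoodPair G e' f' q) :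
    GoodPair G e' f' (qpick G e' f') := by
  simp only [qpick]
  rw [dif_pos h]
  exact h.choose_spec

end UBSix

/-- Every `𝒢^{(r)}_6`-free `r`-graph on `n` vertices, `r ≥ 4`, has at most
`C(n,2)/C(r,2)` edges. -/
theorem upper_bound_six_high (r n : ℕ) (hr : 4 ≤ r) (hn : 2 ≤ n)
    (G : Finset (Finset (Fin n))) (hG : IsRGraph r G) (hfree : GFree r 6 G) :
    (G.card : ℝ) ≤ (n.choose 2 : ℝ) / (r.choose 2 : ℝ) := by
  classical
  obtain ⟨h6, hl⟩ := hfree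
  have h2 := hl 2 (by norm_num) (by norm_num)
  have h3 := hl 3 (by norm_num) (by norm_num)
  have h4 := hl 4 (by norm_num) (by norm_num)
  have h5 := hl 5 (by norm_num) (by norm_num)
  have key : G.card * r.choose 2 ≤ n.choose 2 := by
    set P : Finset (Finset (Fin n)) := Finset.powersetCard 2 Finset.univ with hP
    have hPcard : P.card = n.choose 2 := by
      rw [hP, Finset.card_powersetCard, Finset.card_univ, Fintype.card_fin]
    have hsum : ∑ q ∈ P, (G.filter (fun e' => q ⊆ e')).card = G.card * r.choose 2 := by
      calc ∑ q ∈ P, (G.filter (fun e' => q ⊆ e')).card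
          = ∑ q ∈ P, ∑ e' ∈ G, if q ⊆ e' then 1 else 0 :=
            Finset.sum_congr rfl fun q _ => Finset.card_filter _ _
        _ = ∑ e' ∈ G, ∑ q ∈ P, if q ⊆ e' then 1 else 0 := Finset.sum_comm
        _ = ∑ e' ∈ G, (P.filter (fun q => q ⊆ e')).card :=
            Finset.sum_congr rfl fun e' _ => (Finset.card_filter _ _).symm
        _ = ∑ e' ∈ G, r.choose 2 := by
            refine Finset.sum_congr rfl fun e' he' => ?_
            have hfe : P.filter (fun q => q ⊆ e') = Finset.powersetCard 2 e' := by
              ext q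
              simp only [hP, Finset.mem_filter, Finset.mem_powersetCard]
              constructor
              · rintro ⟨⟨-, hq2⟩, hqe⟩; exact ⟨hqe, hq2⟩
              · rintro ⟨hqe, hq2⟩; exact ⟨⟨Finset.subset_univ q, hq2⟩, hqe⟩
            rw [hfe, Finset.card_powersetCard, hG e' he']
        _ = G.card * r.choose 2 := by rw [Finset.sum_const, smul_eq_mul]
    -- the excess injection
    have hexcess : ∑ q ∈ P, ((G.filter (fun e' => q ⊆ e')).card - 1)
        ≤ (P.filter (fun q => (G.filter (fun e' => q ⊆ e')).card = 0)).card := by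
      set L : Finset (Finset (Fin n) × Finset (Fin n)) :=
        P.biUnion (fun p => ((G.filter (fun e' => p ⊆ e')).erase (UBSix.pick G p)).image
          (fun f' => (p, f'))) with hL
      have hdisj : ∀ p ∈ P, ∀ p' ∈ P, p ≠ p' →
          Disjoint (((G.filter (fun e' => p ⊆ e')).erase (UBSix.pick G p)).image
            (fun f' => (p, f')))
          (((G.filter (fun e' => p' ⊆ e')).erase (UBSix.pick G p')).image
            (fun f' => (p', f'))) := by
        intro p _ p' _ hne
        simp only [Finset.disjoint_left, Finset.mem_image]
        rintro x ⟨f₁, hf₁, rfl⟩ ⟨f₂, hf₂, heq⟩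
        exact hne (congrArg Prod.fst heq).symm
      have hLcard : L.card = ∑ p ∈ P, ((G.filter (fun e' => p ⊆ e')).card - 1) := by
        rw [hL, Finset.card_biUnion hdisj]
        refine Finset.sum_congr rfl fun p _ => ?_
        rw [Finset.card_image_of_injective _ (fun x y hxy => by simpa using hxy)]
        by_cases hne : (G.filter (fun e' => p ⊆ e')).Nonempty
        · have hex : ∃ e' ∈ G, p ⊆ e' := by
            obtain ⟨x, hx⟩ := hne
            exact ⟨x, (Finset.mem_filter.1 hx).1, (Finset.mem_filter.1 hx).2⟩
          have hps := UBSix.pick_spec hex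
          exact Finset.card_erase_of_mem (Finset.mem_filter.2 ⟨hps.1, hps.2⟩)
        · rw [Finset.not_nonempty_iff_eq_empty.1 hne]; simp
      -- decode membership in L
      have hdecode : ∀ x ∈ L, x.1 ∈ P ∧ x.1.card = 2 ∧ x.2 ∈ G ∧ x.1 ⊆ x.2 ∧
          x.2 ≠ UBSix.pick G x.1 ∧ UBSix.pick G x.1 ∈ G ∧ x.1 ⊆ UBSix.pick G x.1 := by
        intro x hx
        rw [hL] at hx
        obtain ⟨p, hpP, hx'⟩ := Finset.mem_biUnion.1 hx
        obtain ⟨f', hf', heq⟩ := Finset.mem_image.1 hx'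
        obtain ⟨hfne, hfmem⟩ := Finset.mem_erase.1 hf'
        have hfG : f' ∈ G := (Finset.mem_filter.1 hfmem).1
        have hpf : p ⊆ f' := (Finset.mem_filter.1 hfmem).2
        have hex : ∃ e' ∈ G, p ⊆ e' := ⟨f', hfG, hpf⟩
        have hps := UBSix.pick_spec hex
        have hp2 : p.card = 2 := by
          have hpP' := hpP
          rw [hP] at hpP'
          exact (Finset.mem_powersetCard.1 hpP').2
        subst heq
        exact ⟨hpP, hp2, hfG, hpf, hfne, hps.1, hps.2⟩
      -- each x ∈ L gives a link with intersection x.1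
      have hlink : ∀ x ∈ L, UBSix.pick G x.1 ∩ x.2 = x.1 ∧ UBSix.pick G x.1 ≠ x.2 := by
        intro x hx
        obtain ⟨hpP, hp2, hfG, hpf, hfne, hpkG, hppk⟩ := hdecode x hx
        have hnepf : UBSix.pick G x.1 ≠ x.2 := fun h => hfne h.symm
        have hsubp : x.1 ⊆ UBSix.pick G x.1 ∩ x.2 := Finset.subset_inter hppk hpf
        have hle : (UBSix.pick G x.1 ∩ x.2).card ≤ 2 :=
          UBSix.inter_card_le_two hr hG h2 hpkG hfG hnepf
        exact ⟨(Finset.eq_of_subset_of_card_le hsubp (by rw [hp2]; exact hle)).symm, hnepf⟩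
      have hGoodx : ∀ x ∈ L, UBSix.GoodPair G (UBSix.pick G x.1) x.2
          (UBSix.qpick G (UBSix.pick G x.1) x.2) := by
        intro x hx
        obtain ⟨hpP, hp2, hfG, hpf, hfne, hpkG, hppk⟩ := hdecode x hx
        obtain ⟨hcap, hnepf⟩ := hlink x hx
        have hcard2 : (UBSix.pick G x.1 ∩ x.2).card = 2 := by rw [hcap]; exact hp2
        exact UBSix.qpick_spec
          (UBSix.exists_goodPair hr hG h2 h3 h4 h5 h6 hpkG hfG hnepf hcard2)
      -- the injection
      have hmaps : ∀ x ∈ L, UBSix.qpick G (UBSix.pick G x.1) x.2 ∈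
          P.filter (fun q => (G.filter (fun e' => q ⊆ e')).card = 0) := by
        intro x hx
        obtain ⟨hcross, hnc, -⟩ := hGoodx x hx
        obtain ⟨a, b, haE, haF, hbF, hbE, hqeq⟩ := hcross
        have hab : a ≠ b := fun h => haF (h ▸ hbF)
        refine Finset.mem_filter.2 ⟨?_, ?_⟩
        · rw [hP]
          exact Finset.mem_powersetCard.2 ⟨Finset.subset_univ _, by
            rw [hqeq]; exact Finset.card_pair hab⟩
        · rw [Finset.card_eq_zero]
          refine Finset.filter_eq_empty_iff.2 fun g hg hsub => ?_
          exact hnc ⟨g, hg, hsub⟩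
      have hinj : Set.InjOn (fun x : Finset (Fin n) × Finset (Fin n) =>
          UBSix.qpick G (UBSix.pick G x.1) x.2) ↑L := by
        intro x hx y hy hxy
        simp only [Finset.mem_coe] at hx hy
        simp only at hxy
        obtain ⟨hgx1, hgx2, hgx3⟩ := hGoodx x hx
        obtain ⟨hgy1, hgy2, hgy3⟩ := hGoodx y hy
        obtain ⟨hcapx, hnex⟩ := hlink x hx
        obtain ⟨hcapy, hney⟩ := hlink y hy
        obtain ⟨-, -, hyG, -, -, hpkyG, -⟩ := hdecode y hy
        have hcard2y : (UBSix.pick G y.1 ∩ y.2).card = 2 := by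
          rw [hcapy]; exact (hdecode y hy).2.1
        have hcrossy : UBSix.CrossPairOf (UBSix.qpick G (UBSix.pick G x.1) x.2)
            (UBSix.pick G y.1) y.2 := by rw [hxy]; exact hgy1
        have hcases := hgx3 (UBSix.pick G y.1) y.2 hpkyG hyG hney hcard2y hcrossy
        rcases hcases with ⟨hpk, hf⟩ | ⟨hpk, hf⟩
        · have h1 : y.1 = x.1 := by
            rw [← hcapy, hpk, hf, hcapx]
          exact Prod.ext h1.symm hf.symm
        · exfalso
          have h1 : y.1 = x.1 := by
            rw [← hcapy, hpk, hf, Finset.inter_comm, hcapx]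
          have h2 : UBSix.pick G x.1 = x.2 := by rw [← h1]; exact hpk
          exact hnex h2
      have hLle : L.card ≤
          (P.filter (fun q => (G.filter (fun e' => q ⊆ e')).card = 0)).card :=
        Finset.card_le_card_of_injOn _ hmaps hinj
      omega
    have hsplit : ∑ q ∈ P, (G.filter (fun e' => q ⊆ e')).card
        = (P.filter (fun q => 0 < (G.filter (fun e' => q ⊆ e')).card)).card
          + ∑ q ∈ P, ((G.filter (fun e' => q ⊆ e')).card - 1) := by
      have hterm : ∀ q ∈ P, (G.filter (fun e' => q ⊆ e')).card
          = (if 0 < (G.filter (fun e' => q ⊆ e')).card then 1 else 0)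
            + ((G.filter (fun e' => q ⊆ e')).card - 1) := by
        intro q _
        by_cases hd : 0 < (G.filter (fun e' => q ⊆ e')).card
        · rw [if_pos hd]; omega
        · rw [if_neg hd]; omega
      rw [Finset.sum_congr rfl hterm, Finset.sum_add_distrib]
      congr 1
      exact (Finset.card_filter _ _).symm
    have hfilters : (P.filter (fun q => 0 < (G.filter (fun e' => q ⊆ e')).card)).card
        + (P.filter (fun q => (G.filter (fun e' => q ⊆ e')).card = 0)).card = P.card := by
      have hmain := Finset.card_filter_add_card_filter_not
        (s := P) (p := fun q => 0 < (G.filter (fun e' => q ⊆ e')).card)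
      have hcongr : P.filter (fun q => ¬ 0 < (G.filter (fun e' => q ⊆ e')).card)
          = P.filter (fun q => (G.filter (fun e' => q ⊆ e')).card = 0) := by
        apply Finset.filter_congr
        intro q _
        simp [Nat.not_lt, Nat.le_zero]
      rw [hcongr] at hmain
      exact hmain
    omega
  have hrpos : 0 < r.choose 2 := Nat.choose_pos (by omega)
  have hrpos' : (0 : ℝ) < (r.choose 2 : ℝ) := by exact_mod_cast hrpos
  rw [le_div_iff₀ hrpos']
  exact_mod_cast key
end
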